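/- arXiv:2105.04284 — 16 statements merged into one kernel-verified Lean document; each statement's English description precedes it below -/
import Mathlib

section
/- Let m > 1 be an integer and let F be the finite field with 2^(2m) elements. Then the number of elements x in F satisfying (x+1)^(2^m - 1) + x^(2^m - 1) = 0 is exactly 2^m - 2. (In other words, the DDT entry Δ_f(1,0) of the power map f(x) = x^(2^m - 1) on F equals 2^m - 2.) -/
open Polynomial Finset

theorem ddt_one_zero (m : ℕ) (hm : 1 < m) (F : Type*) [Field F] [Fintype F] [CharP F 2]
    (hF : Fintype.card F = 2 ^ (2 * m)) :
    Nat.card {x : F // (x + 1) ^ (2 ^ m - 1) + x ^ (2 ^ m - 1) = 0} = 2 ^ m - 2 := by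
  classical
  set d : ℕ := 2 ^ m - 1 with hd_def
  have h2m : 2 ≤ 2 ^ m := by
    calc 2 = 2 ^ 1 := (pow_one 2).symm
    _ ≤ 2 ^ m := Nat.pow_le_pow_right (by norm_num) hm.le
  have hd_pos : 0 < d := by omega
  -- arithmetic: card F - 1 = (2^m - 1) * (2^m + 1)
  have hN : Fintype.card F - 1 = d * (2 ^ m + 1) := by
    have h : 2 ^ (2 * m) = 2 ^ m * 2 ^ m := by rw [two_mul, pow_add]
    rw [hF, h, hd_def]
    have h1 : 1 ≤ 2 ^ m := by omega
    have h2 : 1 ≤ 2 ^ m * 2 ^ m := by nlinarith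
    zify [h1, h2]
    ring
  -- a primitive d-th root of unity in F
  obtain ⟨g, hg⟩ := IsCyclic.exists_generator (α := Fˣ)
  have hog : orderOf g = Fintype.card F - 1 := by
    rw [orderOf_eq_card_of_forall_mem_zpowers hg, Nat.card_eq_fintype_card,
      Fintype.card_units]
  have hζord : orderOf (g ^ (2 ^ m + 1)) = d := by
    rw [orderOf_pow, hog, hN, Nat.gcd_eq_right ⟨d, mul_comm _ _⟩,
      Nat.mul_div_cancel _ (by positivity)]
  have hζ : IsPrimitiveRoot ((g ^ (2 ^ m + 1) : Fˣ) : F) d := by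
    rw [IsPrimitiveRoot.coe_units_iff]
    exact hζord ▸ IsPrimitiveRoot.orderOf _
  -- basic char-2 facts
  have hchar : ∀ a : F, a + a = 0 := CharTwo.add_self_eq_zero
  have hmem : ∀ y : F, y ∈ nthRootsFinset d (1 : F) ↔ y ^ d = 1 :=
    fun y => Polynomial.mem_nthRootsFinset hd_pos (1 : F)
  have key : ∀ x : F, (x + 1) ^ d + x ^ d = 0 → x ≠ 0 ∧ x + 1 ≠ 0 := by
    intro x hx
    constructor
    · rintro rfl
      rw [zero_add, one_pow, zero_pow hd_pos.ne'] at hx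
      simp at hx
    · intro h
      have hx1 : x = 1 := by linear_combination h - hchar 1
      rw [hx1, show (1 : F) + 1 = 0 from hchar 1, zero_pow hd_pos.ne', one_pow,
        zero_add] at hx
      exact one_ne_zero hx
  let e : {x : F // (x + 1) ^ d + x ^ d = 0} ≃
      {y : F // y ∈ (nthRootsFinset d (1 : F)).erase 1} :=
    { toFun := fun ⟨x, hx⟩ => ⟨(x + 1) * x⁻¹, by
        obtain ⟨hx0, hx1⟩ := key x hx
        have heq : (x + 1) ^ d = x ^ d := by linear_combination hx - hchar (x ^ d)
        rw [Finset.mem_erase, hmem]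
        constructor
        · intro h
          have hx' : x + 1 = x := by
            calc x + 1 = (x + 1) * x⁻¹ * x := by field_simp
            _ = x := by rw [h, one_mul]
          exact one_ne_zero (α := F) (by linear_combination hx' )
        · rw [mul_pow, heq, inv_pow, mul_inv_cancel₀ (pow_ne_zero _ hx0)]⟩
      invFun := fun ⟨y, hy⟩ => ⟨(y + 1)⁻¹, by
        rw [Finset.mem_erase, hmem] at hy
        obtain ⟨hy1, hyd⟩ := hy
        have hy0 : y + 1 ≠ 0 := fun h => hy1 (by linear_combination h - hchar 1)
        have h1 : (y + 1)⁻¹ + 1 = y * (y + 1)⁻¹ := by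
          field_simp
          linear_combination hchar 1
        rw [h1, mul_pow, inv_pow, hyd, one_mul, hchar]⟩
      left_inv := by
        rintro ⟨x, hx⟩
        obtain ⟨hx0, hx1⟩ := key x hx
        ext
        show ((x + 1) * x⁻¹ + 1)⁻¹ = x
        have h2 : (x + 1) * x⁻¹ + 1 = x⁻¹ := by
          field_simp
          linear_combination hchar x
        rw [h2, inv_inv]
      right_inv := by
        rintro ⟨y, hy⟩
        rw [Finset.mem_erase, hmem] at hy
        obtain ⟨hy1, hyd⟩ := hy
        have hy0 : y + 1 ≠ 0 := fun h => hy1 (by linear_combination h - hchar 1)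
        ext
        show ((y + 1)⁻¹ + 1) * ((y + 1)⁻¹)⁻¹ = y
        rw [inv_inv]
        field_simp
        linear_combination hchar 1 }
  rw [Nat.card_congr e, Nat.card_eq_fintype_card, Fintype.card_coe,
    Finset.card_erase_of_mem (by rw [hmem]; exact one_pow d),
    hζ.card_nthRootsFinset]
  omega
end

section
/- Let m > 1 be an integer, let F be the finite field with 2^(2m) elements, and let b ∈ F with b ≠ 0 and b ≠ 1. Then the number of elements x in F satisfying (x+1)^(2^m - 1) + x^(2^m - 1) = b is at most 2. (That is, the power map f(x) = x^(2^m - 1) on F is locally-APN: Δ_f(1,b) ≤ 2 for all b outside the prime subfield F_2.) -/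
open Polynomial

theorem locally_apn (m : ℕ) (hm : 1 < m) (F : Type*) [Field F] [Fintype F] [CharP F 2]
    (hF : Fintype.card F = 2 ^ (2 * m)) (b : F) (hb0 : b ≠ 0) (hb1 : b ≠ 1) :
    Nat.card {x : F // (x + 1) ^ (2 ^ m - 1) + x ^ (2 ^ m - 1) = b} ≤ 2 := by
  classical
  set q : ℕ := 2 ^ m with hq
  have hq1 : 1 ≤ q := Nat.one_le_two_pow
  have hq2 : 2 ≤ q := by
    calc 2 = 2 ^ 1 := (pow_one 2).symm
    _ ≤ 2 ^ m := Nat.pow_le_pow_right (by norm_num) hm.le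
  have h2 : (2 : F) = 0 := CharTwo.two_eq_zero
  -- the quartic polynomial
  set P : F[X] := C (b ^ q * b ^ 2) * X ^ 4 + C (b ^ q * (b + 1) ^ 2 + (b ^ q + 1) * b) * X ^ 2
      + C ((b ^ q + 1) * (b + 1) + 1) * X with hP
  have hcoeff4 : P.coeff 4 = b ^ q * b ^ 2 := by
    simp only [hP, coeff_add, coeff_C_mul, coeff_X_pow, coeff_X]
    norm_num
  have hPne : P ≠ 0 := fun h => by
    rw [h, coeff_zero] at hcoeff4
    exact (mul_ne_zero (pow_ne_zero _ hb0) (pow_ne_zero _ hb0)) hcoeff4.symm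
  have hPdeg : P.natDegree ≤ 4 := by
    apply natDegree_add_le_of_degree_le
    · apply natDegree_add_le_of_degree_le <;>
        · apply (natDegree_C_mul_le _ _).trans
          simp
    · apply (natDegree_C_mul_le _ _).trans
      simp
  -- 0 and 1 are roots of P
  have hroot0 : P.eval 0 = 0 := by simp [hP]
  have hroot1 : P.eval 1 = 0 := by
    simp only [hP, eval_add, eval_mul, eval_C, eval_pow, eval_X, one_pow, mul_one]
    linear_combination (b ^ (q + 2) + 2 * b ^ (q + 1) + b ^ q + b + 1) * h2
  -- every solution is a root of P distinct from 0 and 1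
  have key : ∀ x : F, (x + 1) ^ (q - 1) + x ^ (q - 1) = b →
      x ≠ 0 ∧ x ≠ 1 ∧ P.eval x = 0 := by
    intro x heq
    have hx0 : x ≠ 0 := by
      rintro rfl
      rw [zero_add, one_pow, zero_pow (by omega), add_zero] at heq
      exact hb1 heq.symm
    have hx1 : x ≠ 1 := by
      rintro rfl
      have : (1 : F) + 1 = 0 := by linear_combination h2
      rw [this, one_pow, zero_pow (by omega), zero_add] at heq
      exact hb1 heq.symm
    refine ⟨hx0, hx1, ?_⟩
    set A : F := x ^ (q - 1) with hA
    set B : F := (x + 1) ^ (q - 1) with hB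
    have hAx : A * x = x ^ q := by
      rw [hA, ← pow_succ, Nat.sub_add_cancel hq1]
    have hBx : B * (x + 1) = x ^ q + 1 := by
      rw [hB, ← pow_succ, Nat.sub_add_cancel hq1, hq, add_pow_char_pow x 1 2 m, one_pow]
    -- x^q = b x^2 + b x + x
    have hfrob : x ^ q = b * x ^ 2 + b * x + x := by
      linear_combination (x * (x + 1)) * heq + x * hBx + (x + 1) * hAx +
        (x ^ q - x * (x + 1) * B - x * (x + 1) * A + x * x ^ q) * h2
    have hcard : (x ^ q) ^ q = x := by
      have hqq : q * q = 2 ^ (2 * m) := by rw [hq, ← pow_add, two_mul]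
      rw [← pow_mul, hqq, ← hF]
      exact FiniteField.pow_card x
    have H : x = b ^ q * (b * x ^ 2 + b * x + x) ^ 2 + b ^ q * (b * x ^ 2 + b * x + x)
        + (b * x ^ 2 + b * x + x) := by
      have e1 : (b * x ^ 2 + b * x + x) ^ q
          = b ^ q * (x ^ q) ^ 2 + b ^ q * x ^ q + x ^ q := by
        rw [hq, add_pow_char_pow (b * x ^ 2 + b * x) x 2 m,
          add_pow_char_pow (b * x ^ 2) (b * x) 2 m, mul_pow, mul_pow, ← pow_mul, ← pow_mul,
          mul_comm 2 (2 ^ m), pow_mul]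
      calc x = (x ^ q) ^ q := hcard.symm
        _ = (b * x ^ 2 + b * x + x) ^ q := by rw [hfrob]
        _ = b ^ q * (x ^ q) ^ 2 + b ^ q * x ^ q + x ^ q := e1
        _ = _ := by rw [hfrob]
    simp only [hP, eval_add, eval_mul, eval_C, eval_pow, eval_X]
    linear_combination (-1 : F) * H + (x - b ^ (q + 1) * (b + 1) * x ^ 3) * h2
  -- counting
  set T : Finset F := P.roots.toFinset with hT
  have hTcard : T.card ≤ 4 := le_trans (Multiset.toFinset_card_le _) (P.card_roots'.trans hPdeg)
  have h0T : (0 : F) ∈ T := by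
    rw [hT, Multiset.mem_toFinset, mem_roots hPne]; exact hroot0
  have h1T : (1 : F) ∈ T := by
    rw [hT, Multiset.mem_toFinset, mem_roots hPne]; exact hroot1
  have hsub : ({0, 1} : Finset F) ⊆ T := by
    intro y hy
    rcases Finset.mem_insert.mp hy with rfl | hy
    · exact h0T
    · rw [Finset.mem_singleton.mp hy]; exact h1T
  have h01 : ((0 : F) ≠ 1) := fun h => one_ne_zero h.symm
  have hsdiff : (T \ {0, 1}).card ≤ 2 := by
    rw [Finset.card_sdiff_of_subset hsub]
    have : ({0, 1} : Finset F).card = 2 := by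
      rw [Finset.card_insert_of_notMem (by simp), Finset.card_singleton]
    omega
  have hss : {x : F | (x + 1) ^ (q - 1) + x ^ (q - 1) = b} ⊆ ↑(T \ ({0, 1} : Finset F)) := by
    intro x hx
    obtain ⟨hx0, hx1, hroot⟩ := key x hx
    simp only [Finset.coe_sdiff, Set.mem_diff, Finset.coe_insert, Finset.mem_coe,
      Finset.coe_singleton, Set.mem_insert_iff, Set.mem_singleton_iff]
    constructor
    · rw [hT, Multiset.mem_toFinset, mem_roots hPne]; exact hroot
    · rintro (rfl | rfl) <;> [exact hx0 rfl; exact hx1 rfl]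
  calc Nat.card {x : F // (x + 1) ^ (2 ^ m - 1) + x ^ (2 ^ m - 1) = b}
      = Set.ncard {x : F | (x + 1) ^ (q - 1) + x ^ (q - 1) = b} := rfl
    _ ≤ Set.ncard (↑(T \ ({0, 1} : Finset F)) : Set F) :=
        Set.ncard_le_ncard hss (Finset.finite_toSet _)
    _ = (T \ ({0, 1} : Finset F)).card := Set.ncard_coe_finset _
    _ ≤ 2 := hsdiff
end

section
/- Let m > 1 be an even integer and let F be the finite field with 2^(2m) elements. Then the number of elements x in F satisfying (x+1)^(2^m - 1) + x^(2^m - 1) = 1 is exactly 2. (That is, Δ_f(1,1) = 2 for the power map f(x) = x^(2^m - 1) when m is even.) -/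
theorem ddt_one_one_even (m : ℕ) (hm : 1 < m) (hme : Even m) (F : Type*) [Field F] [Fintype F]
    [CharP F 2] (hF : Fintype.card F = 2 ^ (2 * m)) :
    Nat.card {x : F // (x + 1) ^ (2 ^ m - 1) + x ^ (2 ^ m - 1) = 1} = 2 := by
  have h2 : (2 : F) = 0 := by
    exact_mod_cast CharP.cast_eq_zero F 2
  set q := 2 ^ m with hqdef
  have hq1 : 1 < q := Nat.one_lt_two_pow (by omega)
  have hq : q - 1 + 1 = q := by omega
  have key : ∀ x : F, (x + 1) ^ (q - 1) + x ^ (q - 1) = 1 ↔ x = 0 ∨ x = 1 := by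
    intro x
    constructor
    · intro h
      haveI : Fact (Nat.Prime 2) := ⟨by norm_num⟩
      have frob : (x + 1) ^ q = x ^ q + 1 := by
        have := add_pow_char_pow x (1 : F) 2 m
        simpa using this
      have p1 : (x + 1) ^ q = (x + 1) ^ (q - 1) * (x + 1) := by rw [← pow_succ, hq]
      have p2 : x ^ q = x ^ (q - 1) * x := by rw [← pow_succ, hq]
      have e1 : (x + 1) ^ q * x + x ^ q * (x + 1) = x * (x + 1) := by
        rw [p1, p2]; linear_combination x * (x + 1) * h
      have e2 : x ^ q = x ^ 2 := by
        linear_combination e1 - x * frob - x ^ (q + 1) * h2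
      have hcard : x ^ (q * q) = x := by
        have : q * q = Fintype.card F := by
          rw [hF, hqdef, ← pow_add]; ring_nf
        rw [this]; exact FiniteField.pow_card x
      have e4 : x ^ 4 = x := by
        have : x ^ (q * q) = x ^ 4 := by
          calc x ^ (q * q) = (x ^ q) ^ q := (pow_mul x q q)
            _ = (x ^ 2) ^ q := by rw [e2]
            _ = (x ^ q) ^ 2 := by rw [← pow_mul, mul_comm, pow_mul]
            _ = (x ^ 2) ^ 2 := by rw [e2]
            _ = x ^ 4 := by ring
        rw [← this, hcard]
      have pow4 : ∀ j : ℕ, x ^ (4 ^ j) = x := by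
        intro j
        induction j with
        | zero => simp
        | succ n ih => rw [pow_succ, pow_mul, ih, e4]
      obtain ⟨k, hk⟩ := hme
      have hq4 : q = 4 ^ k := by
        rw [hqdef, hk, show k + k = 2 * k by ring, pow_mul]; norm_num
      have hx2 : x ^ 2 = x := by rw [← e2, hq4, pow4]
      have : x * (x - 1) = 0 := by linear_combination hx2
      rcases mul_eq_zero.mp this with h | h
      · exact Or.inl h
      · exact Or.inr (sub_eq_zero.mp h)
    · intro h
      have hqne : q - 1 ≠ 0 := by omega
      rcases h with rfl | rfl
      · simp [zero_pow hqne]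
      · have : (1 : F) + 1 = 0 := by linear_combination h2
        rw [this, zero_pow hqne, one_pow]; ring
  have hset : {x : F | (x + 1) ^ (q - 1) + x ^ (q - 1) = 1} = ({0, 1} : Set F) := by
    ext x
    simp only [Set.mem_setOf_eq, Set.mem_insert_iff, Set.mem_singleton_iff]
    exact key x
  calc Nat.card {x : F // (x + 1) ^ (q - 1) + x ^ (q - 1) = 1}
      = Nat.card ({0, 1} : Set F) := Nat.card_congr (Equiv.setCongr hset)
    _ = 2 := by
        rw [Nat.card_coe_set_eq, Set.ncard_pair (zero_ne_one (α := F))]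
end

section
/- Let m > 1 be an odd integer and let F be the finite field with 2^(2m) elements. Then the number of elements x in F satisfying (x+1)^(2^m - 1) + x^(2^m - 1) = 1 is exactly 4. (That is, Δ_f(1,1) = 4 for the power map f(x) = x^(2^m - 1) when m is odd.) -/
lemma four_pow_mod_three (n : ℕ) : ∃ t, 4 ^ n = 3 * t + 1 := by
  induction n with
  | zero => exact ⟨0, rfl⟩
  | succ n ih =>
    obtain ⟨t, ht⟩ := ih
    exact ⟨4 * t + 1, by rw [pow_succ]; omega⟩

theorem ddt_one_one_odd (m : ℕ) (hm : 1 < m) (hmo : Odd m) (F : Type*) [Field F] [Fintype F]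
    [CharP F 2] (hF : Fintype.card F = 2 ^ (2 * m)) :
    Nat.card {x : F // (x + 1) ^ (2 ^ m - 1) + x ^ (2 ^ m - 1) = 1} = 4 := by
  classical
  have h2 : (2 : F) = 0 := CharTwo.two_eq_zero
  -- basic numeric facts
  have hqpos : 0 < 2 ^ m := Nat.pow_pos (by norm_num)
  have hd1 : 2 ^ m - 1 + 1 = 2 ^ m := Nat.succ_pred_eq_of_pos hqpos
  have hdne : 2 ^ m - 1 ≠ 0 := by
    have : 2 ≤ 2 ^ m := by
      calc 2 = 2 ^ 1 := (pow_one 2).symm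
      _ ≤ 2 ^ m := Nat.pow_le_pow_right (by norm_num) (le_of_lt hm)
    omega
  -- 2^m - 1 = 3k + 1 for some k (m odd)
  obtain ⟨j, hj⟩ := hmo
  obtain ⟨t, ht⟩ := four_pow_mod_three j
  have hk : 2 ^ m - 1 = 3 * (2 * t) + 1 := by
    have h4 : 2 ^ m = 2 * 4 ^ j := by
      rw [hj, pow_succ, pow_mul]; ring
    omega
  -- get an element ω of order 3
  have h3dvd : (3 : ℕ) ∣ Fintype.card Fˣ := by
    rw [Fintype.card_units, hF]
    have h4 : 2 ^ (2 * m) = 4 ^ m := by rw [pow_mul]; norm_num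
    obtain ⟨s, hs⟩ := four_pow_mod_three m
    rw [h4, hs]
    omega
  haveI : Fact (Nat.Prime 3) := ⟨by norm_num⟩
  obtain ⟨g, hg⟩ := exists_prime_orderOf_dvd_card (G := Fˣ) 3 h3dvd
  set ω : F := ((g : Fˣ) : F) with hωdef
  have hω3 : ω ^ 3 = 1 := by
    have := pow_orderOf_eq_one g
    rw [hg] at this
    have : ((g ^ 3 : Fˣ) : F) = ((1 : Fˣ) : F) := by rw [this]
    simpa using this
  have hωne1 : ω ≠ 1 := by
    intro h
    have : g = 1 := Units.ext h
    rw [this] at hg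
    simp at hg
  have hω0 : ω ≠ 0 := by
    intro h
    rw [h] at hω3
    simp at hω3
  have hωp1 : ω + 1 ≠ 0 := by
    intro h
    apply hωne1
    linear_combination h - h2
  have hω : ω ^ 2 + ω + 1 = 0 := by
    have h0 : (ω + 1) * (ω ^ 2 + ω + 1) = 0 := by
      linear_combination hω3 + (ω ^ 2 + ω + 1) * h2
    rcases mul_eq_zero.mp h0 with h | h
    · exact absurd h hωp1
    · exact h
  have hsq : ω + 1 = ω ^ 2 := by linear_combination -hω + (ω + 1) * h2
  -- powers of ω
  have hωd : ω ^ (2 ^ m - 1) = ω := by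
    rw [hk, pow_succ, pow_mul, hω3, one_pow, one_mul]
  have hω2d : (ω ^ 2) ^ (2 ^ m - 1) = ω ^ 2 := by
    rw [← pow_mul]
    have he : 2 * (2 ^ m - 1) = 3 * (2 * (2 * t)) + 2 := by omega
    rw [he, pow_add, pow_mul, hω3, one_pow, one_mul]
  -- the solution set
  have hset : {x : F | (x + 1) ^ (2 ^ m - 1) + x ^ (2 ^ m - 1) = 1}
      = {0, 1, ω, ω + 1} := by
    ext x
    simp only [Set.mem_setOf_eq, Set.mem_insert_iff, Set.mem_singleton_iff]
    constructor
    · intro hx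
      by_cases hx0 : x = 0
      · exact Or.inl hx0
      by_cases hx1 : x = 1
      · exact Or.inr (Or.inl hx1)
      have hxp1 : x + 1 ≠ 0 := by
        intro h
        apply hx1
        linear_combination h - h2
      -- derive x^(2^m - 1) = x
      have hfr : (x + 1) ^ 2 ^ m = x ^ 2 ^ m + 1 := by
        have := add_pow_char_pow (p := 2) (n := m) (x := x) (y := (1 : F))
        simpa using this
      have e1 : (x + 1) ^ (2 ^ m - 1) * (x + 1) = (x + 1) ^ 2 ^ m := by
        rw [← pow_succ, hd1]
      have e2 : x ^ (2 ^ m - 1) * x = x ^ 2 ^ m := by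
        rw [← pow_succ, hd1]
      have hA : x ^ (2 ^ m - 1) = x := by
        linear_combination (-1 : F) * e1 - hfr + e2 + (x + 1) * hx
          - x * x ^ (2 ^ m - 1) * h2
      -- so x^(2^m) = x^2
      have hX : x ^ 2 ^ m = x ^ 2 := by
        rw [← e2, hA]; ring
      -- and x^4 = x
      have hc : x ^ 2 ^ (2 * m) = x := by
        have := FiniteField.pow_card x
        rwa [hF] at this
      have h4 : x ^ 4 = x := by
        have h2m : 2 ^ (2 * m) = 2 ^ m * 2 ^ m := by rw [two_mul, pow_add]
        calc x ^ 4 = (x ^ 2) ^ 2 := by ring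
          _ = (x ^ 2 ^ m) ^ 2 := by rw [hX]
          _ = (x ^ 2) ^ 2 ^ m := by rw [← pow_mul, ← pow_mul, mul_comm]
          _ = (x ^ 2 ^ m) ^ 2 ^ m := by rw [hX]
          _ = x ^ 2 ^ (2 * m) := by rw [← pow_mul, h2m]
          _ = x := hc
      have h3 : x ^ 3 = 1 := by
        apply mul_left_cancel₀ hx0
        calc x * x ^ 3 = x ^ 4 := by ring
          _ = x := h4
          _ = x * 1 := by ring
      have hquad : x ^ 2 + x + 1 = 0 := by
        have h0 : (x + 1) * (x ^ 2 + x + 1) = 0 := by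
          linear_combination h3 + (x ^ 2 + x + 1) * h2
        rcases mul_eq_zero.mp h0 with h | h
        · exact absurd h hxp1
        · exact h
      have h0 : (x + ω) * (x + (ω + 1)) = 0 := by
        linear_combination hquad + hω + (ω * x - 1) * h2
      rcases mul_eq_zero.mp h0 with h | h
      · exact Or.inr (Or.inr (Or.inl (by linear_combination h - ω * h2)))
      · exact Or.inr (Or.inr (Or.inr (by linear_combination h - (ω + 1) * h2)))
    · intro hx
      rcases hx with h | h | h | h <;> subst h
      · simp [zero_pow hdne]
      · have h11 : (1 : F) + 1 = 0 := by linear_combination h2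
        rw [h11, zero_pow hdne, one_pow]
        ring
      · rw [hsq, hω2d, hωd, ← hsq]
        linear_combination ω * h2
      · have h11 : ω + 1 + 1 = ω := by linear_combination h2
        rw [h11, hωd, hsq, hω2d, ← hsq]
        linear_combination ω * h2
  -- distinctness
  have hne01 : (0 : F) ≠ 1 := zero_ne_one
  have hne0ω : (0 : F) ≠ ω := fun h => hω0 h.symm
  have hne0ω1 : (0 : F) ≠ ω + 1 := fun h => hωp1 h.symm
  have hne1ω : (1 : F) ≠ ω := fun h => hωne1 h.symm
  have hne1ω1 : (1 : F) ≠ ω + 1 := by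
    intro h
    apply hω0
    linear_combination -h
  have hneωω1 : ω ≠ ω + 1 := by
    intro h
    have : (1 : F) = 0 := by linear_combination -h
    exact one_ne_zero this
  -- count
  calc Nat.card {x : F // (x + 1) ^ (2 ^ m - 1) + x ^ (2 ^ m - 1) = 1}
      = ({x : F | (x + 1) ^ (2 ^ m - 1) + x ^ (2 ^ m - 1) = 1} : Set F).ncard :=
        Nat.card_coe_set_eq _
    _ = ({0, 1, ω, ω + 1} : Set F).ncard := by rw [hset]
    _ = 4 := by
        rw [Set.ncard_insert_of_notMem (by simp [hne01, hne0ω, hne0ω1]),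
          Set.ncard_insert_of_notMem (by simp [hne1ω, hne1ω1]),
          Set.ncard_pair hneωω1]
end

section
/- Let m > 1 be an integer, let F be the finite field with 2^(2m) elements, and let b ∈ F with b ≠ 0 and b ≠ 1. Then the number of elements x ∈ F with x ≠ 0 and x ≠ 1 satisfying x^(2^m) + b·x^2 + (b+1)·x = 0 is at most 2. -/
theorem linearized_at_most_two (m : ℕ) (hm : 1 < m) (F : Type*) [Field F] [Fintype F]
    [CharP F 2] (hF : Fintype.card F = 2 ^ (2 * m)) (b : F) (hb0 : b ≠ 0) (hb1 : b ≠ 1) :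
    Nat.card {x : F // x ≠ 0 ∧ x ≠ 1 ∧ x ^ (2 ^ m) + b * x ^ 2 + (b + 1) * x = 0} ≤ 2 := by
  classical
  haveI := Fact.mk Nat.prime_two
  have h2c : (2 : F) = 0 := by
    have := CharP.cast_eq_zero F 2
    exact_mod_cast this
  set c := b ^ (2 ^ m) with hc
  have hd : (b + 1) ^ (2 ^ m) = c + 1 := by
    rw [add_pow_char_pow, one_pow]
  set p : Polynomial F :=
      Polynomial.C (c * b ^ 2) * Polynomial.X ^ 4 +
        Polynomial.C (c * (b + 1) ^ 2 + (c + 1) * b) * Polynomial.X ^ 2 +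
        Polynomial.C ((c + 1) * (b + 1) + 1) * Polynomial.X with hp
  have hcoeff4 : p.coeff 4 = c * b ^ 2 := by
    rw [hp]
    simp only [Polynomial.coeff_add, Polynomial.coeff_C_mul, Polynomial.coeff_X_pow,
      Polynomial.coeff_X]
    norm_num
  have hcb : c * b ^ 2 ≠ 0 := mul_ne_zero (pow_ne_zero _ hb0) (pow_ne_zero _ hb0)
  have hpne : p ≠ 0 := by
    intro h0
    apply hcb
    rw [← hcoeff4, h0, Polynomial.coeff_zero]
  have hdeg : p.natDegree ≤ 4 := by
    apply le_trans (Polynomial.natDegree_add_le _ _)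
    simp only [max_le_iff]
    constructor
    · apply le_trans (Polynomial.natDegree_add_le _ _)
      simp only [max_le_iff]
      constructor
      · exact le_trans (Polynomial.natDegree_C_mul_le _ _) (by simp)
      · exact le_trans (Polynomial.natDegree_C_mul_le _ _) (by simp)
    · exact le_trans (Polynomial.natDegree_C_mul_le _ _) (by simp [Polynomial.natDegree_X_le])
  -- every element of the set is a root of p
  have hroot : ∀ x : F, x ^ (2 ^ m) + b * x ^ 2 + (b + 1) * x = 0 → p.IsRoot x := by
    intro x hx
    have e1 : x ^ (2 ^ m) = b * x ^ 2 + (b + 1) * x := by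
      linear_combination hx - (b * x ^ 2 + (b + 1) * x) * h2c
    have e2 : (x ^ (2 ^ m)) ^ (2 ^ m) = x := by
      rw [← pow_mul, ← pow_add, ← two_mul, ← hF]
      exact FiniteField.pow_card x
    have sq : (b * x ^ 2 + (b + 1) * x) ^ 2 = b ^ 2 * x ^ 4 + (b + 1) ^ 2 * x ^ 2 := by
      linear_combination (b * (b+1) * x^3) * h2c
    have key : c * (b ^ 2 * x ^ 4 + (b + 1) ^ 2 * x ^ 2) + (c + 1) * (b * x ^ 2 + (b + 1) * x)
        = x := by
      calc c * (b ^ 2 * x ^ 4 + (b + 1) ^ 2 * x ^ 2) + (c + 1) * (b * x ^ 2 + (b + 1) * x)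
          = b ^ (2 ^ m) * (b * x ^ 2 + (b + 1) * x) ^ 2 +
              (b + 1) ^ (2 ^ m) * (b * x ^ 2 + (b + 1) * x) := by rw [sq, hd, ← hc]
        _ = b ^ (2 ^ m) * (x ^ (2 ^ m)) ^ 2 + (b + 1) ^ (2 ^ m) * x ^ (2 ^ m) := by rw [e1]
        _ = (b * x ^ 2 + (b + 1) * x) ^ (2 ^ m) := by
            conv_rhs => rw [add_pow_char_pow, mul_pow, mul_pow]
            rw [pow_right_comm x 2 (2 ^ m)]
        _ = (x ^ (2 ^ m)) ^ (2 ^ m) := by rw [e1]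
        _ = x := e2
    show p.eval x = 0
    simp only [hp, Polynomial.eval_add, Polynomial.eval_mul, Polynomial.eval_C,
      Polynomial.eval_pow, Polynomial.eval_X]
    linear_combination key + x * h2c
  have h0root : (0 : F) ∈ p.roots.toFinset := by
    rw [Multiset.mem_toFinset, Polynomial.mem_roots hpne]
    simp [hp, Polynomial.IsRoot]
  have h1root : (1 : F) ∈ p.roots.toFinset := by
    rw [Multiset.mem_toFinset, Polynomial.mem_roots hpne]
    show p.eval 1 = 0
    simp only [hp, Polynomial.eval_add, Polynomial.eval_mul, Polynomial.eval_C,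
      Polynomial.eval_pow, Polynomial.eval_X, one_pow, mul_one]
    linear_combination (c * b ^ 2 + 2 * c * b + c + b + 1) * h2c
  have hTcard : p.roots.toFinset.card ≤ 4 := by
    calc p.roots.toFinset.card ≤ Multiset.card p.roots := p.roots.toFinset_card_le
      _ ≤ p.natDegree := p.card_roots'
      _ ≤ 4 := hdeg
  set S : Finset F := (p.roots.toFinset.erase 0).erase 1 with hS
  have hScard : S.card ≤ 2 := by
    have h1' : (1 : F) ∈ p.roots.toFinset.erase 0 :=
      Finset.mem_erase.mpr ⟨one_ne_zero, h1root⟩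
    rw [hS, Finset.card_erase_of_mem h1', Finset.card_erase_of_mem h0root]
    omega
  have : Nat.card {x : F // x ≠ 0 ∧ x ≠ 1 ∧ x ^ (2 ^ m) + b * x ^ 2 + (b + 1) * x = 0}
      ≤ S.card := by
    rw [Nat.card_eq_fintype_card, Fintype.card_subtype]
    apply Finset.card_le_card
    intro x hx
    simp only [Finset.mem_filter] at hx
    obtain ⟨-, hx0, hx1, hxe⟩ := hx
    refine Finset.mem_erase.mpr ⟨hx1, Finset.mem_erase.mpr ⟨hx0, ?_⟩⟩
    rw [Multiset.mem_toFinset, Polynomial.mem_roots hpne]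
    exact hroot x hxe
  omega
end

section
/- Let m > 1 be an odd integer and let F be the finite field with 2^(2m) elements, and let f(x) = x^(2^m - 1) be the corresponding power map on F. Then the boomerang uniformity of f equals 4; that is, the maximum over all nonzero a, b ∈ F of the number of pairs (x,y) ∈ F × F satisfying f(x) + f(y) = b and f(x+a) + f(y+a) = b is exactly 4. -/
set_option linter.unusedSectionVars false

namespace Boomerang

variable {F : Type*} [Field F] [CharP F 2]

lemma two0 : (2 : F) = 0 := CharTwo.two_eq_zero

lemma addself (x : F) : x + x = 0 := CharTwo.add_self_eq_zero x

/-- The solution set for outer difference 1. -/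
def Sol (q : ℕ) (b : F) : Set (F × F) :=
  {p | p.1 ^ (q - 1) + p.2 ^ (q - 1) = b ∧ (p.1 + 1) ^ (q - 1) + (p.2 + 1) ^ (q - 1) = b}

lemma mem_sol_iff {q : ℕ} {b : F} {x y : F} :
    (x, y) ∈ Sol q b ↔ x ^ (q - 1) + y ^ (q - 1) = b ∧
      (x + 1) ^ (q - 1) + (y + 1) ^ (q - 1) = b := Iff.rfl

lemma pqm {q : ℕ} (hq : 2 ≤ q) (x : F) : x ^ (q - 1) * x = x ^ q := by
  rw [← pow_succ, Nat.sub_add_cancel (by omega)]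

lemma zpow0 {q : ℕ} (hq : 2 ≤ q) : (0 : F) ^ (q - 1) = 0 := zero_pow (by omega)

lemma mem_swap {q : ℕ} {b x y : F} (h : (x, y) ∈ Sol q b) : (y, x) ∈ Sol q b := by
  obtain ⟨e1, e2⟩ := h
  exact ⟨by rw [add_comm]; exact e1, by rw [add_comm]; exact e2⟩

lemma mem_shift {q : ℕ} {b x y : F} (h : (x, y) ∈ Sol q b) : (x + 1, y + 1) ∈ Sol q b := by
  obtain ⟨e1, e2⟩ := h
  refine ⟨e2, ?_⟩
  have hx : x + 1 + 1 = x := by linear_combination (two0 (F := F))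
  have hy : y + 1 + 1 = y := by linear_combination (two0 (F := F))
  rw [hx, hy]
  exact e1

/-- Pure algebra: recovering the five-term relation. -/
lemma alg_five {b bq e eq t x xq : F} (htdef : t = xq + x)
    (h3q : eq * t = bq * (xq * (xq + 1))) (hm : e * t = b * (x * (x + 1)))
    (ht : t ≠ 0) : bq * b * (t + 1) = b * eq + bq * e := by
  have key : (bq * b * (t + 1)) * t = (b * eq + bq * e) * t := by
    subst htdef
    linear_combination b * h3q + bq * hm +
      (-(e*xq*bq) + b*xq*bq - b*xq*eq + b*xq^2*bq - x*e*bq + x*b*bq - x*b*eq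
        + x*b*xq*bq + x^2*b*bq) * (two0 (F := F))
  exact mul_right_cancel₀ ht key

/-- Pure algebra: in Case II (norm of `b+1` equal to one) an interior solution forces
`y ∈ {0,1}`. -/
lemma alg_caseII {u uq e eq t x y : F} (hu : uq * u = 1) (hu1 : u + 1 ≠ 0)
    (heq : eq = u * e + u + 1)
    (hfive : (uq + 1) * (u + 1) * (t + 1) = (u + 1) * eq + (uq + 1) * e)
    (hm : e * t = (u + 1) * (x * (x + 1))) (he : e = x + y) : y = 0 ∨ y + 1 = 0 := by
  have X : (u + 1) * (u + 1) * (t + 1) = u * (u + 1) * eq + (u + 1) * e := by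
    linear_combination u * hfive + (e - 1 - u - t - t * u) * hu
  have Y0 : (u + 1) * ((u + 1) * (t + 1)) = (u + 1) * (u * (u * e + u + 1) + e) := by
    linear_combination X + u * (u + 1) * heq
  have Y : (u + 1) * (t + 1) = u * (u * e + u + 1) + e := mul_left_cancel₀ hu1 Y0
  have Z0 : (u + 1) * t = (u + 1) * ((u + 1) * (e + 1)) := by
    linear_combination Y + (-1 - u - e * u) * (two0 (F := F))
  have Z : t = (u + 1) * (e + 1) := mul_left_cancel₀ hu1 Z0
  have W0 : (u + 1) * (e * (e + 1)) = (u + 1) * (x * (x + 1)) := by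
    linear_combination hm - e * Z
  have W : e * (e + 1) = x * (x + 1) := mul_left_cancel₀ hu1 W0
  have Yy : y * (y + 1) = 0 := by
    linear_combination W + (-1 - e - y - x) * he + (-(x * y)) * (two0 (F := F))
  exact mul_eq_zero.mp Yy

/-- Pure algebra: uniqueness of the interior solution in Case I. -/
lemma alg_unique {b bq e eq t t1 x x1 : F} (hb : b ≠ 0) (hbq : bq ≠ 0)
    (hfive : bq * b * (t + 1) = b * eq + bq * e)
    (hfive1 : bq * b * (t1 + 1) = b * eq + bq * e)
    (hm : e * t = b * (x * (x + 1))) (hm1 : e * t1 = b * (x1 * (x1 + 1))) :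
    x1 = x ∨ x1 = x + 1 := by
  have ht' : t = t1 :=
    mul_left_cancel₀ (mul_ne_zero hbq hb) (by linear_combination hfive - hfive1)
  have hx : b * (x * (x + 1)) = b * (x1 * (x1 + 1)) := by rw [← hm, ← hm1, ht']
  have hx' : x * (x + 1) = x1 * (x1 + 1) := mul_left_cancel₀ hb hx
  have hz : (x + x1) * ((x + x1) + 1) = 0 := by
    linear_combination hx' + (x * x1 + x1 ^ 2 + x1) * (two0 (F := F))
  rcases mul_eq_zero.mp hz with h | h
  · left; linear_combination h - x * (two0 (F := F))
  · right; linear_combination h - (x + 1) * (two0 (F := F))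

section Interior

variable {q : ℕ} {b x y : F}

lemma interior_core (hq : 2 ≤ q) (hfrob : ∀ u v : F, (u + v) ^ q = u ^ q + v ^ q)
    (hb : b ≠ 0) (hx0 : x ≠ 0) (hx1 : x + 1 ≠ 0) (hy0 : y ≠ 0) (hy1 : y + 1 ≠ 0)
    (h : (x, y) ∈ Sol q b) :
    (x + y) ^ q = (b + 1) * (x + y) + b ∧ (x + y) * (x ^ q + x) = b * (x * (x + 1)) ∧
      x ^ q + x ≠ 0 ∧ x + y ≠ 0 := by
  obtain ⟨e1, e2⟩ := h
  simp only at e1 e2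
  have h1 : x ^ q * y + x * y ^ q = b * (x * y) := by
    calc x ^ q * y + x * y ^ q = (x ^ (q - 1) + y ^ (q - 1)) * (x * y) := by
          rw [← pqm hq x, ← pqm hq y]; ring
      _ = b * (x * y) := by rw [e1]
  have fx : (x + 1 : F) ^ q = x ^ q + 1 := by rw [hfrob x 1, one_pow]
  have fy : (y + 1 : F) ^ q = y ^ q + 1 := by rw [hfrob y 1, one_pow]
  have h2 : (x ^ q + 1) * (y + 1) + (x + 1) * (y ^ q + 1) = b * ((x + 1) * (y + 1)) := by
    calc (x ^ q + 1) * (y + 1) + (x + 1) * (y ^ q + 1)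
        = ((x + 1) ^ (q - 1) + (y + 1) ^ (q - 1)) * ((x + 1) * (y + 1)) := by
          rw [← fx, ← fy, ← pqm hq (x + 1), ← pqm hq (y + 1)]; ring
      _ = b * ((x + 1) * (y + 1)) := by rw [e2]
  have ht : (x ^ q + x) + (y ^ q + y) = b * (x + y) + b := by
    linear_combination h2 - h1 - (two0 (F := F))
  have he_ne : x + y ≠ 0 := by
    intro h0
    have hyx : y = x := by linear_combination h0 - x * (two0 (F := F))
    rw [hyx] at h1
    have hz : b * (x * x) = 0 := by linear_combination (x * x ^ q) * (two0 (F := F)) - h1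
    rcases mul_eq_zero.mp hz with h' | h'
    · exact hb h'
    · exact hx0 (by rcases mul_eq_zero.mp h' with h'' | h'' <;> exact h'')
  have heq : (x + y) ^ q = (b + 1) * (x + y) + b := by
    rw [hfrob x y]; linear_combination ht - (x + y) * (two0 (F := F))
  have hmain : (x + y) * (x ^ q + x) = b * (x * (x + 1)) := by
    have hq2 : x ^ q + y ^ q = (b + 1) * (x + y) + b := by rw [← hfrob x y]; exact heq
    linear_combination x * hq2 - h1 + (y * x ^ q + x * y + x ^ 2) * (two0 (F := F))
  have ht_ne : x ^ q + x ≠ 0 := by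
    intro h0
    rw [h0, mul_zero] at hmain
    exact (mul_ne_zero hb (mul_ne_zero hx0 hx1)) hmain.symm
  exact ⟨heq, hmain, ht_ne, he_ne⟩

lemma interior_five (hq : 2 ≤ q) (hfrob : ∀ u v : F, (u + v) ^ q = u ^ q + v ^ q)
    (hcard : ∀ z : F, z ^ (q * q) = z)
    (hb : b ≠ 0) (hx0 : x ≠ 0) (hx1 : x + 1 ≠ 0) (hy0 : y ≠ 0) (hy1 : y + 1 ≠ 0)
    (h : (x, y) ∈ Sol q b) :
    b ^ q * b * ((x ^ q + x) + 1) = b * (x + y) ^ q + b ^ q * (x + y) := by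
  obtain ⟨heq, hmain, htne, hene⟩ := interior_core hq hfrob hb hx0 hx1 hy0 hy1 h
  have fx : (x + 1 : F) ^ q = x ^ q + 1 := by rw [hfrob x 1, one_pow]
  have l2 : (x ^ q + x) ^ q = x ^ q + x := by
    rw [hfrob (x ^ q) x, ← pow_mul, hcard x]; ring
  have h3q : (x + y) ^ q * (x ^ q + x) = b ^ q * (x ^ q * (x ^ q + 1)) := by
    calc (x + y) ^ q * (x ^ q + x) = (x + y) ^ q * (x ^ q + x) ^ q := by rw [l2]
      _ = ((x + y) * (x ^ q + x)) ^ q := (mul_pow _ _ _).symm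
      _ = (b * (x * (x + 1))) ^ q := by rw [hmain]
      _ = b ^ q * (x ^ q * (x ^ q + 1)) := by rw [mul_pow, mul_pow, fx]
  exact alg_five rfl h3q hmain htne

lemma no_interior (hq : 2 ≤ q) (hfrob : ∀ u v : F, (u + v) ^ q = u ^ q + v ^ q)
    (hcard : ∀ z : F, z ^ (q * q) = z)
    (hb : b ≠ 0) (hx0 : x ≠ 0) (hx1 : x + 1 ≠ 0) (hy0 : y ≠ 0) (hy1 : y + 1 ≠ 0)
    (h : (x, y) ∈ Sol q b) (hII : (b + 1) ^ q * (b + 1) = 1) : False := by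
  obtain ⟨heq, hmain, htne, hene⟩ := interior_core hq hfrob hb hx0 hx1 hy0 hy1 h
  have hfive := interior_five hq hfrob hcard hb hx0 hx1 hy0 hy1 h
  rw [hfrob b 1, one_pow] at hII
  have hu1 : (b + 1) + 1 ≠ 0 := fun h0 => hb (by linear_combination h0 - (two0 (F := F)))
  have heqU : (x + y) ^ q = (b + 1) * (x + y) + (b + 1) + 1 := by
    linear_combination heq - (two0 (F := F))
  have hfiveU : ((b ^ q + 1) + 1) * ((b + 1) + 1) * ((x ^ q + x) + 1)
      = ((b + 1) + 1) * (x + y) ^ q + ((b ^ q + 1) + 1) * (x + y) := by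
    linear_combination hfive +
      ((b ^ q + b + 2) * ((x ^ q + x) + 1) - (x + y) ^ q - (x + y)) * (two0 (F := F))
  have hmU : (x + y) * (x ^ q + x) = ((b + 1) + 1) * (x * (x + 1)) := by
    linear_combination hmain - (x * (x + 1)) * (two0 (F := F))
  rcases alg_caseII hII hu1 heqU hfiveU hmU rfl with h' | h'
  · exact hy0 h'
  · exact hy1 h'

lemma interior_pin (hq : 2 ≤ q) (hfrob : ∀ u v : F, (u + v) ^ q = u ^ q + v ^ q)
    (hcard : ∀ z : F, z ^ (q * q) = z)
    (hb : b ≠ 0) (hI : ¬ (b + 1) ^ q * (b + 1) = 1)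
    (hx0 : x ≠ 0) (hx1 : x + 1 ≠ 0) (hy0 : y ≠ 0) (hy1 : y + 1 ≠ 0)
    (h : (x, y) ∈ Sol q b)
    {x1 y1 : F}
    (hx10 : x1 ≠ 0) (hx11 : x1 + 1 ≠ 0) (hy10 : y1 ≠ 0) (hy11 : y1 + 1 ≠ 0)
    (h1 : (x1, y1) ∈ Sol q b) :
    (x, y) = (x1, y1) ∨ (x, y) = (x1 + 1, y1 + 1) := by
  obtain ⟨heq, hmain, htne, hene⟩ := interior_core hq hfrob hb hx0 hx1 hy0 hy1 h
  obtain ⟨heq1, hmain1, htne1, hene1⟩ := interior_core hq hfrob hb hx10 hx11 hy10 hy11 h1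
  have hfive := interior_five hq hfrob hcard hb hx0 hx1 hy0 hy1 h
  have hfive1 := interior_five hq hfrob hcard hb hx10 hx11 hy10 hy11 h1
  have hd : ((x + y) + (x1 + y1)) ^ q = (b + 1) * ((x + y) + (x1 + y1)) := by
    rw [hfrob]
    linear_combination heq + heq1 + b * (two0 (F := F))
  have hd0 : (x + y) + (x1 + y1) = 0 := by
    by_contra hdne
    apply hI
    have c2 : (((x + y) + (x1 + y1)) ^ q) ^ q = (x + y) + (x1 + y1) := by
      rw [← pow_mul]; exact hcard _
    rw [hd, mul_pow, hd] at c2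
    have : ((b + 1) ^ q * (b + 1)) * ((x + y) + (x1 + y1))
        = 1 * ((x + y) + (x1 + y1)) := by rw [one_mul]; linear_combination c2
    exact mul_right_cancel₀ hdne this
  have he1 : x1 + y1 = x + y := by linear_combination hd0 - (x + y) * (two0 (F := F))
  rw [he1] at hfive1 hmain1
  have hbq : b ^ q ≠ 0 := pow_ne_zero q hb
  rcases alg_unique hb hbq hfive hfive1 hmain hmain1 with hxx | hxx
  · left
    have hyy : y1 = y := by linear_combination he1 - hxx
    rw [hxx, hyy]
  · right
    have hx' : x = x1 + 1 := by linear_combination (-1 : F) * hxx - (two0 (F := F))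
    have hy' : y = y1 + 1 := by linear_combination hxx - he1
    rw [hx', hy']

end Interior
section Pin

variable {q : ℕ} {b : F}

lemma pin0 (hq : 2 ≤ q) (hfrob : ∀ u v : F, (u + v) ^ q = u ^ q + v ^ q)
    (hb : b ≠ 0) {y : F} (h : ((0 : F), y) ∈ Sol q b) : y = b := by
  obtain ⟨e1, e2⟩ := h
  simp only [zpow0 hq, zero_add] at e1 e2
  have hy0 : y ≠ 0 := by intro h0; rw [h0, zpow0 hq] at e1; exact hb e1.symm
  by_cases hy1 : y = 1
  · rw [hy1, one_pow] at e1; rw [hy1, ← e1]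
  · rw [one_pow] at e2
    have e2' : (y + 1) ^ (q - 1) = b + 1 := by linear_combination e2 - (two0 (F := F))
    have eq1 : y ^ q = b * y := by rw [← pqm hq y, e1]
    have eq2 : (y + 1) ^ q = (b + 1) * (y + 1) := by rw [← pqm hq (y + 1), e2']
    have eq2' : y ^ q + 1 = (b + 1) * (y + 1) := by
      rw [hfrob y 1, one_pow] at eq2; exact eq2
    linear_combination eq1 - eq2' - b * (two0 (F := F))

lemma pin1 (hq : 2 ≤ q) (hfrob : ∀ u v : F, (u + v) ^ q = u ^ q + v ^ q)
    (hb : b ≠ 0) {y : F} (h : ((1 : F), y) ∈ Sol q b) : y = b + 1 := by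
  have h' := mem_shift h
  have h11 : (1 : F) + 1 = 0 := addself 1
  rw [h11] at h'
  have := pin0 hq hfrob hb h'
  linear_combination this - (two0 (F := F))

lemma pinr0 (hq : 2 ≤ q) (hfrob : ∀ u v : F, (u + v) ^ q = u ^ q + v ^ q)
    (hb : b ≠ 0) {x : F} (h : (x, (0 : F)) ∈ Sol q b) : x = b :=
  pin0 hq hfrob hb (mem_swap h)

lemma pinr1 (hq : 2 ≤ q) (hfrob : ∀ u v : F, (u + v) ^ q = u ^ q + v ^ q)
    (hb : b ≠ 0) {x : F} (h : (x, (1 : F)) ∈ Sol q b) : x = b + 1 :=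
  pin1 hq hfrob hb (mem_swap h)

/-- If `b ∉ {0,1}` and `b^(q-1) = b` then `(b+1)^(q+1) = 1`. -/
lemma bexc (hq : 2 ≤ q) (hcard : ∀ z : F, z ^ (q * q) = z) (h3 : 3 ∣ q + 1)
    (hb1 : b + 1 ≠ 0) (hbq : b ^ (q - 1) = b) : (b + 1) ^ q * (b + 1) = 1 := by
  have hbq2 : b ^ q = b * b := by rw [← pqm hq b, hbq]
  have e1 : (b ^ q) ^ q = b := by rw [← pow_mul]; exact hcard b
  rw [hbq2, mul_pow, hbq2] at e1
  have hb4 : b ^ 4 = b := by calc b ^ 4 = (b * b) * (b * b) := by ring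
                                _ = b := e1
  have hcube : (b + 1) ^ 3 = 1 := by
    refine mul_left_cancel₀ hb1 ?_
    have h4 : (b + 1) ^ 4 = b + 1 := by
      linear_combination hb4 + (2 * b ^ 3 + 3 * b ^ 2 + 2 * b) * (two0 (F := F))
    calc (b + 1) * (b + 1) ^ 3 = (b + 1) ^ 4 := by ring
      _ = b + 1 := h4
      _ = (b + 1) * 1 := (mul_one _).symm
  obtain ⟨j, hj⟩ := h3
  calc (b + 1) ^ q * (b + 1) = (b + 1) ^ (q + 1) := by rw [← pow_succ]
    _ = ((b + 1) ^ 3) ^ j := by rw [← pow_mul, ← hj]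
    _ = 1 := by rw [hcube, one_pow]

end Pin

section Cards

lemma ncard_le4 (p1 p2 p3 p4 : F × F) : ({p1, p2, p3, p4} : Set (F × F)).ncard ≤ 4 := by
  have h1 := Set.ncard_insert_le p1 ({p2, p3, p4} : Set (F × F))
  have h2 := Set.ncard_insert_le p2 ({p3, p4} : Set (F × F))
  have h3 := Set.ncard_insert_le p3 ({p4} : Set (F × F))
  have h4 : ({p4} : Set (F × F)).ncard = 1 := Set.ncard_singleton p4
  omega

lemma card_le4 [Fintype F] {s : Set (F × F)} (p1 p2 p3 p4 : F × F)
    (hsub : s ⊆ {p1, p2, p3, p4}) : Nat.card s ≤ 4 := by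
  rw [Nat.card_coe_set_eq]
  exact le_trans (Set.ncard_le_ncard hsub (Set.toFinite _)) (ncard_le4 p1 p2 p3 p4)

end Cards
section Main

variable [Fintype F] {q : ℕ} {b : F}

lemma card_sol_le (hq : 2 ≤ q) (hfrob : ∀ u v : F, (u + v) ^ q = u ^ q + v ^ q)
    (hcard : ∀ z : F, z ^ (q * q) = z) (h3 : 3 ∣ q + 1) (hb : b ≠ 0) :
    Nat.card (Sol q b) ≤ 4 := by
  classical
  have h11 : (1 : F) + 1 = 0 := addself 1
  have hbb : b + 1 + 1 = b := by linear_combination (two0 (F := F))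
  by_cases hint : ∃ p ∈ Sol q b, p.1 ≠ 0 ∧ p.1 + 1 ≠ 0 ∧ p.2 ≠ 0 ∧ p.2 + 1 ≠ 0
  · obtain ⟨⟨x1, y1⟩, h1, hx10, hx11, hy10, hy11⟩ := hint
    simp only at hx10 hx11 hy10 hy11
    have hI : ¬((b + 1) ^ q * (b + 1) = 1) := fun hII =>
      no_interior hq hfrob hcard hb hx10 hx11 hy10 hy11 h1 hII
    by_cases hb1 : b + 1 = 0
    · -- here b = 1
      have hb1' : b = 1 := by linear_combination hb1 - (two0 (F := F))
      apply card_le4 ((0 : F), b) (1, b + 1) (x1, y1) (x1 + 1, y1 + 1)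
      rintro ⟨px, py⟩ hp
      simp only [Set.mem_insert_iff, Set.mem_singleton_iff, Prod.mk.injEq]
      by_cases h10 : px = 0
      · rw [h10] at hp
        exact Or.inl ⟨h10, pin0 hq hfrob hb hp⟩
      by_cases h11' : px + 1 = 0
      · have hpx : px = 1 := by linear_combination h11' - (two0 (F := F))
        rw [hpx] at hp
        exact Or.inr (Or.inl ⟨hpx, pin1 hq hfrob hb hp⟩)
      by_cases h20 : py = 0
      · rw [h20] at hp
        have hpx : px = b := pinr0 hq hfrob hb hp
        exact Or.inr (Or.inl ⟨by rw [hpx, hb1'], by rw [h20, hb1]⟩)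
      by_cases h21 : py + 1 = 0
      · have hpy : py = 1 := by linear_combination h21 - (two0 (F := F))
        rw [hpy] at hp
        have hpx : px = b + 1 := pinr1 hq hfrob hb hp
        exact Or.inl ⟨by rw [hpx, hb1], by rw [hpy, hb1']⟩
      · rcases interior_pin hq hfrob hcard hb hI h10 h11' h20 h21 hp
          hx10 hx11 hy10 hy11 h1 with he | he
        · injection he with a1 a2
          exact Or.inr (Or.inr (Or.inl ⟨a1, a2⟩))
        · injection he with a1 a2
          exact Or.inr (Or.inr (Or.inr ⟨a1, a2⟩))
    · -- b ≠ 1 : no boundary solutions at all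
      apply card_le4 (x1, y1) (x1 + 1, y1 + 1) (x1, y1) (x1, y1)
      rintro ⟨px, py⟩ hp
      simp only [Set.mem_insert_iff, Set.mem_singleton_iff, Prod.mk.injEq]
      by_cases h10 : px = 0
      · exfalso
        rw [h10] at hp
        have hpy : py = b := pin0 hq hfrob hb hp
        rw [hpy] at hp
        have e1 := hp.1
        simp only [zpow0 hq, zero_add] at e1
        exact hI (bexc hq hcard h3 hb1 e1)
      by_cases h11' : px + 1 = 0
      · exfalso
        have hpx : px = 1 := by linear_combination h11' - (two0 (F := F))
        rw [hpx] at hp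
        have hpy : py = b + 1 := pin1 hq hfrob hb hp
        rw [hpy] at hp
        have e2 := hp.2
        simp only [h11, hbb, zpow0 hq, zero_add] at e2
        exact hI (bexc hq hcard h3 hb1 e2)
      by_cases h20 : py = 0
      · exfalso
        rw [h20] at hp
        have hpx : px = b := pinr0 hq hfrob hb hp
        rw [hpx] at hp
        have e1 := hp.1
        simp only [zpow0 hq, add_zero] at e1
        exact hI (bexc hq hcard h3 hb1 e1)
      by_cases h21 : py + 1 = 0
      · exfalso
        have hpy : py = 1 := by linear_combination h21 - (two0 (F := F))
        rw [hpy] at hp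
        have hpx : px = b + 1 := pinr1 hq hfrob hb hp
        rw [hpx] at hp
        have e2 := hp.2
        simp only [h11, hbb, zpow0 hq, add_zero] at e2
        exact hI (bexc hq hcard h3 hb1 e2)
      · rcases interior_pin hq hfrob hcard hb hI h10 h11' h20 h21 hp
          hx10 hx11 hy10 hy11 h1 with he | he
        · injection he with a1 a2
          exact Or.inl ⟨a1, a2⟩
        · injection he with a1 a2
          exact Or.inr (Or.inl ⟨a1, a2⟩)
  · push_neg at hint
    apply card_le4 ((0 : F), b) (1, b + 1) (b, 0) (b + 1, 1)
    rintro ⟨px, py⟩ hp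
    simp only [Set.mem_insert_iff, Set.mem_singleton_iff, Prod.mk.injEq]
    by_cases h10 : px = 0
    · rw [h10] at hp
      exact Or.inl ⟨h10, pin0 hq hfrob hb hp⟩
    by_cases h11' : px + 1 = 0
    · have hpx : px = 1 := by linear_combination h11' - (two0 (F := F))
      rw [hpx] at hp
      exact Or.inr (Or.inl ⟨hpx, pin1 hq hfrob hb hp⟩)
    by_cases h20 : py = 0
    · rw [h20] at hp
      exact Or.inr (Or.inr (Or.inl ⟨pinr0 hq hfrob hb hp, h20⟩))
    · have h21 : py + 1 = 0 := hint (px, py) hp h10 h11' h20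
      have hpy : py = 1 := by linear_combination h21 - (two0 (F := F))
      rw [hpy] at hp
      exact Or.inr (Or.inr (Or.inr ⟨pinr1 hq hfrob hb hp, hpy⟩))

end Main
section Exact

variable [Fintype F] {q : ℕ}

lemma card_sol_one (hq : 2 ≤ q) (hfrob : ∀ u v : F, (u + v) ^ q = u ^ q + v ^ q)
    (hcard : ∀ z : F, z ^ (q * q) = z) (h3 : 3 ∣ q + 1)
    {ω : F} (hsq : ω ^ 2 + ω + 1 = 0) :
    Nat.card (Sol q (1 : F)) = 4 := by
  classical
  have h11 : (1 : F) + 1 = 0 := addself 1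
  have hω1 : ω ≠ 1 := by
    intro h; rw [h] at hsq
    exact one_ne_zero (by linear_combination hsq - (two0 (F := F)))
  have hω0 : ω ≠ 0 := by
    intro h; rw [h] at hsq
    exact one_ne_zero (by linear_combination hsq)
  have hωp1 : ω + 1 ≠ 0 := fun h => hω1 (by linear_combination h - (two0 (F := F)))
  have hww : ω + 1 + 1 = ω := by linear_combination (two0 (F := F))
  obtain ⟨j, hj⟩ := h3
  have hj1 : 1 ≤ j := by omega
  have hq1' : q - 1 = 3 * (j - 1) + 1 := by omega
  have hω3 : ω ^ 3 = 1 := by linear_combination (ω + 1) * hsq - (1 + ω + ω ^ 2) * (two0 (F := F))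
  have hwq : ω ^ (q - 1) = ω := by
    rw [hq1', pow_add, pow_mul, hω3, one_pow, pow_one, one_mul]
  have hw2 : ω + 1 = ω ^ 2 := by linear_combination -hsq + (ω + 1) * (two0 (F := F))
  have hq2' : 2 * (q - 1) = 3 * (2 * (j - 1)) + 2 := by omega
  have hwq2 : (ω + 1) ^ (q - 1) = ω + 1 := by
    rw [hw2, ← pow_mul, hq2', pow_add, pow_mul, hω3, one_pow, one_mul]
  -- memberships
  have m1 : ((0 : F), (1 : F)) ∈ Sol q 1 := by
    refine ⟨?_, ?_⟩
    · simp only [zpow0 hq, one_pow, zero_add]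
    · simp only [zero_add, one_pow, h11, zpow0 hq, add_zero]
  have m2 : ((1 : F), (0 : F)) ∈ Sol q 1 := mem_swap m1
  have m3 : (ω, ω + 1) ∈ Sol q 1 := by
    refine ⟨?_, ?_⟩
    · simp only [hwq, hwq2]
      linear_combination ω * (two0 (F := F))
    · simp only [hww, hwq, hwq2]
      linear_combination ω * (two0 (F := F))
  have m4 : (ω + 1, ω) ∈ Sol q 1 := mem_swap m3
  have hseteq : Sol q (1 : F) =
      {((0 : F), (1 : F)), ((1 : F), (0 : F)), (ω, ω + 1), (ω + 1, ω)} := by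
    apply Set.Subset.antisymm
    · rintro ⟨px, py⟩ hp
      have hb : (1 : F) ≠ 0 := one_ne_zero
      have hI : ¬(((1 : F) + 1) ^ q * ((1 : F) + 1) = 1) := by
        rw [h11, mul_zero]; exact zero_ne_one
      simp only [Set.mem_insert_iff, Set.mem_singleton_iff, Prod.mk.injEq]
      by_cases h10 : px = 0
      · rw [h10] at hp
        have := pin0 hq hfrob hb hp
        exact Or.inl ⟨h10, this⟩
      by_cases h11' : px + 1 = 0
      · have hpx : px = 1 := by linear_combination h11' - (two0 (F := F))
        rw [hpx] at hp
        have hpy : py = 1 + 1 := pin1 hq hfrob hb hp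
        rw [h11] at hpy
        exact Or.inr (Or.inl ⟨hpx, hpy⟩)
      by_cases h20 : py = 0
      · rw [h20] at hp
        have hpx : px = 1 := pinr0 hq hfrob hb hp
        exact Or.inr (Or.inl ⟨hpx, h20⟩)
      by_cases h21 : py + 1 = 0
      · have hpy : py = 1 := by linear_combination h21 - (two0 (F := F))
        rw [hpy] at hp
        have hpx : px = 1 + 1 := pinr1 hq hfrob hb hp
        rw [h11] at hpx
        exact Or.inl ⟨hpx, hpy⟩
      · have hm3' := m3
        rcases interior_pin hq hfrob hcard hb hI h10 h11' h20 h21 hp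
            hω0 hωp1 hωp1 (by rw [hww]; exact hω0) hm3' with he | he
        · injection he with a1 a2
          exact Or.inr (Or.inr (Or.inl ⟨a1, a2⟩))
        · injection he with a1 a2
          rw [hww] at a2
          exact Or.inr (Or.inr (Or.inr ⟨a1, a2⟩))
    · rintro p hp
      rcases hp with h | h | h | h <;> rw [h] <;> first
        | exact m1 | exact m2 | exact m3 | exact m4
  rw [hseteq, Nat.card_coe_set_eq]
  have ne1 : ((0 : F), (1 : F)) ∉ ({((1 : F), (0 : F)), (ω, ω + 1), (ω + 1, ω)} :
      Set (F × F)) := by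
    simp only [Set.mem_insert_iff, Set.mem_singleton_iff, Prod.mk.injEq, not_or]
    exact ⟨fun h => zero_ne_one h.1, fun h => hω0 h.1.symm, fun h => hωp1 h.1.symm⟩
  have ne2 : ((1 : F), (0 : F)) ∉ ({(ω, ω + 1), (ω + 1, ω)} : Set (F × F)) := by
    simp only [Set.mem_insert_iff, Set.mem_singleton_iff, Prod.mk.injEq, not_or]
    exact ⟨fun h => hω1 h.1.symm, fun h => hω0 h.2.symm⟩
  have ne3 : (ω, ω + 1) ≠ (ω + 1, ω) := by
    intro h; injection h with a1 _
    exact one_ne_zero (by linear_combination -a1)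
  rw [Set.ncard_insert_of_notMem ne1, Set.ncard_insert_of_notMem ne2, Set.ncard_pair ne3]

lemma card_scale (hq : 2 ≤ q) {a b : F} (ha : a ≠ 0) :
    Nat.card {p : F × F // p.1 ^ (q - 1) + p.2 ^ (q - 1) = b ∧
        (p.1 + a) ^ (q - 1) + (p.2 + a) ^ (q - 1) = b}
      = Nat.card (Sol q (b * (a ^ (q - 1))⁻¹)) := by
  have hap : a ^ (q - 1) ≠ 0 := pow_ne_zero _ ha
  have key : ∀ X Y : F, X + Y = b ↔ (a ^ (q - 1))⁻¹ * X + (a ^ (q - 1))⁻¹ * Y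
      = b * (a ^ (q - 1))⁻¹ := by
    intro X Y
    rw [← mul_add, mul_comm b _, mul_right_inj' (inv_ne_zero hap)]
  apply Nat.card_congr
  refine Equiv.subtypeEquiv
    ((Equiv.mulLeft₀ a⁻¹ (inv_ne_zero ha)).prodCongr
      (Equiv.mulLeft₀ a⁻¹ (inv_ne_zero ha))) ?_
  rintro ⟨x, y⟩
  simp only [Equiv.prodCongr_apply, Equiv.mulLeft₀_apply, Prod.map_apply]
  have hx1 : a⁻¹ * x + 1 = a⁻¹ * (x + a) := by field_simp
  have hy1 : a⁻¹ * y + 1 = a⁻¹ * (y + a) := by field_simp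
  constructor
  · rintro ⟨e1, e2⟩
    constructor
    · rw [mul_pow, mul_pow, inv_pow]
      exact (key _ _).mp e1
    · rw [hx1, hy1, mul_pow, mul_pow, inv_pow]
      exact (key _ _).mp e2
  · rintro ⟨e1, e2⟩
    rw [mul_pow, mul_pow, inv_pow] at e1
    rw [hx1, hy1, mul_pow, mul_pow, inv_pow] at e2
    exact ⟨(key _ _).mpr e1, (key _ _).mpr e2⟩

end Exact

lemma three_dvd_aux (k : ℕ) : 3 ∣ 2 * 4 ^ k + 1 := by
  induction k with
  | zero => decide
  | succ n ih =>
    obtain ⟨c, hc⟩ := ih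
    refine ⟨4 * c - 1, ?_⟩
    have h4 : (4 : ℕ) ^ (n + 1) = 4 ^ n * 4 := pow_succ 4 n
    omega

end Boomerang

open Boomerang

theorem boomerang_uniformity_odd (m : ℕ) (hm : 1 < m) (hmo : Odd m) (F : Type*) [Field F]
    [Fintype F] [CharP F 2] (hF : Fintype.card F = 2 ^ (2 * m)) :
    sSup {k : ℕ | ∃ a b : F, a ≠ 0 ∧ b ≠ 0 ∧
      k = Nat.card {p : F × F // p.1 ^ (2 ^ m - 1) + p.2 ^ (2 ^ m - 1) = b ∧
        (p.1 + a) ^ (2 ^ m - 1) + (p.2 + a) ^ (2 ^ m - 1) = b}} = 4 := by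
  classical
  set q := 2 ^ m with hqdef
  have hq : 2 ≤ q := by
    have h1 : 2 ^ 1 ≤ 2 ^ m := Nat.pow_le_pow_right (by norm_num) (by omega)
    simpa [hqdef] using h1
  haveI : Fact (Nat.Prime 2) := ⟨by norm_num⟩
  have hfrob : ∀ u v : F, (u + v) ^ q = u ^ q + v ^ q := fun u v => by
    rw [hqdef]; exact add_pow_char_pow u v 2 m
  have hcardF : Fintype.card F = q * q := by rw [hF, hqdef, ← pow_add, two_mul]
  have hcard : ∀ z : F, z ^ (q * q) = z := fun z => by
    rw [← hcardF]; exact FiniteField.pow_card z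
  have h3 : 3 ∣ q + 1 := by
    obtain ⟨k, hk⟩ := hmo
    have hq4 : q = 4 ^ k * 2 := by
      rw [hqdef, hk, pow_succ, pow_mul]; norm_num
    obtain ⟨c, hc⟩ := three_dvd_aux k
    exact ⟨c, by omega⟩
  have hdvd : 3 ∣ Fintype.card F - 1 := by
    have h1 : (q + 1) * (q - 1) + 1 = q * q := by
      have haux : ∀ n : ℕ, 2 ≤ n → (n + 1) * (n - 1) + 1 = n * n := by
        rintro n hn
        obtain ⟨r, rfl⟩ : ∃ r, n = r + 2 := ⟨n - 2, by omega⟩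
        have h21 : r + 2 - 1 = r + 1 := by omega
        rw [h21]; ring
      exact haux q hq
    obtain ⟨j, hj⟩ := h3
    refine ⟨j * (q - 1), ?_⟩
    rw [hcardF]
    rw [hj] at h1
    have h2 : 3 * j * (q - 1) = 3 * (j * (q - 1)) := by ring
    rw [h2] at h1
    generalize j * (q - 1) = A at h1 ⊢
    generalize q * q = B at h1 ⊢
    omega
  haveI : Fact (Nat.Prime 3) := ⟨by norm_num⟩
  obtain ⟨g, hg⟩ := exists_prime_orderOf_dvd_card (G := Fˣ) 3
    (by rw [Fintype.card_units]; exact hdvd)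
  have hg3 : g ^ 3 = 1 := by rw [← hg]; exact pow_orderOf_eq_one g
  have hω3 : (g : F) ^ 3 = 1 := by rw [← Units.val_pow_eq_pow_val, hg3, Units.val_one]
  have hωne : (g : F) ≠ 1 := by
    intro h
    have hg1 : g = 1 := Units.ext (by simpa using h)
    rw [hg1, orderOf_one] at hg
    omega
  have hsq : (g : F) ^ 2 + (g : F) + 1 = 0 := by
    have hfac : ((g : F) - 1) * ((g : F) ^ 2 + (g : F) + 1) = 0 := by linear_combination hω3
    rcases mul_eq_zero.mp hfac with h | h
    · exact absurd (sub_eq_zero.mp h) hωne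
    · exact h
  have h4mem : (4 : ℕ) ∈ {k : ℕ | ∃ a b : F, a ≠ 0 ∧ b ≠ 0 ∧
      k = Nat.card {p : F × F // p.1 ^ (q - 1) + p.2 ^ (q - 1) = b ∧
        (p.1 + a) ^ (q - 1) + (p.2 + a) ^ (q - 1) = b}} := by
    refine ⟨1, 1, one_ne_zero, one_ne_zero, ?_⟩
    have e := card_scale (F := F) (q := q) hq (a := (1 : F)) (b := (1 : F)) one_ne_zero
    rw [one_pow, inv_one, mul_one] at e
    rw [e, card_sol_one hq hfrob hcard h3 hsq]
  have hbd : ∀ kk ∈ {k : ℕ | ∃ a b : F, a ≠ 0 ∧ b ≠ 0 ∧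
      k = Nat.card {p : F × F // p.1 ^ (q - 1) + p.2 ^ (q - 1) = b ∧
        (p.1 + a) ^ (q - 1) + (p.2 + a) ^ (q - 1) = b}}, kk ≤ 4 := by
    rintro kk ⟨a, b, ha, hb, rfl⟩
    rw [card_scale hq ha]
    exact card_sol_le hq hfrob hcard h3
      (mul_ne_zero hb (inv_ne_zero (pow_ne_zero _ ha)))
  exact le_antisymm (csSup_le ⟨4, h4mem⟩ hbd) (le_csSup ⟨4, fun kk hk => hbd kk hk⟩ h4mem)
end

section
/- Let m > 1 be an odd integer, let F be the finite field with 2^(2m) elements, and let f(x) = x^(2^m - 1). Then the number of pairs (x,y) ∈ F × F satisfying f(x) + f(y) = 1 and f(x+1) + f(y+1) = 1 is exactly 4; that is, the BCT entry B_f(1,1) equals 4. -/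
section aux
variable {F : Type*} [Field F]

/-- If `s^q = c*s`, `(s+1)^q = d*(s+1)` with `c, d` roots of `X^2+X+1`, then `s = c` and `d = c+1`. -/
lemma bct_aux_C {q : ℕ} (hfrob : ∀ z w : F, (z + w) ^ q = z ^ q + w ^ q)
    (htwo : (2 : F) = 0) {s c d : F}
    (hc : c * c + c + 1 = 0) (hd : d * d + d + 1 = 0)
    (hs : s ^ q = c * s) (hs1 : (s + 1) ^ q = d * (s + 1)) : s = c ∧ d = c + 1 := by
  have E : d * (s + 1) = c * s + 1 := by
    rw [← hs1, hfrob s 1, hs, one_pow]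
  have hcd : c ≠ d := by
    rintro rfl
    have h1 : c = 1 := by linear_combination E
    exact one_ne_zero (α := F) (by linear_combination hc - (c + 2) * h1 - htwo)
  have hfac : (c + d) * (c + d + 1) = 0 := by
    linear_combination hc + hd + (c * d - 1) * htwo
  rcases mul_eq_zero.mp hfac with h | h
  · exact absurd (by linear_combination h - d * htwo) hcd
  · have hd' : d = c + 1 := by linear_combination h - (c + 1) * htwo
    exact ⟨by linear_combination E - (s + 1) * hd' - c * htwo, hd'⟩

/-- If `u + v = 1` with `u, v` both `(q+1)`-st roots of unity (written as `u^q * u = 1`),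
then `{u, v} = {w, w+1}` for a root `w` of `X^2+X+1`. -/
lemma bct_aux_A {q : ℕ} (hfrob : ∀ z w : F, (z + w) ^ q = z ^ q + w ^ q)
    (htwo : (2 : F) = 0) {u v w : F} (hw : w * w + w + 1 = 0) (huv : u + v = 1)
    (hu : u ^ q * u = 1) (hv : v ^ q * v = 1) :
    (u = w ∧ v = w + 1) ∨ (u = w + 1 ∧ v = w) := by
  have hv1 : v = 1 + u := by linear_combination huv - u * htwo
  rw [hv1, hfrob 1 u, one_pow] at hv
  have hqpow : u ^ q = u + 1 := by linear_combination hv - hu - (u + 1) * htwo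
  have hquad : u * u + u + 1 = 0 := by linear_combination hu - u * hqpow + htwo
  have hfac : (u + w) * (u + (w + 1)) = 0 := by
    linear_combination hquad + hw + (u * w - 1) * htwo
  rcases mul_eq_zero.mp hfac with h | h
  · have hu' : u = w := by linear_combination h - w * htwo
    exact Or.inl ⟨hu', by linear_combination hv1 + hu'⟩
  · have hu' : u = w + 1 := by linear_combination h - (w + 1) * htwo
    exact Or.inr ⟨hu', by linear_combination hv1 + hu' + htwo⟩

end aux

theorem bct_one_one_odd (m : ℕ) (hm : 1 < m) (hmo : Odd m) (F : Type*) [Field F] [Fintype F]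
    [CharP F 2] (hF : Fintype.card F = 2 ^ (2 * m)) :
    Nat.card {p : F × F // p.1 ^ (2 ^ m - 1) + p.2 ^ (2 ^ m - 1) = 1 ∧
      (p.1 + 1) ^ (2 ^ m - 1) + (p.2 + 1) ^ (2 ^ m - 1) = 1} = 4 := by
  classical
  haveI : Fact (Nat.Prime 2) := ⟨Nat.prime_two⟩
  haveI : Fact (Nat.Prime 3) := ⟨by norm_num⟩
  have htwo : (2 : F) = 0 := CharTwo.two_eq_zero
  have hfrob : ∀ z w : F, (z + w) ^ (2 ^ m) = z ^ (2 ^ m) + w ^ (2 ^ m) := fun z w =>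
    add_pow_char_pow z w 2 m
  have hq4 : 4 ≤ 2 ^ m := by
    calc (4 : ℕ) = 2 ^ 2 := rfl
    _ ≤ 2 ^ m := Nat.pow_le_pow_right (by norm_num) hm
  have he0 : 2 ^ m - 1 ≠ 0 := by omega
  have hcard2 : Fintype.card F = 2 ^ m * 2 ^ m := by rw [hF, two_mul, pow_add]
  have hsub : Fintype.card F - 1 = (2 ^ m - 1) * (2 ^ m + 1) := by
    obtain ⟨n, hn⟩ : ∃ n, 2 ^ m = n + 1 := ⟨2 ^ m - 1, by omega⟩
    rw [hcard2, hn, Nat.succ_sub_one]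
    exact Nat.sub_eq_of_eq_add (by ring)
  -- existence of a cube root of unity
  have hdvd3 : 3 ∣ Fintype.card Fˣ := by
    have h4 : (2 : ℕ) ^ (2 * m) = 4 ^ m := by rw [pow_mul]; norm_num
    have hmod : 4 ^ m % 3 = 1 := by rw [Nat.pow_mod]; norm_num
    have h1le : 1 ≤ 4 ^ m := Nat.one_le_pow _ _ (by norm_num)
    rw [Fintype.card_units, hF, h4]
    omega
  obtain ⟨ζ, hζ⟩ := exists_prime_orderOf_dvd_card 3 hdvd3
  set ω : F := (ζ : F) with hωdef
  have hω3 : ω ^ 3 = 1 := by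
    have := congrArg Units.val (pow_orderOf_eq_one ζ)
    rw [hζ] at this
    simpa using this
  have hω0 : ω ≠ 0 := Units.ne_zero ζ
  have hω1 : ω ≠ 1 := by
    intro h
    have : ζ = 1 := Units.val_eq_one.mp h
    rw [this] at hζ
    simp at hζ
  have hωq : ω * ω + ω + 1 = 0 := by
    have hfac : (ω + 1) * (ω * ω + ω + 1) = 0 := by
      linear_combination hω3 + (ω * ω + ω + 1) * htwo
    rcases mul_eq_zero.mp hfac with h | h
    · exact absurd (by linear_combination h - htwo) hω1
    · exact h
  have hωq1 : (ω + 1) * (ω + 1) + (ω + 1) + 1 = 0 := by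
    linear_combination hωq + (ω + 1) * htwo
  have hωp1ne0 : ω + 1 ≠ 0 := fun h => hω1 (by linear_combination h - htwo)
  have hωp1ne1 : ω + 1 ≠ 1 := fun h => hω0 (by linear_combination h)
  have hωne : ω ≠ ω + 1 := fun h => one_ne_zero (α := F) (by linear_combination -h)
  -- powers of ω
  have hmod2 : 2 ^ m % 3 = 2 := by
    obtain ⟨k, hk⟩ := hmo
    rw [hk, pow_succ, pow_mul, Nat.mul_mod, Nat.pow_mod]
    norm_num
  obtain ⟨t, ht⟩ : ∃ t, 2 ^ m - 1 = 3 * t + 1 := ⟨(2 ^ m - 2) / 3, by omega⟩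
  have hωe : ω ^ (2 ^ m - 1) = ω := by
    rw [ht, pow_succ, pow_mul, hω3, one_pow, one_mul]
  have hω1e : (ω + 1) ^ (2 ^ m - 1) = ω + 1 := by
    have hsq : ω + 1 = ω ^ 2 := by linear_combination -hωq + (ω + 1) * htwo
    rw [hsq, ← pow_mul, ht, show 2 * (3 * t + 1) = 3 * (2 * t) + 2 from by ring,
      pow_add, pow_mul, hω3, one_pow, one_mul]
  -- roots of unity property
  have hroot : ∀ x : F, x ≠ 0 →
      (x ^ (2 ^ m - 1)) ^ (2 ^ m) * x ^ (2 ^ m - 1) = 1 := by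
    intro x hx
    have hxc := FiniteField.pow_card_sub_one_eq_one x hx
    rw [hsub] at hxc
    rw [← pow_succ, ← pow_mul]
    exact hxc
  have hpow : ∀ s c : F, s ^ (2 ^ m - 1) = c → s ^ (2 ^ m) = c * s := by
    intro s c hc
    rw [show 2 ^ m = (2 ^ m - 1) + 1 from by omega, pow_succ, hc]
  -- the set equality
  have hset : {p : F × F | p.1 ^ (2 ^ m - 1) + p.2 ^ (2 ^ m - 1) = 1 ∧
      (p.1 + 1) ^ (2 ^ m - 1) + (p.2 + 1) ^ (2 ^ m - 1) = 1} =
      {((0 : F), (1 : F)), ((1 : F), (0 : F)), (ω, ω + 1), (ω + 1, ω)} := by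
    ext ⟨x, y⟩
    simp only [Set.mem_setOf_eq, Set.mem_insert_iff, Set.mem_singleton_iff, Prod.mk.injEq]
    constructor
    · rintro ⟨h1, h2⟩
      by_cases hx0 : x = 0
      · subst hx0
        rw [zero_add, one_pow] at h2
        have hy1 : (y + 1) ^ (2 ^ m - 1) = 0 := by linear_combination h2
        have hy1' : y + 1 = 0 := by
          exact pow_eq_zero_iff he0 |>.mp hy1
        exact Or.inl ⟨rfl, by linear_combination hy1' - htwo⟩
      by_cases hy0 : y = 0
      · subst hy0
        rw [zero_add, one_pow] at h2
        have hx1 : (x + 1) ^ (2 ^ m - 1) = 0 := by linear_combination h2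
        have hx1' : x + 1 = 0 := pow_eq_zero_iff he0 |>.mp hx1
        exact Or.inr (Or.inl ⟨by linear_combination hx1' - htwo, rfl⟩)
      have hA := bct_aux_A hfrob htwo hωq h1 (hroot x hx0) (hroot y hy0)
      rcases hA with ⟨hu, hv⟩ | ⟨hu, hv⟩
      · have hx1 : x + 1 ≠ 0 := by
          intro h
          have hx : x = 1 := by linear_combination h - htwo
          rw [hx, one_pow] at hu
          exact hω1 hu.symm
        have hy1 : y + 1 ≠ 0 := by
          intro h
          have hy : y = 1 := by linear_combination h - htwo
          rw [hy, one_pow] at hv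
          exact hωp1ne1 hv.symm
        have hA2 := bct_aux_A hfrob htwo hωq h2 (hroot _ hx1) (hroot _ hy1)
        rcases hA2 with ⟨hu', hv'⟩ | ⟨hu', hv'⟩
        · have hC := bct_aux_C hfrob htwo hωq hωq (hpow _ _ hu) (hpow _ _ hu')
          exact absurd hC.2 hωne
        · have hC := bct_aux_C hfrob htwo hωq hωq1 (hpow _ _ hu) (hpow _ _ hu')
          have hCy := bct_aux_C hfrob htwo hωq1 hωq (hpow _ _ hv) (hpow _ _ hv')
          exact Or.inr (Or.inr (Or.inl ⟨hC.1, hCy.1⟩))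
      · have hx1 : x + 1 ≠ 0 := by
          intro h
          have hx : x = 1 := by linear_combination h - htwo
          rw [hx, one_pow] at hu
          exact hωp1ne1 hu.symm
        have hy1 : y + 1 ≠ 0 := by
          intro h
          have hy : y = 1 := by linear_combination h - htwo
          rw [hy, one_pow] at hv
          exact hω1 hv.symm
        have hA2 := bct_aux_A hfrob htwo hωq h2 (hroot _ hx1) (hroot _ hy1)
        rcases hA2 with ⟨hu', hv'⟩ | ⟨hu', hv'⟩
        · have hC := bct_aux_C hfrob htwo hωq1 hωq (hpow _ _ hu) (hpow _ _ hu')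
          have hCy := bct_aux_C hfrob htwo hωq hωq1 (hpow _ _ hv) (hpow _ _ hv')
          exact Or.inr (Or.inr (Or.inr ⟨hC.1, hCy.1⟩))
        · have hC := bct_aux_C hfrob htwo hωq1 hωq1 (hpow _ _ hu) (hpow _ _ hu')
          exact absurd hC.2 (by
            intro h
            exact one_ne_zero (α := F) (by linear_combination -h))
    · have h11 : (1 : F) + 1 = 0 := by linear_combination htwo
      have hω2 : ω + 1 + 1 = ω := by linear_combination htwo
      rintro (⟨hx, hy⟩ | ⟨hx, hy⟩ | ⟨hx, hy⟩ | ⟨hx, hy⟩) <;> subst hx <;> subst hy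
      · constructor
        · rw [zero_pow he0, one_pow, zero_add]
        · rw [zero_add, one_pow, h11, zero_pow he0, add_zero]
      · constructor
        · rw [zero_pow he0, one_pow, add_zero]
        · rw [zero_add, one_pow, h11, zero_pow he0, zero_add]
      · constructor
        · rw [hωe, hω1e]; linear_combination ω * htwo
        · rw [hω1e, hω2, hωe]; linear_combination ω * htwo
      · constructor
        · rw [hωe, hω1e]; linear_combination ω * htwo
        · rw [hω2, hωe, hω1e]; linear_combination ω * htwo
  -- counting
  have d1 : ((0 : F), (1 : F)) ∉ ({((1 : F), (0 : F)), (ω, ω + 1), (ω + 1, ω)} : Set (F × F)) := by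
    simp only [Set.mem_insert_iff, Set.mem_singleton_iff, Prod.mk.injEq, not_or]
    exact ⟨fun h => zero_ne_one h.1, fun h => hω0 h.1.symm, fun h => hωp1ne0 h.1.symm⟩
  have d2 : ((1 : F), (0 : F)) ∉ ({(ω, ω + 1), (ω + 1, ω)} : Set (F × F)) := by
    simp only [Set.mem_insert_iff, Set.mem_singleton_iff, Prod.mk.injEq, not_or]
    exact ⟨fun h => hω1 h.1.symm, fun h => hωp1ne1 h.1.symm⟩
  have d3 : (ω, ω + 1) ∉ ({(ω + 1, ω)} : Set (F × F)) := by
    simp only [Set.mem_singleton_iff, Prod.mk.injEq, not_and]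
    exact fun h => absurd h hωne
  have key : Nat.card ({p : F × F | p.1 ^ (2 ^ m - 1) + p.2 ^ (2 ^ m - 1) = 1 ∧
      (p.1 + 1) ^ (2 ^ m - 1) + (p.2 + 1) ^ (2 ^ m - 1) = 1} : Set (F × F)) = 4 := by
    rw [Nat.card_coe_set_eq, hset, Set.ncard_insert_of_notMem d1,
      Set.ncard_insert_of_notMem d2, Set.ncard_insert_of_notMem d3, Set.ncard_singleton]
  exact key
end

section
/- Let m > 1 be an integer, let F be the finite field with 2^(2m) elements, and let b ∈ F be nonzero. Suppose x, y ∈ F with x ∉ {0,1} and y ∉ {0,1} satisfy x^(2^m - 1) + y^(2^m - 1) = b and (x+1)^(2^m - 1) + (y+1)^(2^m - 1) = b. Then either y = x + 1 or (b+1)^(2^m + 1) = 1. -/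
theorem case5_dichotomy (m : ℕ) (hm : 1 < m) (F : Type*) [Field F] [Fintype F] [CharP F 2]
    (hF : Fintype.card F = 2 ^ (2 * m)) (b : F) (hb : b ≠ 0) (x y : F)
    (hx0 : x ≠ 0) (hx1 : x ≠ 1) (hy0 : y ≠ 0) (hy1 : y ≠ 1)
    (h1 : x ^ (2 ^ m - 1) + y ^ (2 ^ m - 1) = b)
    (h2 : (x + 1) ^ (2 ^ m - 1) + (y + 1) ^ (2 ^ m - 1) = b) :
    y = x + 1 ∨ (b + 1) ^ (2 ^ m + 1) = 1 := by
  haveI := Fact.mk Nat.prime_two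
  have hq1 : 1 ≤ 2 ^ m := Nat.one_le_two_pow
  have two0 : (2 : F) = 0 := by
    have := CharP.cast_eq_zero F 2
    exact_mod_cast this
  have hxp : x ^ (2 ^ m) = x ^ (2 ^ m - 1) * x := by
    rw [← pow_succ, Nat.sub_add_cancel hq1]
  have hyp : y ^ (2 ^ m) = y ^ (2 ^ m - 1) * y := by
    rw [← pow_succ, Nat.sub_add_cancel hq1]
  have hxp1 : (x + 1) ^ (2 ^ m) = (x + 1) ^ (2 ^ m - 1) * (x + 1) := by
    rw [← pow_succ, Nat.sub_add_cancel hq1]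
  have hyp1 : (y + 1) ^ (2 ^ m) = (y + 1) ^ (2 ^ m - 1) * (y + 1) := by
    rw [← pow_succ, Nat.sub_add_cancel hq1]
  have fx : (x + 1) ^ (2 ^ m) = x ^ (2 ^ m) + 1 := by
    rw [add_pow_char_pow, one_pow]
  have fy : (y + 1) ^ (2 ^ m) = y ^ (2 ^ m) + 1 := by
    rw [add_pow_char_pow, one_pow]
  have hx1' : x + 1 ≠ 0 := by
    intro h
    apply hx1
    linear_combination h - two0
  have hy1' : y + 1 ≠ 0 := by
    intro h
    apply hy1
    linear_combination h - two0
  have E1 : x ^ (2 ^ m) * y + y ^ (2 ^ m) * x = b * (x * y) := by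
    linear_combination (x * y) * h1 + y * hxp + x * hyp
  have E2 : (x ^ (2 ^ m) + 1) * (y + 1) + (y ^ (2 ^ m) + 1) * (x + 1)
      = b * ((x + 1) * (y + 1)) := by
    linear_combination ((x + 1) * (y + 1)) * h2 + (y + 1) * hxp1 + (x + 1) * hyp1
      - (y + 1) * fx - (x + 1) * fy
  have key : x ^ (2 ^ m) + y ^ (2 ^ m) + x + y = b * (x + y + 1) := by
    linear_combination E2 - E1 - two0
  by_cases hs : x + y = 1
  · left
    linear_combination hs - x * two0
  · right
    have ht : x + y + 1 ≠ 0 := by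
      intro h
      apply hs
      linear_combination h - two0
    have frobt : (x + y + 1) ^ (2 ^ m) = x ^ (2 ^ m) + y ^ (2 ^ m) + 1 := by
      rw [add_pow_char_pow, add_pow_char_pow, one_pow]
    have htq : (x + y + 1) ^ (2 ^ m) = (b + 1) * (x + y + 1) := by
      linear_combination frobt + key - (x + y) * two0
    have hcard : ((x + y + 1) ^ (2 ^ m)) ^ (2 ^ m) = x + y + 1 := by
      rw [← pow_mul]
      have h : 2 ^ m * 2 ^ m = Fintype.card F := by rw [hF, ← pow_add, two_mul]
      rw [h, FiniteField.pow_card]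
    have main : (b + 1) ^ (2 ^ m + 1) * (x + y + 1) = 1 * (x + y + 1) := by
      calc (b + 1) ^ (2 ^ m + 1) * (x + y + 1)
          = (b + 1) ^ (2 ^ m) * ((b + 1) * (x + y + 1)) := by rw [pow_succ]; ring
        _ = (b + 1) ^ (2 ^ m) * (x + y + 1) ^ (2 ^ m) := by rw [← htq]
        _ = ((b + 1) * (x + y + 1)) ^ (2 ^ m) := (mul_pow _ _ _).symm
        _ = ((x + y + 1) ^ (2 ^ m)) ^ (2 ^ m) := by rw [← htq]
        _ = x + y + 1 := hcard
        _ = 1 * (x + y + 1) := (one_mul _).symm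
    exact mul_right_cancel₀ ht main
end

section
/- Let m > 1 be an integer, let F be the finite field with 2^(2m) elements, and let b ∈ F be nonzero with (b+1)^(2^m + 1) = 1. Then there are no pairs (x,y) ∈ F × F with x ∉ {0,1} and y ∉ {0,1} satisfying x^(2^m - 1) + y^(2^m - 1) = b and (x+1)^(2^m - 1) + (y+1)^(2^m - 1) = b. -/
theorem subcase52_no_solution (m : ℕ) (hm : 1 < m) (F : Type*) [Field F] [Fintype F]
    [CharP F 2] (hF : Fintype.card F = 2 ^ (2 * m)) (b : F) (hb : b ≠ 0)
    (hb1 : (b + 1) ^ (2 ^ m + 1) = 1) :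
    ¬ ∃ x y : F, x ≠ 0 ∧ x ≠ 1 ∧ y ≠ 0 ∧ y ≠ 1 ∧
      x ^ (2 ^ m - 1) + y ^ (2 ^ m - 1) = b ∧
      (x + 1) ^ (2 ^ m - 1) + (y + 1) ^ (2 ^ m - 1) = b := by
  rintro ⟨x, y, hx0, hx1, hy0, hy1, h1, h2⟩
  have hq1 : 1 ≤ 2 ^ m := Nat.one_le_two_pow
  have htwo : (2 : F) = 0 := by exact_mod_cast CharP.cast_eq_zero F 2
  have hfrob : ∀ z w : F, (z + w) ^ (2 ^ m) = z ^ (2 ^ m) + w ^ (2 ^ m) := fun z w =>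
    add_pow_char_pow z w 2 m
  have hqq : ∀ z : F, (z ^ (2 ^ m)) ^ (2 ^ m) = z := by
    intro z
    rw [← pow_mul, ← pow_add, ← two_mul, ← hF, FiniteField.pow_card]
  have hx1' : x + 1 ≠ 0 := by
    intro h
    exact hx1 (by linear_combination h - htwo)
  have hy1' : y + 1 ≠ 0 := by
    intro h
    exact hy1 (by linear_combination h - htwo)
  have hxp : x ^ (2 ^ m - 1) * x = x ^ (2 ^ m) := by
    rw [← pow_succ, Nat.sub_add_cancel hq1]
  have hyp : y ^ (2 ^ m - 1) * y = y ^ (2 ^ m) := by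
    rw [← pow_succ, Nat.sub_add_cancel hq1]
  have hxp1 : (x + 1) ^ (2 ^ m - 1) * (x + 1) = x ^ (2 ^ m) + 1 := by
    rw [← pow_succ, Nat.sub_add_cancel hq1, hfrob, one_pow]
  have hyp1 : (y + 1) ^ (2 ^ m - 1) * (y + 1) = y ^ (2 ^ m) + 1 := by
    rw [← pow_succ, Nat.sub_add_cancel hq1, hfrob, one_pow]
  -- E1 : cleared form of the first equation
  have E1 : x ^ (2 ^ m) * y + y ^ (2 ^ m) * x = b * (x * y) := by
    linear_combination (x * y) * h1 - y * hxp - x * hyp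
  -- E2 : cleared form of the second equation
  have E2 : (x ^ (2 ^ m) + 1) * (y + 1) + (y ^ (2 ^ m) + 1) * (x + 1)
      = b * ((x + 1) * (y + 1)) := by
    linear_combination ((x + 1) * (y + 1)) * h2 - (y + 1) * hxp1 - (x + 1) * hyp1
  -- E3 : Frobenius of E1
  have E3 : b * (x * y) = b ^ (2 ^ m) * (x ^ (2 ^ m) * y ^ (2 ^ m)) := by
    have h := congrArg (fun z : F => z ^ (2 ^ m)) E1
    simp only [hfrob, mul_pow, one_pow, hqq] at h
    linear_combination h - E1
  -- E4 : Frobenius of E2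
  have E4 : b * ((x + 1) * (y + 1))
      = b ^ (2 ^ m) * ((x ^ (2 ^ m) + 1) * (y ^ (2 ^ m) + 1)) := by
    have h := congrArg (fun z : F => z ^ (2 ^ m)) E2
    simp only [hfrob, mul_pow, one_pow, hqq] at h
    linear_combination h - E2
  -- hb5 : the norm condition on b
  have hb5 : b * b ^ (2 ^ m) = b + b ^ (2 ^ m) := by
    rw [pow_succ, hfrob, one_pow] at hb1
    linear_combination hb1 - (b + b ^ (2 ^ m)) * htwo
  have hc0 : b ^ (2 ^ m) ≠ 0 := pow_ne_zero _ hb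
  -- the key factorization
  have claim : b ^ (2 ^ m) * ((y + 1) * ((x ^ (2 ^ m) + x) *
      ((x ^ (2 ^ m) + 1) * y + y ^ (2 ^ m) * (x + 1)))) = 0 := by
    linear_combination
      (b ^ (2 ^ m) * (y + 1) * (x ^ (2 ^ m) + 1) * (x + 1)) * E1
      - ((y + 1) * (x + 1) * (x + 1)) * E3
      + (x * y * (x + 1) + 2 * x * y * b ^ (2 ^ m) * (x ^ (2 ^ m) + 1)) * E4
      + (x * y * b ^ (2 ^ m) * (x ^ (2 ^ m) + 1)) * E2
      + ((b ^ (2 ^ m)) ^ 2 * x * y + y ^ (2 ^ m) * (b ^ (2 ^ m)) ^ 2 * x * y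
        - x ^ (2 ^ m) * b ^ (2 ^ m) * x * y - x ^ (2 ^ m) * b ^ (2 ^ m) * x * y ^ 2
        + 2 * x ^ (2 ^ m) * (b ^ (2 ^ m)) ^ 2 * x * y
        - x ^ (2 ^ m) * y ^ (2 ^ m) * b ^ (2 ^ m) * x
        - x ^ (2 ^ m) * y ^ (2 ^ m) * b ^ (2 ^ m) * x * y
        - x ^ (2 ^ m) * y ^ (2 ^ m) * b ^ (2 ^ m) * x ^ 2
        - x ^ (2 ^ m) * y ^ (2 ^ m) * b ^ (2 ^ m) * x ^ 2 * y
        + 2 * x ^ (2 ^ m) * y ^ (2 ^ m) * (b ^ (2 ^ m)) ^ 2 * x * y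
        - (x ^ (2 ^ m)) ^ 2 * b ^ (2 ^ m) * x * y
        - (x ^ (2 ^ m)) ^ 2 * b ^ (2 ^ m) * x * y ^ 2
        + (x ^ (2 ^ m)) ^ 2 * (b ^ (2 ^ m)) ^ 2 * x * y
        + (x ^ (2 ^ m)) ^ 2 * y ^ (2 ^ m) * (b ^ (2 ^ m)) ^ 2 * x * y) * htwo
  have hP : (x ^ (2 ^ m) + x) * ((x ^ (2 ^ m) + 1) * y + y ^ (2 ^ m) * (x + 1)) = 0 := by
    have h := (mul_eq_zero.mp claim).resolve_left hc0
    exact (mul_eq_zero.mp h).resolve_left hy1'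
  rcases mul_eq_zero.mp hP with hA | hQ
  · -- Case 1 : x ^ q = x
    have hax : x ^ (2 ^ m) = x := by linear_combination hA - x * htwo
    have hb0 : b * (x * (x + 1)) = 0 := by
      linear_combination (x + 1) * E1 - x * E2 - (y - x) * hax + (x + x ^ 2) * htwo
    rcases mul_eq_zero.mp hb0 with h | h
    · exact hb h
    · rcases mul_eq_zero.mp h with h' | h'
      · exact hx0 h'
      · exact hx1' h'
  · -- Case 2 : the cross case
    have h10 : b * (y * ((x + y + 1) * (x + 1))) = 0 := by
      linear_combination (x + 1) * E1 + y * E2 + (x + y) * hQ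
        + (-y - y ^ 2 - x * y + b * y + b * y ^ 2 + 2 * b * x * y + b * x * y ^ 2
          + b * x ^ 2 * y - y ^ (2 ^ m) * y - y ^ (2 ^ m) * x - y ^ (2 ^ m) * x * y
          - y ^ (2 ^ m) * x ^ 2 - x ^ (2 ^ m) * y - x ^ (2 ^ m) * y ^ 2
          - x ^ (2 ^ m) * x * y) * htwo
    have hxy1 : x + y + 1 = 0 := by
      rcases mul_eq_zero.mp h10 with h | h
      · exact absurd h hb
      rcases mul_eq_zero.mp h with h | h
      · exact absurd h hy0
      rcases mul_eq_zero.mp h with h | h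
      · exact h
      · exact absurd h hx1'
    have hyx : y = x + 1 := by linear_combination hxy1 - (1 + x) * htwo
    have hByx : y ^ (2 ^ m) = x ^ (2 ^ m) + 1 := by rw [hyx, hfrob, one_pow]
    rw [hByx, hyx] at E1
    have G1 : x ^ (2 ^ m) + x = b * (x * (x + 1)) := by
      linear_combination E1 - (x ^ (2 ^ m) * x) * htwo
    have G2 : (b + 1) * (x * x + x) = x ^ (2 ^ m) + x * x := by
      linear_combination x * htwo - G1
    have G3 : (b ^ (2 ^ m) + 1) * (x ^ (2 ^ m) * x ^ (2 ^ m) + x ^ (2 ^ m))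
        = x + x ^ (2 ^ m) * x ^ (2 ^ m) := by
      have h := congrArg (fun z : F => z ^ (2 ^ m)) G2
      simp only [hfrob, mul_pow, one_pow, hqq] at h
      exact h
    have hcube : (x ^ (2 ^ m) + x) ^ 3 = 0 := by
      linear_combination (-(x + x ^ (2 ^ m) * x ^ (2 ^ m))) * G2
        - ((b + 1) * (x * x + x)) * G3
        + ((x * x + x) * (x ^ (2 ^ m) * x ^ (2 ^ m) + x ^ (2 ^ m))) * hb5
        + (2 * x ^ (2 ^ m) * x ^ 2 + x ^ (2 ^ m) * b ^ (2 ^ m) * x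
          + x ^ (2 ^ m) * b ^ (2 ^ m) * x ^ 2 + x ^ (2 ^ m) * b * x
          + x ^ (2 ^ m) * b * x ^ 2 + 2 * (x ^ (2 ^ m)) ^ 2 * x
          + (x ^ (2 ^ m)) ^ 2 * b ^ (2 ^ m) * x + (x ^ (2 ^ m)) ^ 2 * b ^ (2 ^ m) * x ^ 2
          + (x ^ (2 ^ m)) ^ 2 * b * x + (x ^ (2 ^ m)) ^ 2 * b * x ^ 2) * htwo
    have hax : x ^ (2 ^ m) + x = 0 :=
      pow_eq_zero_iff (by norm_num : (3 : ℕ) ≠ 0) |>.mp hcube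
    have hb0 : b * (x * (x + 1)) = 0 := by linear_combination hax - G1
    rcases mul_eq_zero.mp hb0 with h | h
    · exact hb h
    · rcases mul_eq_zero.mp h with h' | h'
      · exact hx0 h'
      · exact hx1' h'
end

section
/- Let m > 1 be an even integer and let F be the finite field with 2^(2m) elements, and let f(x) = x^(2^m - 1) be the corresponding power map on F. Then the boomerang uniformity of f equals 2; that is, the maximum over all nonzero a, b ∈ F of the number of pairs (x,y) ∈ F × F satisfying f(x) + f(y) = b and f(x+a) + f(y+a) = b is exactly 2. -/
section Helpers

variable {F : Type*} [Field F] [CharP F 2]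

/-- In char 2, `x^(2^m) = x^2` together with `x^(2^m * 2^m) = x` and `3 ∣ 2^m - 1`
forces `x ∈ {0,1}`. -/
lemma cube_lemma {m : ℕ} (h2 : (2 : F) = 0) (hK : ∀ z : F, z ^ (2 ^ m * 2 ^ m) = z)
    (h3 : 3 ∣ 2 ^ m - 1) (x : F) (hx : x ^ (2 ^ m) = x ^ 2) : x = 0 ∨ x = 1 := by
  have h4 : x ^ 4 = x := by
    have : x ^ (2 ^ m * 2 ^ m) = x := hK x
    rw [pow_mul, hx, ← pow_mul, mul_comm, pow_mul, hx] at this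
    calc x ^ 4 = (x ^ 2) ^ 2 := by ring
    _ = x := this
  have hfac : x * (x + 1) * (x ^ 2 + x + 1) = 0 := by
    linear_combination h4 + (x ^ 3 + x ^ 2 + x) * h2
  rcases mul_eq_zero.mp hfac with hf | hquad
  · rcases mul_eq_zero.mp hf with h0 | h1
    · exact Or.inl h0
    · right; linear_combination h1 - h2
  · -- x^2 + x + 1 = 0, so x^3 = 1 and x ≠ 0
    have hx0 : x ≠ 0 := by
      intro h0
      rw [h0] at hquad
      simp at hquad
    have hx3 : x ^ 3 = 1 := by linear_combination (x - 1) * hquad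
    obtain ⟨k, hk⟩ := h3
    have hq1 : 1 ≤ 2 ^ m := Nat.one_le_two_pow
    have hqk : 2 ^ m = 3 * k + 1 := by omega
    have hxq : x ^ (2 ^ m) = x := by
      rw [hqk, pow_add, pow_mul, hx3, one_pow, pow_one, one_mul]
    rw [hxq] at hx
    -- x = x^2, and x^2 = x + 1 + ... ; combine with hquad to get 1 = 0
    exfalso
    have : (1 : F) = 0 := by linear_combination hquad - hx - x ^ 2 * h2
    simp at this
  
/-- From `g(x) = c` (with `g(x) = x^(q-1) + (x+1)^(q-1)`), derive the linear relation
`x^q = c x^2 + (c+1) x`. -/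
lemma g_to_lin {m : ℕ} (h2 : (2 : F) = 0) {x c : F} (hx0 : x ≠ 0) (hx1 : x + 1 ≠ 0)
    (h : x ^ (2 ^ m - 1) + (x + 1) ^ (2 ^ m - 1) = c) :
    x ^ (2 ^ m) = c * x ^ 2 + (c + 1) * x := by
  have hq1 : 1 ≤ 2 ^ m := Nat.one_le_two_pow
  have e1 : x ^ (2 ^ m - 1) * x = x ^ (2 ^ m) := by
    rw [← pow_succ, Nat.sub_add_cancel hq1]
  have e2 : (x + 1) ^ (2 ^ m - 1) * (x + 1) = (x + 1) ^ (2 ^ m) := by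
    rw [← pow_succ, Nat.sub_add_cancel hq1]
  have hfrob : (x + 1) ^ (2 ^ m) = x ^ (2 ^ m) + 1 := by
    have := add_pow_char_pow (R := F) x 1 2 m
    simpa using this
  linear_combination (x * (x + 1)) * h - (x + 1) * e1 - x * e2 - x * hfrob +
    (-x - x ^ (2 ^ m) * x) * h2

/-- The linear relation is preserved by `x ↦ x + 1`. -/
lemma lin_succ {m : ℕ} (h2 : (2 : F) = 0) {x c : F}
    (hx : x ^ (2 ^ m) = c * x ^ 2 + (c + 1) * x) :
    (x + 1) ^ (2 ^ m) = c * (x + 1) ^ 2 + (c + 1) * (x + 1) := by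
  have hfrob : (x + 1) ^ (2 ^ m) = x ^ (2 ^ m) + 1 := by
    have := add_pow_char_pow (R := F) x 1 2 m
    simpa using this
  linear_combination hfrob + hx - (c * x + c) * h2

/-- Unit-circle cubic relation: any nonzero solution of the linear relation satisfies
an explicit cubic equation. -/
lemma cubic_rel {m : ℕ} (hK : ∀ z : F, z ^ (2 ^ m * 2 ^ m) = z) {z c : F} (hz0 : z ≠ 0)
    (hz : z ^ (2 ^ m) = c * z ^ 2 + (c + 1) * z) :
    (c ^ (2 ^ m) * (c * z ^ 2 + (c + 1) * z) + (c + 1) ^ (2 ^ m)) * (c * z + c + 1) = 1 := by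
  set q := 2 ^ m with hqdef
  have hq1 : 1 ≤ q := Nat.one_le_two_pow
  have e1 : z ^ (q - 1) * z = z ^ q := by rw [← pow_succ, Nat.sub_add_cancel hq1]
  have e2 : z ^ (q - 1) = c * z + c + 1 := by
    apply mul_right_cancel₀ hz0
    rw [e1, hz]; ring
  have key : z ^ ((q - 1) * (q + 1)) = 1 := by
    have hzq : z ^ (q + 1) ≠ 0 := pow_ne_zero _ hz0
    apply mul_right_cancel₀ hzq
    rw [one_mul, ← pow_add]
    have harith : (q - 1) * (q + 1) + (q + 1) = q * q + q := by
      have h' : q - 1 + 1 = q := Nat.sub_add_cancel hq1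
      calc (q - 1) * (q + 1) + (q + 1) = ((q - 1) + 1) * (q + 1) := by ring
      _ = q * (q + 1) := by rw [h']
      _ = q * q + q := by ring
    rw [harith, pow_add, hK z, pow_succ]
    ring
  have e6 : (c * z + c + 1) ^ (q + 1) = 1 := by
    rw [← e2, ← pow_mul, key]
  have hfrob : (c * z + c + 1) ^ q = c ^ q * z ^ q + (c + 1) ^ q := by
    have h1 : c * z + c + 1 = c * z + (c + 1) := by ring
    rw [h1, hqdef, add_pow_char_pow, mul_pow]
  calc (c ^ q * (c * z ^ 2 + (c + 1) * z) + (c + 1) ^ q) * (c * z + c + 1)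
      = (c ^ q * z ^ q + (c + 1) ^ q) * (c * z + c + 1) := by rw [hz]
    _ = (c * z + c + 1) ^ q * (c * z + c + 1) := by rw [hfrob]
    _ = (c * z + c + 1) ^ (q + 1) := by rw [pow_succ]
    _ = 1 := e6

/-- Key step: two solutions of the linear relation, all four of `x, x+1, y, y+1`
nonzero, force `(x+y)(x+y+1) = 0`. -/
lemma key_lemma {m : ℕ} (h2 : (2 : F) = 0) (hK : ∀ z : F, z ^ (2 ^ m * 2 ^ m) = z)
    {x y c : F} (hc : c ≠ 0) (hx0 : x ≠ 0) (hx1 : x + 1 ≠ 0) (hy0 : y ≠ 0) (hy1 : y + 1 ≠ 0)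
    (hx : x ^ (2 ^ m) = c * x ^ 2 + (c + 1) * x)
    (hy : y ^ (2 ^ m) = c * y ^ 2 + (c + 1) * y) :
    (x + y) * (x + y + 1) = 0 := by
  have hx' := lin_succ h2 hx
  have hy' := lin_succ h2 hy
  have R1 := cubic_rel hK hx0 hx
  have R2 := cubic_rel hK hx1 hx'
  have R3 := cubic_rel hK hy0 hy
  have R4 := cubic_rel hK hy1 hy'
  have hbig : c ^ (2 ^ m) * c ^ 2 * ((x + y) * (x + y + 1)) = 0 := by
    linear_combination R1 + R2 + R3 + R4 +
      (2 - 2 * (c+1)^(2^m) - c^(2^m) - 3*c*(c+1)^(2^m) - 4*c*c^(2^m) - 4*c^2*c^(2^m)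
        - y*c^(2^m) - y*c*(c+1)^(2^m) - 4*y*c*c^(2^m) - 4*y*c^2*c^(2^m)
        - 2*y^2*c*c^(2^m) - 3*y^2*c^2*c^(2^m) - y^3*c^2*c^(2^m)
        - x*c^(2^m) - x*c*(c+1)^(2^m) - 4*x*c*c^(2^m) - 4*x*c^2*c^(2^m)
        + x*y*c^2*c^(2^m) - 2*x^2*c*c^(2^m) - 3*x^2*c^2*c^(2^m) - x^3*c^2*c^(2^m)) * h2
  have hne : c ^ (2 ^ m) * c ^ 2 ≠ 0 := mul_ne_zero (pow_ne_zero _ hc) (pow_ne_zero _ hc)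
  exact (mul_eq_zero.mp hbig).resolve_left hne

/-- `g(x) = 1` forces `x ∈ {0, 1}`. -/
lemma g_eq_one {m : ℕ} (h2 : (2 : F) = 0) (hK : ∀ z : F, z ^ (2 ^ m * 2 ^ m) = z)
    (h3 : 3 ∣ 2 ^ m - 1) {x : F}
    (h : x ^ (2 ^ m - 1) + (x + 1) ^ (2 ^ m - 1) = 1) : x = 0 ∨ x = 1 := by
  by_cases hx0 : x = 0
  · exact Or.inl hx0
  by_cases hx1 : x = 1
  · exact Or.inr hx1
  have hx1' : x + 1 ≠ 0 := by
    intro h0; apply hx1; linear_combination h0 - h2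
  have hlin := g_to_lin h2 hx0 hx1' h
  have hx2 : x ^ (2 ^ m) = x ^ 2 := by rw [hlin]; linear_combination x * h2
  exact cube_lemma h2 hK h3 x hx2

end Helpers

section Counting

variable {F : Type*} [Field F] [CharP F 2]

/-- Every solution pair of the `a = 1` boomerang system satisfies `y = x + 1`. -/
lemma sol_y_eq {m : ℕ} (h2 : (2 : F) = 0) (hK : ∀ z : F, z ^ (2 ^ m * 2 ^ m) = z)
    (h3 : 3 ∣ 2 ^ m - 1) (hm2 : 2 ≤ 2 ^ m) {x y b : F} (hb : b ≠ 0)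
    (e1 : x ^ (2 ^ m - 1) + y ^ (2 ^ m - 1) = b)
    (e2 : (x + 1) ^ (2 ^ m - 1) + (y + 1) ^ (2 ^ m - 1) = b) : y = x + 1 := by
  have hq1 : 2 ^ m - 1 ≠ 0 := by omega
  have honeone : (1 : F) + 1 = 0 := by linear_combination h2
  by_cases hx0 : x = 0
  · subst hx0
    rw [zero_pow hq1, zero_add] at e1
    rw [zero_add, one_pow] at e2
    have hgy : y ^ (2 ^ m - 1) + (y + 1) ^ (2 ^ m - 1) = 1 := by
      linear_combination e1 - e2 + (y + 1) ^ (2 ^ m - 1) * h2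
    rcases g_eq_one h2 hK h3 hgy with h0 | h1
    · exfalso; apply hb; rw [← e1, h0, zero_pow hq1]
    · rw [h1, zero_add]
  by_cases hx1 : x = 1
  · subst hx1
    rw [one_pow] at e1
    rw [honeone, zero_pow hq1, zero_add] at e2
    have hgy : y ^ (2 ^ m - 1) + (y + 1) ^ (2 ^ m - 1) = 1 := by
      linear_combination e2 - e1 + y ^ (2 ^ m - 1) * h2
    rcases g_eq_one h2 hK h3 hgy with h0 | h1
    · rw [h0]; linear_combination -h2
    · exfalso; apply hb; rw [← e1, h1, one_pow]; linear_combination h2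
  by_cases hy0 : y = 0
  · subst hy0
    rw [zero_pow hq1, add_zero] at e1
    rw [zero_add, one_pow] at e2
    have hgx : x ^ (2 ^ m - 1) + (x + 1) ^ (2 ^ m - 1) = 1 := by
      linear_combination e1 - e2 + (x + 1) ^ (2 ^ m - 1) * h2
    rcases g_eq_one h2 hK h3 hgx with h0 | h1
    · exact absurd h0 hx0
    · exact absurd h1 hx1
  by_cases hy1 : y = 1
  · subst hy1
    rw [one_pow] at e1
    rw [honeone, zero_pow hq1, add_zero] at e2
    have hgx : x ^ (2 ^ m - 1) + (x + 1) ^ (2 ^ m - 1) = 1 := by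
      linear_combination e2 - e1 + x ^ (2 ^ m - 1) * h2
    rcases g_eq_one h2 hK h3 hgx with h0 | h1
    · exact absurd h0 hx0
    · exact absurd h1 hx1
  -- generic case
  have hx1' : x + 1 ≠ 0 := by intro h0; apply hx1; linear_combination h0 - h2
  have hy1' : y + 1 ≠ 0 := by intro h0; apply hy1; linear_combination h0 - h2
  set c := x ^ (2 ^ m - 1) + (x + 1) ^ (2 ^ m - 1) with hc
  have hgy : y ^ (2 ^ m - 1) + (y + 1) ^ (2 ^ m - 1) = c := by
    rw [hc]
    linear_combination e1 + e2 + (b - x ^ (2 ^ m - 1) - (x + 1) ^ (2 ^ m - 1)) * h2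
  have hlinx := g_to_lin h2 hx0 hx1' hc.symm
  have hliny := g_to_lin h2 hy0 hy1' hgy
  have hq1' : 1 ≤ 2 ^ m := Nat.one_le_two_pow
  have epowx : x ^ (2 ^ m - 1) * x = x ^ (2 ^ m) := by
    rw [← pow_succ, Nat.sub_add_cancel hq1']
  have epowy : y ^ (2 ^ m - 1) * y = y ^ (2 ^ m) := by
    rw [← pow_succ, Nat.sub_add_cancel hq1']
  have hc0 : c ≠ 0 := by
    intro h0
    rw [h0] at hlinx hliny
    have hxq : x ^ (2 ^ m) = x := by rw [hlinx]; ring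
    have hyq : y ^ (2 ^ m) = y := by rw [hliny]; ring
    have hx1p : x ^ (2 ^ m - 1) = 1 := by
      apply mul_right_cancel₀ hx0; rw [epowx, hxq, one_mul]
    have hy1p : y ^ (2 ^ m - 1) = 1 := by
      apply mul_right_cancel₀ hy0; rw [epowy, hyq, one_mul]
    apply hb
    rw [← e1, hx1p, hy1p]; linear_combination h2
  have hc1 : c ≠ 1 := by
    intro h1
    rw [h1] at hlinx
    have hx2 : x ^ (2 ^ m) = x ^ 2 := by rw [hlinx]; linear_combination x * h2
    rcases cube_lemma h2 hK h3 x hx2 with h | h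
    · exact absurd h hx0
    · exact absurd h hx1
  have hkey := key_lemma h2 hK hc0 hx0 hx1' hy0 hy1' hlinx hliny
  rcases mul_eq_zero.mp hkey with hs | hs
  · exfalso
    have hxy : x = y := by linear_combination hs - y * h2
    apply hb
    rw [← e1, hxy]
    linear_combination y ^ (2 ^ m - 1) * h2
  · linear_combination hs - (x + 1) * h2

end Counting

theorem boomerang_uniformity_even (m : ℕ) (hm : 1 < m) (hme : Even m) (F : Type*) [Field F]
    [Fintype F] [CharP F 2] (hF : Fintype.card F = 2 ^ (2 * m)) :
    sSup {k : ℕ | ∃ a b : F, a ≠ 0 ∧ b ≠ 0 ∧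
      k = Nat.card {p : F × F // p.1 ^ (2 ^ m - 1) + p.2 ^ (2 ^ m - 1) = b ∧
        (p.1 + a) ^ (2 ^ m - 1) + (p.2 + a) ^ (2 ^ m - 1) = b}} = 2 := by
  classical
  have h2 : (2 : F) = 0 := by
    have := CharP.cast_eq_zero F 2
    simpa using this
  have hK : ∀ z : F, z ^ (2 ^ m * 2 ^ m) = z := by
    intro z
    have := FiniteField.pow_card z
    rwa [hF, two_mul, pow_add] at this
  have h3 : 3 ∣ 2 ^ m - 1 := by
    obtain ⟨j, hj⟩ := hme
    have h4j : 2 ^ m = 4 ^ j := by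
      rw [hj, pow_add, ← mul_pow]; norm_num
    have := Nat.sub_dvd_pow_sub_pow 4 1 j
    simpa [h4j] using this
  have hm2 : 2 ≤ 2 ^ m := by
    calc 2 = 2 ^ 1 := (pow_one 2).symm
    _ ≤ 2 ^ m := Nat.pow_le_pow_right (by norm_num) (le_of_lt hm)
  have hq1 : 2 ^ m - 1 ≠ 0 := by omega
  have honeone : (1 : F) + 1 = 0 := by linear_combination h2
  -- count of solutions of g(x) = b is at most 2
  have count_W_le : ∀ b : F, b ≠ 0 →
      Nat.card {x : F // x ^ (2 ^ m - 1) + (x + 1) ^ (2 ^ m - 1) = b} ≤ 2 := by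
    intro b hb
    by_contra hcon
    push_neg at hcon
    rw [Nat.card_eq_fintype_card] at hcon
    obtain ⟨⟨x1, hx1⟩, ⟨x2, hx2⟩, ⟨x3, hx3⟩, h12, h13, h23⟩ :=
      Fintype.two_lt_card_iff.mp hcon
    have ne12 : x1 ≠ x2 := fun h => h12 (Subtype.ext h)
    have ne13 : x1 ≠ x3 := fun h => h13 (Subtype.ext h)
    have ne23 : x2 ≠ x3 := fun h => h23 (Subtype.ext h)
    by_cases hb1 : b = 1
    · subst hb1
      rcases g_eq_one h2 hK h3 hx1 with rfl | rfl <;>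
        rcases g_eq_one h2 hK h3 hx2 with rfl | rfl <;>
          rcases g_eq_one h2 hK h3 hx3 with rfl | rfl <;> simp_all
    · -- each xi ∉ {0, 1}
      have hprop : ∀ x : F, x ^ (2 ^ m - 1) + (x + 1) ^ (2 ^ m - 1) = b →
          x ≠ 0 ∧ x ≠ 1 ∧ x + 1 ≠ 0 := by
        intro x hx
        have hx0 : x ≠ 0 := by
          rintro rfl
          rw [zero_pow hq1, zero_add, zero_add, one_pow] at hx
          exact hb1 hx.symm
        have hx1e : x ≠ 1 := by
          rintro rfl
          rw [one_pow, honeone, zero_pow hq1, add_zero] at hx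
          exact hb1 hx.symm
        exact ⟨hx0, hx1e, fun h0 => hx1e (by linear_combination h0 - h2)⟩
      obtain ⟨h10, h11, h1s⟩ := hprop x1 hx1
      obtain ⟨h20, h21, h2s⟩ := hprop x2 hx2
      obtain ⟨h30, h31, h3s⟩ := hprop x3 hx3
      have hlin1 := g_to_lin h2 h10 h1s hx1
      have hlin2 := g_to_lin h2 h20 h2s hx2
      have hlin3 := g_to_lin h2 h30 h3s hx3
      have hpair : ∀ u v : F, u ≠ 0 → u + 1 ≠ 0 → v ≠ 0 → v + 1 ≠ 0 → u ≠ v →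
          u ^ (2 ^ m) = b * u ^ 2 + (b + 1) * u →
          v ^ (2 ^ m) = b * v ^ 2 + (b + 1) * v → u + v = 1 := by
        intro u v hu0 hu1 hv0 hv1 huv hu hv
        have hk := key_lemma h2 hK hb hu0 hu1 hv0 hv1 hu hv
        rcases mul_eq_zero.mp hk with hs | hs
        · exfalso; apply huv; linear_combination hs - v * h2
        · linear_combination hs - h2
      have s12 : x1 + x2 = 1 := hpair x1 x2 h10 h1s h20 h2s ne12 hlin1 hlin2
      have s13 : x1 + x3 = 1 := hpair x1 x3 h10 h1s h30 h3s ne13 hlin1 hlin3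
      exact ne23 (by linear_combination s12 - s13)
  -- the solution set for (1,1) is exactly {(0,1), (1,0)}
  have hset : {p : F × F | p.1 ^ (2 ^ m - 1) + p.2 ^ (2 ^ m - 1) = (1 : F) ∧
      (p.1 + 1) ^ (2 ^ m - 1) + (p.2 + 1) ^ (2 ^ m - 1) = 1} =
      {((0 : F), (1 : F)), ((1 : F), (0 : F))} := by
    ext ⟨x, y⟩
    simp only [Set.mem_setOf_eq, Set.mem_insert_iff, Set.mem_singleton_iff, Prod.mk.injEq]
    constructor
    · rintro ⟨e1, e2⟩
      have hy := sol_y_eq h2 hK h3 hm2 one_ne_zero e1 e2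
      subst hy
      rcases g_eq_one h2 hK h3 e1 with rfl | rfl
      · left; exact ⟨rfl, by rw [zero_add]⟩
      · right; exact ⟨rfl, by linear_combination h2⟩
    · rintro (⟨rfl, rfl⟩ | ⟨rfl, rfl⟩)
      · constructor
        · rw [zero_pow hq1, one_pow, zero_add]
        · rw [zero_add, one_pow, honeone, zero_pow hq1, add_zero]
      · constructor
        · rw [zero_pow hq1, one_pow, add_zero]
        · rw [honeone, zero_pow hq1, zero_add, zero_add, one_pow]
  apply IsGreatest.csSup_eq
  constructor
  · -- 2 is attained at a = b = 1
    refine ⟨1, 1, one_ne_zero, one_ne_zero, ?_⟩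
    have : Nat.card {p : F × F // p.1 ^ (2 ^ m - 1) + p.2 ^ (2 ^ m - 1) = (1 : F) ∧
        (p.1 + 1) ^ (2 ^ m - 1) + (p.2 + 1) ^ (2 ^ m - 1) = 1} =
        ({((0 : F), (1 : F)), ((1 : F), (0 : F))} : Set (F × F)).ncard := by
      rw [← hset]
      exact Nat.card_coe_set_eq _
    rw [this, Set.ncard_pair (by simp)]
  · -- every value is at most 2
    rintro k ⟨a, b, ha, hb, rfl⟩
    set b' : F := (a⁻¹) ^ (2 ^ m - 1) * b with hb'def
    have hb'0 : b' ≠ 0 := mul_ne_zero (pow_ne_zero _ (inv_ne_zero ha)) hb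
    -- transfer solutions of (a,b) to solutions of (1,b')
    have transfer : ∀ x y : F,
        (x ^ (2 ^ m - 1) + y ^ (2 ^ m - 1) = b ∧
          (x + a) ^ (2 ^ m - 1) + (y + a) ^ (2 ^ m - 1) = b) →
        ((a⁻¹ * x) ^ (2 ^ m - 1) + (a⁻¹ * y) ^ (2 ^ m - 1) = b' ∧
          (a⁻¹ * x + 1) ^ (2 ^ m - 1) + (a⁻¹ * y + 1) ^ (2 ^ m - 1) = b') := by
      rintro x y ⟨f1, f2⟩
      have hxa : a⁻¹ * x + 1 = a⁻¹ * (x + a) := by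
        field_simp
      have hya : a⁻¹ * y + 1 = a⁻¹ * (y + a) := by
        field_simp
      constructor
      · rw [mul_pow, mul_pow, ← mul_add, f1, hb'def]
      · rw [hxa, hya, mul_pow, mul_pow, ← mul_add, f2, hb'def]
    have hyrel : ∀ p : F × F,
        (p.1 ^ (2 ^ m - 1) + p.2 ^ (2 ^ m - 1) = b ∧
          (p.1 + a) ^ (2 ^ m - 1) + (p.2 + a) ^ (2 ^ m - 1) = b) → p.2 = p.1 + a := by
      rintro ⟨x, y⟩ hp
      obtain ⟨g1, g2⟩ := transfer x y hp
      have hy' := sol_y_eq h2 hK h3 hm2 hb'0 g1 g2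
      have : a * (a⁻¹ * y) = a * (a⁻¹ * x + 1) := by rw [hy']
      rw [mul_inv_cancel_left₀ ha, mul_add, mul_inv_cancel_left₀ ha, mul_one] at this
      exact this
    -- equivalence with W_{b'}
    have hequiv : {p : F × F // p.1 ^ (2 ^ m - 1) + p.2 ^ (2 ^ m - 1) = b ∧
        (p.1 + a) ^ (2 ^ m - 1) + (p.2 + a) ^ (2 ^ m - 1) = b} ≃
        {x : F // x ^ (2 ^ m - 1) + (x + 1) ^ (2 ^ m - 1) = b'} := by
      refine ⟨fun p => ⟨a⁻¹ * p.1.1, ?_⟩, fun t => ⟨(a * t.1, a * t.1 + a), ?_⟩, ?_, ?_⟩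
      · obtain ⟨g1, g2⟩ := transfer p.1.1 p.1.2 p.2
        have hy : (p.1).2 = (p.1).1 + a := hyrel p.1 p.2
        have : a⁻¹ * (p.1).2 = a⁻¹ * (p.1).1 + 1 := by
          rw [hy, mul_add, inv_mul_cancel₀ ha]
        rwa [this] at g1
      · obtain ⟨t, ht⟩ := t
        dsimp only
        constructor
        · have h1 : a * t + a = a * (t + 1) := by ring
          rw [h1, mul_pow, mul_pow, ← mul_add, ht, hb'def]
          rw [← mul_assoc, ← mul_pow, mul_inv_cancel₀ ha, one_pow, one_mul]
        · have h1 : a * t + a + a = a * t := by linear_combination a * h2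
          have h2' : a * t + a = a * (t + 1) := by ring
          rw [h1, h2', mul_pow, mul_pow, ← mul_add, add_comm ((t+1)^(2^m-1)), ht, hb'def]
          rw [← mul_assoc, ← mul_pow, mul_inv_cancel₀ ha, one_pow, one_mul]
      · rintro ⟨⟨x, y⟩, hp⟩
        have hy : y = x + a := hyrel (x, y) hp
        apply Subtype.ext
        simp only [Prod.mk.injEq]
        constructor
        · exact mul_inv_cancel_left₀ ha x
        · rw [mul_inv_cancel_left₀ ha x, hy]
      · rintro ⟨t, ht⟩
        apply Subtype.ext
        simp only
        exact inv_mul_cancel_left₀ ha t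
    rw [Nat.card_congr hequiv]
    exact count_W_le b' hb'0
end

section
/- Let m > 1 be an even integer, let F be the finite field with 2^(2m) elements, and let f(x) = x^(2^m - 1). Then the number of pairs (x,y) ∈ F × F satisfying f(x) + f(y) = 1 and f(x+1) + f(y+1) = 1 is exactly 2 (the solutions being (0,1) and (1,0)); that is, the BCT entry B_f(1,1) equals 2. -/
theorem bct_one_one_even (m : ℕ) (hm : 1 < m) (hme : Even m) (F : Type*) [Field F] [Fintype F]
    [CharP F 2] (hF : Fintype.card F = 2 ^ (2 * m)) :
    Nat.card {p : F × F // p.1 ^ (2 ^ m - 1) + p.2 ^ (2 ^ m - 1) = 1 ∧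
      (p.1 + 1) ^ (2 ^ m - 1) + (p.2 + 1) ^ (2 ^ m - 1) = 1} = 2 := by
  obtain ⟨k, hk⟩ := hme
  have h2F : (2 : F) = 0 := by exact_mod_cast CharP.cast_eq_zero F 2
  have hq1 : (1:ℕ) ≤ 2^m := Nat.one_le_two_pow
  have h4le : (4:ℕ) ≤ 2^m := by
    calc (4:ℕ) = 2^2 := rfl
    _ ≤ 2^m := Nat.pow_le_pow_right (by norm_num) hm
  have hn : 2^m - 1 ≠ 0 := by omega
  have harith : (2^m - 1) * (2^m + 1) = 2^(2*m) - 1 := by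
    obtain ⟨b, hb⟩ : ∃ b, 2^m = b + 1 := ⟨2^m - 1, by omega⟩
    have h2 : 2^(2*m) = (b+1) * (b+1) := by rw [two_mul, pow_add, hb]
    rw [hb, h2, Nat.add_sub_cancel]
    exact Nat.eq_sub_of_add_eq (by ring)
  have hcirc : ∀ z : F, z ≠ 0 → (z ^ (2^m-1)) ^ (2^m + 1) = 1 := by
    intro z hz
    rw [← pow_mul, harith, ← hF]
    exact FiniteField.pow_card_sub_one_eq_one z hz
  have key : ∀ x y : F, x ≠ 0 → y ≠ 0 → x ^ (2^m - 1) + y ^ (2^m - 1) = 1 → False := by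
    intro x y hx hy hxy
    set u := x ^ (2^m-1) with hu
    have hu1 : u ^ (2^m+1) = 1 := hcirc x hx
    have hveq : y ^ (2^m-1) = u + 1 := by linear_combination hxy - u * h2F
    have hv1 : (u + 1) ^ (2^m+1) = 1 := by rw [← hveq]; exact hcirc y hy
    have hfr : (u+1)^(2^m) = u^(2^m) + 1 := by
      haveI : Fact (Nat.Prime 2) := ⟨Nat.prime_two⟩
      simpa using add_pow_char_pow u (1:F) 2 m
    have h3 : u^(2^m) = u + 1 := by
      have hexp : (u+1)^(2^m+1) = (u^(2^m) + 1) * (u + 1) := by rw [pow_succ, hfr]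
      rw [hexp] at hv1
      have hu1' : u^(2^m) * u = 1 := by rw [← pow_succ]; exact hu1
      linear_combination hv1 - hu1' - (u + 1) * h2F
    have hcube : u^3 = 1 := by
      have h4 : u * (u + 1) = 1 := by
        have : u^(2^m) * u = 1 := by rw [← pow_succ]; exact hu1
        rw [h3] at this
        linear_combination this
      linear_combination (u + 1) * h4 - u * u * h2F
    have hpow4 : ∀ j, u ^ (4^j) = u := by
      intro j
      induction j with
      | zero => simp
      | succ j ih =>
        rw [pow_succ, pow_mul, ih]
        calc u^4 = u^3 * u := by ring
        _ = u := by rw [hcube, one_mul]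
    have hqm : (2:ℕ)^m = 4^k := by
      rw [hk, ← two_mul, pow_mul]
      norm_num
    have : u = u + 1 := by rw [← h3, hqm, hpow4]
    exact one_ne_zero (by linear_combination -this)
  have h11 : (1:F) + 1 = 0 := by linear_combination h2F
  have hset : {p : F × F | p.1 ^ (2 ^ m - 1) + p.2 ^ (2 ^ m - 1) = 1 ∧
      (p.1 + 1) ^ (2 ^ m - 1) + (p.2 + 1) ^ (2 ^ m - 1) = 1}
      = {((0:F),(1:F)), ((1:F),(0:F))} := by
    ext ⟨x, y⟩
    simp only [Set.mem_setOf_eq, Set.mem_insert_iff, Set.mem_singleton_iff, Prod.mk.injEq]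
    constructor
    · rintro ⟨h1, h2⟩
      by_cases hx : x = 0
      · subst hx
        left
        refine ⟨rfl, ?_⟩
        have h2' : (y+1)^(2^m-1) = 0 := by
          have : (0 + (1:F)) = 1 := by ring
          rw [this, one_pow] at h2
          linear_combination h2
        have hy1 : y + 1 = 0 := pow_eq_zero_iff hn |>.mp h2'
        linear_combination hy1 - h2F
      · by_cases hy : y = 0
        · subst hy
          right
          refine ⟨?_, rfl⟩
          have h2' : (x+1)^(2^m-1) = 0 := by
            have : (0 + (1:F)) = 1 := by ring
            rw [this, one_pow] at h2
            linear_combination h2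
          have hx1 : x + 1 = 0 := pow_eq_zero_iff hn |>.mp h2'
          linear_combination hx1 - h2F
        · exact absurd h1 (fun h => key x y hx hy h)
    · rintro (⟨rfl, rfl⟩ | ⟨rfl, rfl⟩) <;>
        constructor <;>
        simp [zero_pow hn, h11, one_pow]
  have hne : ((0:F),(1:F)) ≠ ((1:F),(0:F)) := by
    simp [Prod.ext_iff]
  calc Nat.card {p : F × F // p.1 ^ (2 ^ m - 1) + p.2 ^ (2 ^ m - 1) = 1 ∧
      (p.1 + 1) ^ (2 ^ m - 1) + (p.2 + 1) ^ (2 ^ m - 1) = 1}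
      = Nat.card (({((0:F),(1:F)), ((1:F),(0:F))} : Set (F × F))) :=
        Nat.card_congr (Equiv.setCongr hset)
    _ = 2 := by rw [Nat.card_coe_set_eq, Set.ncard_pair hne]
end

section
/- Let n ≥ 1 and let F be the finite field with 2^n elements. Let f : F → F be a bijection such that for all nonzero a, b ∈ F, the number of pairs (x,y) ∈ F × F satisfying f(x) + f(y) = b and f(x+a) + f(y+a) = b is at most 2 (i.e., the boomerang uniformity of f is at most 2). Then f is APN; that is, for every nonzero a ∈ F and every b ∈ F, the number of x ∈ F with f(x+a) + f(x) = b is at most 2. -/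
theorem boomerang_two_imp_apn (n : ℕ) (hn : 1 ≤ n) (F : Type*) [Field F] [Fintype F]
    [CharP F 2] (hF : Fintype.card F = 2 ^ n) (f : F → F) (hf : Function.Bijective f)
    (hboom : ∀ a b : F, a ≠ 0 → b ≠ 0 →
      Nat.card {p : F × F // f p.1 + f p.2 = b ∧ f (p.1 + a) + f (p.2 + a) = b} ≤ 2) :
    ∀ a b : F, a ≠ 0 → Nat.card {x : F // f (x + a) + f x = b} ≤ 2 := by
  intro a b ha
  by_cases hb : b = 0
  · subst hb
    have : IsEmpty {x : F // f (x + a) + f x = 0} := by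
      constructor
      rintro ⟨x, hx⟩
      have h1 : f (x + a) = f x := by linear_combination hx - CharTwo.add_self_eq_zero (f x)
      have h2 := hf.1 h1
      apply ha
      linear_combination h2
    simp [Nat.card_of_isEmpty]
  · refine le_trans ?_ (hboom a b ha hb)
    apply Nat.card_le_card_of_injective
      (fun x : {x : F // f (x + a) + f x = b} =>
        (⟨(x.1 + a, x.1), ⟨x.2, by
          have h2 : (x.1 : F) + a + a = x.1 := by
            rw [add_assoc, CharTwo.add_self_eq_zero, add_zero]
          rw [h2, add_comm]
          exact x.2⟩⟩ :
          {p : F × F // f p.1 + f p.2 = b ∧ f (p.1 + a) + f (p.2 + a) = b}))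
    intro x y hxy
    have : (x.1 + a, x.1) = (y.1 + a, y.1) := congrArg Subtype.val hxy
    exact Subtype.ext (congrArg Prod.snd this)
end

section
/- Let n ≥ 1 and let F be the finite field with 2^n elements. Let f : F → F be an APN function (not necessarily a permutation), i.e., for every nonzero a ∈ F and every b ∈ F, the number of x ∈ F with f(x+a) + f(x) = b is at most 2. Then for all nonzero a, b ∈ F, the BCT entry equals the DDT entry: the number of pairs (x,y) ∈ F × F satisfying f(x) + f(y) = b and f(x+a) + f(y+a) = b equals the number of x ∈ F with f(x+a) + f(x) = b. -/
theorem apn_bct_eq_ddt (n : ℕ) (hn : 1 ≤ n) (F : Type*) [Field F] [Fintype F] [CharP F 2]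
    (hF : Fintype.card F = 2 ^ n) (f : F → F)
    (hapn : ∀ a b : F, a ≠ 0 → Nat.card {x : F // f (x + a) + f x = b} ≤ 2) :
    ∀ a b : F, a ≠ 0 → b ≠ 0 →
      Nat.card {p : F × F // f p.1 + f p.2 = b ∧ f (p.1 + a) + f (p.2 + a) = b} =
        Nat.card {x : F // f (x + a) + f x = b} := by
  intro a b ha hb
  classical
  have h2 : (2 : F) = 0 := by exact_mod_cast CharP.cast_eq_zero F 2
  have hxx : ∀ x : F, x + x = 0 := by
    intro x
    have : (2 : F) * x = 0 := by rw [h2, zero_mul]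
    rwa [two_mul] at this
  have haa : ∀ x : F, x + a + a = x := by
    intro x; rw [add_assoc, hxx a, add_zero]
  -- key: any BCT pair has y = x + a
  have key : ∀ x y : F, f x + f y = b → f (x + a) + f (y + a) = b → y = x + a := by
    intro x y h1 h2'
    set c := f (x + a) + f x with hc
    by_contra hy
    have hyx : y ≠ x := by
      intro h; rw [h, hxx] at h1; exact hb h1.symm
    -- x, x+a, y are three distinct solutions of f(z+a)+f z = c
    have hx : f (x + a) + f x = c := rfl
    have hxa : f (x + a + a) + f (x + a) = c := by
      rw [haa, hc, add_comm]
    have hysol : f (y + a) + f y = c := by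
      have : f (y + a) + f y + (f (x + a) + f x) = (f (x + a) + f (y + a)) + (f x + f y) := by ring
      have h0 : f (y + a) + f y + (f (x + a) + f x) = 0 := by
        rw [this, h2', h1, hxx]
      have := congrArg (· + (f (x + a) + f x)) h0
      simpa [add_assoc, hxx, hc] using this
    have hcard : 3 ≤ Nat.card {z : F // f (z + a) + f z = c} := by
      rw [Nat.card_eq_fintype_card, Fintype.card_subtype]
      have hsub : ({x, x + a, y} : Finset F) ⊆ Finset.univ.filter (fun z => f (z + a) + f z = c) := by
        intro z hz
        simp only [Finset.mem_insert, Finset.mem_singleton] at hz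
        simp only [Finset.mem_filter, Finset.mem_univ, true_and]
        rcases hz with rfl | rfl | rfl
        · exact hx
        · exact hxa
        · exact hysol
      have h3 : ({x, x + a, y} : Finset F).card = 3 := by
        rw [Finset.card_insert_of_notMem, Finset.card_insert_of_notMem,
          Finset.card_singleton]
        · simp only [Finset.mem_singleton]
          exact fun h => hy h.symm
        · simp only [Finset.mem_insert, Finset.mem_singleton]
          push_neg
          exact ⟨fun h => ha (left_eq_add.mp h), hyx.symm⟩
      calc 3 = ({x, x + a, y} : Finset F).card := h3.symm
        _ ≤ _ := Finset.card_le_card hsub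
    have := hapn a c ha
    omega
  refine Nat.card_congr ?_
  refine ⟨fun p => ⟨p.1.1, ?_⟩, fun x => ⟨(x.1, x.1 + a), ?_, ?_⟩, ?_, ?_⟩
  · have hy := key p.1.1 p.1.2 p.2.1 p.2.2
    have h1 := p.2.1
    rw [hy, add_comm] at h1
    exact h1
  · show f x.1 + f (x.1 + a) = b
    rw [add_comm (f x.1)]; exact x.2
  · show f (x.1 + a) + f (x.1 + a + a) = b
    rw [haa]; exact x.2
  · intro p
    have hy := key p.1.1 p.1.2 p.2.1 p.2.2
    apply Subtype.ext
    exact Prod.ext rfl hy.symm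
  · intro x; rfl
end

section
/- Let n ≥ 2 and let F be the finite field with 2^n elements. Let f : F → F be an APN function (not necessarily a permutation), i.e., for every nonzero a ∈ F and every b ∈ F, the number of x ∈ F with f(x+a) + f(x) = b is at most 2. Then the boomerang uniformity of f equals 2; that is, the maximum over all nonzero a, b ∈ F of the number of pairs (x,y) ∈ F × F satisfying f(x) + f(y) = b and f(x+a) + f(y+a) = b is exactly 2. -/
open Finset

theorem apn_boomerang_two (n : ℕ) (hn : 2 ≤ n) (F : Type*) [Field F] [Fintype F] [CharP F 2]
    (hF : Fintype.card F = 2 ^ n) (f : F → F)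
    (hapn : ∀ a b : F, a ≠ 0 → Nat.card {x : F // f (x + a) + f x = b} ≤ 2) :
    sSup {k : ℕ | ∃ a b : F, a ≠ 0 ∧ b ≠ 0 ∧
      k = Nat.card {p : F × F // f p.1 + f p.2 = b ∧ f (p.1 + a) + f (p.2 + a) = b}} = 2 := by
  classical
  have htwo : (2 : F) = 0 := CharTwo.two_eq_zero
  have haddself : ∀ x : F, x + x = 0 := CharTwo.add_self_eq_zero
  have hne_add : ∀ (x a : F), a ≠ 0 → x + a ≠ x := by
    intro x a ha h
    exact ha (add_left_cancel (show x + a = x + 0 by rw [add_zero]; exact h))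
  have hfilter : ∀ a c : F, a ≠ 0 →
      (univ.filter fun x : F => f (x + a) + f x = c).card ≤ 2 := by
    intro a c ha
    have h := hapn a c ha
    rwa [Nat.card_eq_fintype_card, Fintype.card_subtype] at h
  -- key: in any boomerang pair, y = x + a
  have key : ∀ a b : F, a ≠ 0 → b ≠ 0 → ∀ x y : F,
      f x + f y = b → f (x + a) + f (y + a) = b → y = x + a := by
    intro a b ha hb x y h1 h2
    set c := f (x + a) + f x with hc
    set T := univ.filter fun z : F => f (z + a) + f z = c with hT
    have hxT : x ∈ T := by simp [hT, hc]
    have hxaT : x + a ∈ T := by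
      simp only [hT, mem_filter, mem_univ, true_and]
      rw [add_assoc, haddself a, add_zero, add_comm]
    have hyT : y ∈ T := by
      simp only [hT, mem_filter, mem_univ, true_and, hc]
      linear_combination h1 + h2 + (b - f (x + a) - f x) * htwo
    have hyx : y ≠ x := by
      rintro rfl
      exact hb (by rw [← h1, haddself])
    by_contra hne
    have hsub : ({x, x + a, y} : Finset F) ⊆ T := by
      intro z hz
      simp only [mem_insert, mem_singleton] at hz
      rcases hz with rfl | rfl | rfl <;> assumption
    have hcard3 : ({x, x + a, y} : Finset F).card = 3 := by
      rw [card_insert_of_notMem, card_insert_of_notMem, card_singleton]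
      · simp only [mem_singleton]; exact fun h => hne h.symm
      · simp only [mem_insert, mem_singleton]
        push_neg
        exact ⟨(hne_add x a ha).symm, fun h => hyx h.symm⟩
    have := (Finset.card_le_card hsub).trans (hfilter a c ha)
    omega
  -- the pair count equals the derivative fiber count
  have hcardeq : ∀ a b : F, a ≠ 0 → b ≠ 0 →
      Nat.card {p : F × F // f p.1 + f p.2 = b ∧ f (p.1 + a) + f (p.2 + a) = b}
        = Nat.card {x : F // f (x + a) + f x = b} := by
    intro a b ha hb
    refine Nat.card_congr ⟨fun p => ⟨p.1.1, ?_⟩, fun x => ⟨(x.1, x.1 + a), ?_, ?_⟩, ?_, ?_⟩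
    · have h := key a b ha hb p.1.1 p.1.2 p.2.1 p.2.2
      rw [← h, add_comm]
      exact p.2.1
    · rw [add_comm]; exact x.2
    · rw [add_assoc, haddself a, add_zero]; exact x.2
    · intro p
      refine Subtype.ext (Prod.ext rfl ?_)
      exact (key a b ha hb p.1.1 p.1.2 p.2.1 p.2.2).symm
    · intro x
      exact Subtype.ext rfl
  set S := {k : ℕ | ∃ a b : F, a ≠ 0 ∧ b ≠ 0 ∧
      k = Nat.card {p : F × F // f p.1 + f p.2 = b ∧ f (p.1 + a) + f (p.2 + a) = b}} with hS
  have hbound : ∀ k ∈ S, k ≤ 2 := by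
    rintro k ⟨a, b, ha, hb, rfl⟩
    rw [hcardeq a b ha hb]
    exact hapn a b ha
  -- existence of a pair (a,b) achieving 2
  obtain ⟨a, ha⟩ := exists_ne (0 : F)
  have hx0 : ∃ x : F, f (x + a) + f x ≠ 0 := by
    by_contra h
    push_neg at h
    have heq : (univ.filter fun x : F => f (x + a) + f x = 0) = univ := by
      ext z; simp [h z]
    have h2 := hfilter a 0 ha
    rw [heq, card_univ, hF] at h2
    have h4 : 2 ^ 2 ≤ 2 ^ n := Nat.pow_le_pow_right (by norm_num) hn
    omega
  obtain ⟨x0, hb0⟩ := hx0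
  set b := f (x0 + a) + f x0 with hbdef
  have hfib2 : Nat.card {x : F // f (x + a) + f x = b} = 2 := by
    rw [Nat.card_eq_fintype_card, Fintype.card_subtype]
    refine le_antisymm (hfilter a b ha) ?_
    have hsub : ({x0, x0 + a} : Finset F) ⊆ univ.filter fun x : F => f (x + a) + f x = b := by
      intro z hz
      simp only [mem_insert, mem_singleton] at hz
      rcases hz with rfl | rfl
      · simp [hbdef]
      · simp only [mem_filter, mem_univ, true_and]
        rw [add_assoc, haddself a, add_zero, add_comm]
    have hc2 : ({x0, x0 + a} : Finset F).card = 2 := by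
      rw [card_insert_of_notMem (by simp only [mem_singleton]; exact (hne_add x0 a ha).symm),
        card_singleton]
    calc 2 = ({x0, x0 + a} : Finset F).card := hc2.symm
      _ ≤ _ := Finset.card_le_card hsub
  have hmem : 2 ∈ S := by
    refine ⟨a, b, ha, hb0, ?_⟩
    rw [hcardeq a b ha hb0, hfib2]
  exact le_antisymm (csSup_le ⟨2, hmem⟩ hbound) (le_csSup ⟨2, hbound⟩ hmem)
end

section
/- Let m ≥ 3 be an integer, let F be the finite field with 2^(2m) elements, and let f(x) = x^(2^m - 1) be the corresponding power map on F. Then the differential uniformity of f is strictly greater than the boomerang uniformity of f; that is, max{ Δ_f(a,b) : a ∈ F, a ≠ 0, b ∈ F } > max{ B_f(a,b) : a, b ∈ F, a ≠ 0, b ≠ 0 }. -/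
namespace DuGtBu
variable {F : Type*} [Field F]

lemma add2_eq_zero_iff [CharP F 2] {x y : F} : x + y = 0 ↔ x = y := by
  rw [add_eq_zero_iff_eq_neg, CharTwo.neg_eq]

lemma pow_qsub1_mul (q : ℕ) (hq : 2 ≤ q) (x : F) : x ^ (q-1) * x = x ^ q := by
  rw [← pow_succ]
  congr 1
  omega

lemma fzero_iff (q : ℕ) (hq : 2 ≤ q) {x : F} : x ^ (q-1) = 0 ↔ x = 0 :=
  pow_eq_zero_iff (by omega)

lemma K_pow (q : ℕ) (hq : 2 ≤ q) {s : F} (hs : s ^ q = s) (h0 : s ≠ 0) :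
    s ^ (q-1) = 1 := by
  have h := pow_qsub1_mul q hq s
  rw [hs] at h
  field_simp at h
  exact h

lemma ray_eq (q : ℕ) (hq : 2 ≤ q) {a s x : F} (hs : s ^ q = s) (hx : x = a * s) :
    x ^ (q-1) = 0 ∨ x ^ (q-1) = a ^ (q-1) := by
  rcases eq_or_ne s 0 with h0 | h0
  · left
    rw [hx, h0, mul_zero, zero_pow (by omega : q - 1 ≠ 0)]
  · right
    rw [hx, mul_pow, K_pow q hq hs h0, mul_one]

lemma K_div (q : ℕ) (hq : 2 ≤ q) {x y : F} (hx : x ≠ 0) (hy : y ≠ 0)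
    (h : x ^ (q-1) = y ^ (q-1)) : (x/y) ^ q = x/y := by
  have h1 : (x/y) ^ (q-1) = 1 := by
    rw [div_pow, h, div_self (pow_ne_zero _ hy)]
  have := pow_qsub1_mul q hq (x/y)
  rw [h1, one_mul] at this
  exact this.symm

lemma E' (q : ℕ) (hq : 2 ≤ q) [CharP F 2]
    (Hfrob : ∀ x y : F, (x+y)^q = x^q + y^q)
    {a x : F} (ha : a ≠ 0) (h : x ^ (q-1) = (x+a) ^ (q-1)) :
    x ^ (q-1) = a ^ (q-1) := by
  have h2c : (2:F) = 0 := CharTwo.two_eq_zero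
  by_cases hx0 : x = 0
  · exfalso
    rw [hx0, zero_pow (by omega : q - 1 ≠ 0), zero_add] at h
    exact ha ((fzero_iff q hq).mp h.symm)
  · have hxa0 : x + a ≠ 0 := by
      intro h0
      rw [h0, zero_pow (by omega : q - 1 ≠ 0)] at h
      exact hx0 ((fzero_iff q hq).mp h)
    set s := (x+a)/x with hsdef
    have hs : s ^ q = s := K_div q hq hxa0 hx0 h.symm
    have hxs : x + a = s * x := by
      rw [hsdef]; field_simp
    have hax : a = (s+1) * x := by linear_combination hxs - x * h2c
    have hs1 : s + 1 ≠ 0 := by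
      intro h0
      rw [h0, zero_mul] at hax
      exact ha hax
    have hxval : x = a * (s+1)⁻¹ := by
      rw [hax]; field_simp
    have hk : ((s+1)⁻¹) ^ q = (s+1)⁻¹ := by
      rw [inv_pow, Hfrob, hs, one_pow]
    rcases ray_eq q hq hk hxval with h0 | h1
    · exact absurd ((fzero_iff q hq).mp h0) hx0
    · exact h1

lemma lemD (q : ℕ) (hq : 2 ≤ q) [CharP F 2]
    (Hfrob : ∀ x y : F, (x+y)^q = x^q + y^q)
    {a x : F} (ha : a ≠ 0) (hx : x ≠ 0) (h : x ^ (q-1) = a ^ (q-1)) :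
    (x+a) ^ (q-1) = 0 ∨ (x+a) ^ (q-1) = a ^ (q-1) := by
  set s := x / a with hsdef
  have hs : s ^ q = s := K_div q hq hx ha h
  have hxa : x + a = a * (s + 1) := by
    rw [hsdef]; field_simp
  have hk : (s+1) ^ q = s + 1 := by rw [Hfrob, hs, one_pow]
  exact ray_eq q hq hk hxa

lemma C_uniq (q : ℕ) (hq : 2 ≤ q) [CharP F 2]
    (Hfrob : ∀ x y : F, (x+y)^q = x^q + y^q)
    {a x x' : F} (ha : a ≠ 0)
    (h1 : x ^ (q-1) = x' ^ (q-1)) (h2 : (x+a) ^ (q-1) = (x'+a) ^ (q-1))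
    (hguard : ¬(x ^ (q-1) = a ^ (q-1) ∧ (x+a) ^ (q-1) = a ^ (q-1))) : x = x' := by
  have h2c : (2:F) = 0 := CharTwo.two_eq_zero
  by_cases hx0 : x = 0
  · rw [hx0, zero_pow (by omega : q - 1 ≠ 0)] at h1
    rw [hx0, ((fzero_iff q hq).mp h1.symm)]
  by_cases hx'0 : x' = 0
  · exfalso
    rw [hx'0, zero_pow (by omega : q - 1 ≠ 0)] at h1
    exact hx0 ((fzero_iff q hq).mp h1)
  by_cases hxa0 : x + a = 0
  · rw [hxa0, zero_pow (by omega : q - 1 ≠ 0)] at h2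
    have hx'a0 : x' + a = 0 := (fzero_iff q hq).mp h2.symm
    have := hxa0.trans hx'a0.symm
    exact add_right_cancel this
  by_cases hx'a0 : x' + a = 0
  · exfalso
    rw [hx'a0, zero_pow (by omega : q - 1 ≠ 0)]  at h2
    exact hxa0 ((fzero_iff q hq).mp h2)
  -- main case
  set s := x' / x with hsdef
  have hs : s ^ q = s := K_div q hq hx'0 hx0 h1.symm
  have hx's : x' = s * x := by rw [hsdef]; field_simp
  set t := (x'+a)/(x+a) with htdef
  have ht : t ^ q = t := K_div q hq hx'a0 hxa0 h2.symm
  have hx'a : x' + a = t * (x + a) := by rw [htdef]; field_simp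
  rw [hx's] at hx'a
  have key : (s+t) * x = (t+1) * a := by
    linear_combination hx'a + (t*x - a) * h2c
  by_cases hst : s + t = 0
  · have h0 : (t+1) * a = 0 := by rw [← key, hst, zero_mul]
    have ht1 : t = 1 := add2_eq_zero_iff.mp ((mul_eq_zero.mp h0).resolve_right ha)
    rw [ht1, one_mul] at hx'a
    have : x' = s * x := hx's
    have hxx : x' + a = x + a := by rw [this]; exact hx'a
    exact (add_right_cancel hxx).symm
  · exfalso
    set r := (t+1)/(s+t) with hrdef
    have hr : x = a * r := by
      rw [hrdef]
      field_simp
      linear_combination key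
    have hk1 : (t+1) ^ q = t + 1 := by rw [Hfrob, ht, one_pow]
    have hk2 : (s+t) ^ q = s + t := by rw [Hfrob, hs, ht]
    have hrK : r ^ q = r := by rw [hrdef, div_pow, hk1, hk2]
    have hxα : x ^ (q-1) = a ^ (q-1) := by
      rcases ray_eq q hq hrK hr with h0 | h0
      · exact absurd ((fzero_iff q hq).mp h0) hx0
      · exact h0
    have hxaeq : x + a = a * (r + 1) := by rw [hr]; ring
    have hrK1 : (r+1) ^ q = r + 1 := by rw [Hfrob, hrK, one_pow]
    have hxaα : (x+a) ^ (q-1) = a ^ (q-1) := by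
      rcases ray_eq q hq hrK1 hxaeq with h0 | h0
      · exact absurd ((fzero_iff q hq).mp h0) hxa0
      · exact h0
    exact hguard ⟨hxα, hxaα⟩

lemma circle (q : ℕ) (hq : 2 ≤ q) [CharP F 2]
    (Hfrob : ∀ x y : F, (x+y)^q = x^q + y^q)
    {b w : F} (hb : b ≠ 0)
    (h1 : w ^ (q+1) = 1) (h2 : (w+b) ^ (q+1) = 1) :
    b ^ q * (w * (w + b)) = b := by
  have h2c : (2:F) = 0 := CharTwo.two_eq_zero
  have e1 : w ^ q * w = 1 := by rw [← pow_succ]; exact h1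
  have e2 : (w ^ q + b ^ q) * (w + b) = 1 := by
    rw [← Hfrob, ← pow_succ]; exact h2
  linear_combination w * e2 - w * e1 - b * e1 - b * h2c


section Sol

variable {F : Type*} [Field F] [CharP F 2] {q : ℕ} (hq : 2 ≤ q)
  (Hfrob : ∀ x y : F, (x+y)^q = x^q + y^q)
  (Hmu : ∀ x : F, x ≠ 0 → (x ^ (q-1)) ^ (q+1) = 1)
  {a b : F} (ha : a ≠ 0) (hb : b ≠ 0)

include hq Hfrob ha hb in
/-- For a solution (x,y), `f x ≠ f (x+a)`. -/
lemma sol_ne {x y : F}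
    (h1 : x ^ (q-1) + y ^ (q-1) = b)
    (h2 : (x+a) ^ (q-1) + (y+a) ^ (q-1) = b) :
    x ^ (q-1) ≠ (x+a) ^ (q-1) := by
  intro hE
  have h2c : (2:F) = 0 := CharTwo.two_eq_zero
  have hxα : x ^ (q-1) = a ^ (q-1) := E' q hq Hfrob ha hE
  have hE2 : y ^ (q-1) = (y+a) ^ (q-1) := by
    linear_combination h1 - h2 - hE
  have hyα : y ^ (q-1) = a ^ (q-1) := E' q hq Hfrob ha hE2
  apply hb
  have : b = a ^ (q-1) + a ^ (q-1) := by linear_combination hxα + hyα - h1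
  rw [CharTwo.add_self_eq_zero] at this
  exact this

include hq Hfrob Hmu ha hb in
/-- For a solution with u = f x ∉ {0, b} we get the circle equation. -/
lemma sol_circle {x y : F}
    (h1 : x ^ (q-1) + y ^ (q-1) = b)
    (hu0 : x ^ (q-1) ≠ 0) (hub : x ^ (q-1) ≠ b) :
    b ^ q * (x ^ (q-1) * (x ^ (q-1) + b)) = b := by
  have h2c : (2:F) = 0 := CharTwo.two_eq_zero
  have fy : y ^ (q-1) = x ^ (q-1) + b := by
    linear_combination h1 - x ^ (q-1) * h2c
  have hx0 : x ≠ 0 := fun h => hu0 (by rw [h, zero_pow (by omega : q - 1 ≠ 0)])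
  have hyb : x ^ (q-1) + b ≠ 0 := fun h => hub (add2_eq_zero_iff.mp h)
  have hy0 : y ≠ 0 := by
    intro h
    rw [h, zero_pow (by omega : q - 1 ≠ 0)] at fy
    exact hyb fy.symm
  have hu1 : (x ^ (q-1)) ^ (q+1) = 1 := Hmu x hx0
  have hub1 : (x ^ (q-1) + b) ^ (q+1) = 1 := by
    rw [← fy]; exact Hmu y hy0
  exact circle q hq Hfrob hb hu1 hub1

include hq Hfrob Hmu ha hb in
/-- Two solutions with the same u = f x coincide. -/
lemma sol_det {x y x' y' : F}
    (h1 : x ^ (q-1) + y ^ (q-1) = b)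
    (h2 : (x+a) ^ (q-1) + (y+a) ^ (q-1) = b)
    (h1' : x' ^ (q-1) + y' ^ (q-1) = b)
    (h2' : (x'+a) ^ (q-1) + (y'+a) ^ (q-1) = b)
    (huu : x ^ (q-1) = x' ^ (q-1)) : x = x' ∧ y = y' := by
  have h2c : (2:F) = 0 := CharTwo.two_eq_zero
  have hqne : q - 1 ≠ 0 := by omega
  have hα0 : a ^ (q-1) ≠ 0 := fun h => ha ((fzero_iff q hq).mp h)
  have fy : y ^ (q-1) = x ^ (q-1) + b := by
    linear_combination h1 - x ^ (q-1) * h2c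
  have fya : (y+a) ^ (q-1) = (x+a) ^ (q-1) + b := by
    linear_combination h2 - (x+a) ^ (q-1) * h2c
  have fy' : y' ^ (q-1) = x ^ (q-1) + b := by
    rw [huu]; linear_combination h1' - x' ^ (q-1) * h2c
  have fya' : (y'+a) ^ (q-1) = (x'+a) ^ (q-1) + b := by
    linear_combination h2' - (x'+a) ^ (q-1) * h2c
  have hne : x ^ (q-1) ≠ (x+a) ^ (q-1) := sol_ne hq Hfrob ha hb h1 h2
  have hne' : x' ^ (q-1) ≠ (x'+a) ^ (q-1) := sol_ne hq Hfrob ha hb h1' h2'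
  -- main claim : x = x'
  have hxx : x = x' := by
    by_cases hu0 : x ^ (q-1) = 0
    · rw [(fzero_iff q hq).mp hu0]
      rw [huu] at hu0
      rw [(fzero_iff q hq).mp hu0]
    by_cases hub : x ^ (q-1) = b
    · -- y = 0 = y', v = α + b on both sides
      have hy : y = 0 := by
        apply (fzero_iff q hq).mp
        rw [fy, hub, CharTwo.add_self_eq_zero]
      have hy' : y' = 0 := by
        apply (fzero_iff q hq).mp
        rw [fy', hub, CharTwo.add_self_eq_zero]
      have hva : (x+a) ^ (q-1) + b = a ^ (q-1) := by
        rw [← fya, hy, zero_add]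
      have hva' : (x'+a) ^ (q-1) + b = a ^ (q-1) := by
        rw [← fya', hy', zero_add]
      have hvv : (x+a) ^ (q-1) = (x'+a) ^ (q-1) :=
        add_right_cancel (hva.trans hva'.symm)
      refine C_uniq q hq Hfrob ha huu hvv ?_
      rintro ⟨g1, g2⟩
      exact hne (g1.trans g2.symm)
    by_cases huα : x ^ (q-1) = a ^ (q-1)
    · -- x = a, x' = a
      have hx0 : x ≠ 0 := fun h => hu0 (by rw [h, zero_pow hqne])
      have hx'0 : x' ≠ 0 := fun h => hu0 (by rw [huu, h, zero_pow hqne])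
      have hv : (x+a) ^ (q-1) = 0 := by
        rcases lemD q hq Hfrob ha hx0 huα with h | h
        · exact h
        · exact absurd (huα.trans h.symm) hne
      have hv' : (x'+a) ^ (q-1) = 0 := by
        rcases lemD q hq Hfrob ha hx'0 (huu.symm.trans huα) with h | h
        · exact h
        · exact absurd ((huu.symm.trans huα).trans h.symm) hne'
      have e1 : x + a = 0 := (fzero_iff q hq).mp hv
      have e2 : x' + a = 0 := (fzero_iff q hq).mp hv'
      exact add_right_cancel (e1.trans e2.symm)
    by_cases huαb : x ^ (q-1) + b = a ^ (q-1)
    · -- f y = α : y+a side vanishes, v = b on both sides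
      have hyα : y ^ (q-1) = a ^ (q-1) := fy.trans huαb
      have hy'α : y' ^ (q-1) = a ^ (q-1) := fy'.trans huαb
      have hy0 : y ≠ 0 := fun h => hα0 (by rw [← hyα, h, zero_pow hqne])
      have hy'0 : y' ≠ 0 := fun h => hα0 (by rw [← hy'α, h, zero_pow hqne])
      have hva : (y+a) ^ (q-1) = 0 := by
        rcases lemD q hq Hfrob ha hy0 hyα with h | h
        · exact h
        · -- (y+a)^(q-1) = α = y^(q-1) would give u = v
          exfalso
          apply hne
          have : (y+a) ^ (q-1) = y ^ (q-1) := h.trans hyα.symm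
          rw [fy, fya] at this
          exact (add_right_cancel this).symm
      have hva' : (y'+a) ^ (q-1) = 0 := by
        rcases lemD q hq Hfrob ha hy'0 hy'α with h | h
        · exact h
        · exfalso
          apply hne'
          have : (y'+a) ^ (q-1) = y' ^ (q-1) := h.trans hy'α.symm
          rw [fy', fya'] at this
          rw [huu] at this
          exact (add_right_cancel this).symm
      have hvv : (x+a) ^ (q-1) = (x'+a) ^ (q-1) := by
        rw [fya] at hva; rw [fya'] at hva'
        have := hva.trans hva'.symm
        exact add_right_cancel this
      refine C_uniq q hq Hfrob ha huu hvv ?_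
      rintro ⟨g1, g2⟩
      exact huα g1
    · -- generic case
      have hub' : x ^ (q-1) + b ≠ 0 := fun h => hub (add2_eq_zero_iff.mp h)
      have hv0 : (x+a) ^ (q-1) ≠ 0 := by
        intro h
        have e1 : x + a = 0 := (fzero_iff q hq).mp h
        have : x = a := add2_eq_zero_iff.mp e1
        exact huα (by rw [this])
      have hvb : (x+a) ^ (q-1) + b ≠ 0 := by
        intro h
        rw [← fya] at h
        have e1 : y + a = 0 := (fzero_iff q hq).mp h
        have : y = a := add2_eq_zero_iff.mp e1
        exact huαb (by rw [← fy, this])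
      have hv'0 : (x'+a) ^ (q-1) ≠ 0 := by
        intro h
        have e1 : x' + a = 0 := (fzero_iff q hq).mp h
        have : x' = a := add2_eq_zero_iff.mp e1
        exact huα (by rw [huu, this])
      have hv'b : (x'+a) ^ (q-1) + b ≠ 0 := by
        intro h
        rw [← fya'] at h
        have e1 : y' + a = 0 := (fzero_iff q hq).mp h
        have : y' = a := add2_eq_zero_iff.mp e1
        exact huαb (by rw [← fy', this])
      -- circle equations
      have cu : b ^ q * (x ^ (q-1) * (x ^ (q-1) + b)) = b :=
        sol_circle hq Hfrob Hmu ha hb h1 hu0 hub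
      have hbq : (b ^ q : F) ≠ 0 := pow_ne_zero _ hb
      -- circle for v : (x+a), (y+a) play roles of x,y
      have cv : b ^ q * ((x+a) ^ (q-1) * ((x+a) ^ (q-1) + b)) = b := by
        have hxa0 : x + a ≠ 0 := fun h => hv0 (by rw [h, zero_pow hqne])
        have hya0 : y + a ≠ 0 := by
          intro h
          rw [h, zero_pow hqne] at fya
          exact hvb fya.symm
        exact circle q hq Hfrob hb (Hmu _ hxa0) (by rw [← fya]; exact Hmu _ hya0)
      have cv' : b ^ q * ((x'+a) ^ (q-1) * ((x'+a) ^ (q-1) + b)) = b := by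
        have hxa0 : x' + a ≠ 0 := fun h => hv'0 (by rw [h, zero_pow hqne])
        have hya0 : y' + a ≠ 0 := by
          intro h
          rw [h, zero_pow hqne] at fya'
          exact hv'b fya'.symm
        exact circle q hq Hfrob hb (Hmu _ hxa0) (by rw [← fya']; exact Hmu _ hya0)
      have huv : (x+a) ^ (q-1) = x ^ (q-1) + b := by
        have e := mul_left_cancel₀ hbq (cu.trans cv.symm)
        have e2 : (x ^ (q-1) + (x+a) ^ (q-1)) * (x ^ (q-1) + (x+a) ^ (q-1) + b) = 0 := by
          linear_combination e + ((x+a)^(q-1)*(x+a)^(q-1) + x^(q-1)*(x+a)^(q-1)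
            + (x+a)^(q-1)*b) * h2c
        rcases mul_eq_zero.mp e2 with h | h
        · exact absurd (add2_eq_zero_iff.mp h) hne
        · linear_combination h - (x ^ (q-1) + b) * h2c
      have huv' : (x'+a) ^ (q-1) = x ^ (q-1) + b := by
        have e := mul_left_cancel₀ hbq (cu.trans cv'.symm)
        have e2 : (x ^ (q-1) + (x'+a) ^ (q-1)) * (x ^ (q-1) + (x'+a) ^ (q-1) + b) = 0 := by
          linear_combination e + ((x'+a)^(q-1)*(x'+a)^(q-1) + x^(q-1)*(x'+a)^(q-1)
            + (x'+a)^(q-1)*b) * h2c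
        rcases mul_eq_zero.mp e2 with h | h
        · exact absurd (huu.symm.trans (add2_eq_zero_iff.mp h)) hne'
        · linear_combination h - (x ^ (q-1) + b) * h2c
      refine C_uniq q hq Hfrob ha huu (huv.trans huv'.symm) ?_
      rintro ⟨g1, g2⟩
      exact huα g1
  -- now y = y'
  have hvv : (x+a) ^ (q-1) = (x'+a) ^ (q-1) := by rw [hxx]
  have hyy : y = y' := by
    refine C_uniq q hq Hfrob ha (fy.trans fy'.symm) ?_ ?_
    · rw [fya, fya', hvv]
    · rintro ⟨g1, g2⟩
      apply hne
      have : y ^ (q-1) = (y+a) ^ (q-1) := g1.trans g2.symm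
      rw [fy, fya] at this
      exact add_right_cancel this
  exact ⟨hxx, hyy⟩

end Sol

section Main

variable {F : Type*} [Field F] [Fintype F] [CharP F 2]

lemma BU_le_four {m : ℕ} (hm : 3 ≤ m) (hF : Fintype.card F = 2 ^ (2 * m))
    {a b : F} (ha : a ≠ 0) (hb : b ≠ 0) :
    Nat.card {p : F × F // p.1 ^ (2 ^ m - 1) + p.2 ^ (2 ^ m - 1) = b ∧
      (p.1 + a) ^ (2 ^ m - 1) + (p.2 + a) ^ (2 ^ m - 1) = b} ≤ 4 := by
  classical
  haveI := Fact.mk Nat.prime_two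
  have h2c : (2:F) = 0 := CharTwo.two_eq_zero
  set q := 2 ^ m with hqdef
  have hq : 2 ≤ q := by
    calc 2 = 2 ^ 1 := (pow_one 2).symm
    _ ≤ 2 ^ m := Nat.pow_le_pow_right (by norm_num) (by omega)
  have Hfrob : ∀ x y : F, (x+y)^q = x^q + y^q := fun x y => by
    rw [hqdef]; exact add_pow_char_pow x y 2 m
  have hcard : Fintype.card F = q ^ 2 := by
    rw [hF, hqdef, show 2 * m = m * 2 from mul_comm 2 m, pow_mul]
  have Hmu : ∀ x : F, x ≠ 0 → (x ^ (q-1)) ^ (q+1) = 1 := by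
    intro x hx
    rw [← pow_mul]
    have hexp : (q-1) * (q+1) = Fintype.card F - 1 := by
      rw [hcard]
      obtain ⟨n, hn⟩ : ∃ n, q = n + 2 := ⟨q - 2, by omega⟩
      rw [hn]
      have e2 : (n+2) ^ 2 = n*n + 4*n + 4 := by ring
      have e3 : (n+2-1) * ((n+2)+1) = n*n + 4*n + 3 := by
        have h4 : n+2-1 = n+1 := by omega
        rw [h4]; ring
      rw [e2, e3]
      generalize n*n = k
      omega
    rw [hexp]
    exact FiniteField.pow_card_sub_one_eq_one x hx
  have hbq : (b ^ q : F) ≠ 0 := pow_ne_zero _ hb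
  -- choose the candidate u0
  obtain ⟨u0, hu0⟩ : ∃ u0 : F, ∀ x y : F,
      (x ^ (q-1) + y ^ (q-1) = b ∧ (x+a) ^ (q-1) + (y+a) ^ (q-1) = b) →
      x ^ (q-1) = 0 ∨ x ^ (q-1) = b ∨ x ^ (q-1) = u0 ∨ x ^ (q-1) = u0 + b := by
    by_cases hex : ∃ p : F × F,
        (p.1 ^ (q-1) + p.2 ^ (q-1) = b ∧ (p.1+a) ^ (q-1) + (p.2+a) ^ (q-1) = b) ∧
        p.1 ^ (q-1) ≠ 0 ∧ p.1 ^ (q-1) ≠ b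
    · obtain ⟨p0, hp0, h01, h02⟩ := hex
      refine ⟨p0.1 ^ (q-1), ?_⟩
      intro x y hp
      by_cases c1 : x ^ (q-1) = 0
      · exact Or.inl c1
      by_cases c2 : x ^ (q-1) = b
      · exact Or.inr (Or.inl c2)
      have cu : b ^ q * (x ^ (q-1) * (x ^ (q-1) + b)) = b :=
        sol_circle hq Hfrob Hmu ha hb hp.1 c1 c2
      have cu0 : b ^ q * (p0.1 ^ (q-1) * (p0.1 ^ (q-1) + b)) = b :=
        sol_circle hq Hfrob Hmu ha hb hp0.1 h01 h02
      have e := mul_left_cancel₀ hbq (cu.trans cu0.symm)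
      have e2 : (x ^ (q-1) + p0.1 ^ (q-1)) * (x ^ (q-1) + p0.1 ^ (q-1) + b) = 0 := by
        linear_combination e + (p0.1^(q-1)*p0.1^(q-1) + x^(q-1)*p0.1^(q-1)
          + p0.1^(q-1)*b) * h2c
      rcases mul_eq_zero.mp e2 with h | h
      · exact Or.inr (Or.inr (Or.inl (add2_eq_zero_iff.mp h)))
      · refine Or.inr (Or.inr (Or.inr ?_))
        linear_combination h - (p0.1 ^ (q-1) + b) * h2c
    · push_neg at hex
      refine ⟨0, ?_⟩
      intro x y hp
      rcases eq_or_ne (x ^ (q-1)) 0 with h | h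
      · exact Or.inl h
      · exact Or.inr (Or.inl (hex (x, y) hp h))
  -- the injection into a 4-element finset
  set V : Finset F := insert 0 (insert b (insert u0 {u0 + b})) with hV
  have hmem : ∀ p : F × F,
      (p.1 ^ (q-1) + p.2 ^ (q-1) = b ∧ (p.1+a) ^ (q-1) + (p.2+a) ^ (q-1) = b) →
      p.1 ^ (q-1) ∈ V := by
    intro p hp
    rcases hu0 p.1 p.2 hp with h | h | h | h <;>
      simp [hV, h]
  have hle : Nat.card {p : F × F // p.1 ^ (q-1) + p.2 ^ (q-1) = b ∧
      (p.1 + a) ^ (q-1) + (p.2 + a) ^ (q-1) = b} ≤ Nat.card {u : F // u ∈ V} := by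
    refine Nat.card_le_card_of_injective
      (fun p => ⟨p.1.1 ^ (q-1), hmem p.1 p.2⟩) ?_
    rintro ⟨⟨x, y⟩, hx1, hx2⟩ ⟨⟨x', y'⟩, hx1', hx2'⟩ h
    simp only [Subtype.mk.injEq] at h
    obtain ⟨e1, e2⟩ := sol_det hq Hfrob Hmu ha hb hx1 hx2 hx1' hx2' h
    exact Subtype.ext (Prod.ext e1 e2)
  refine hle.trans ?_
  rw [Nat.card_eq_finsetCard]
  refine (Finset.card_insert_le _ _).trans ?_
  have : (insert b (insert u0 ({u0 + b} : Finset F))).card ≤ 3 := by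
    refine (Finset.card_insert_le _ _).trans ?_
    have : (insert u0 ({u0 + b} : Finset F)).card ≤ 2 := by
      refine (Finset.card_insert_le _ _).trans ?_
      simp
    omega
  omega

end Main

section Count

variable {F : Type*} [Field F] [Fintype F] [CharP F 2]

lemma DU_count {m : ℕ} (hm : 3 ≤ m) (hF : Fintype.card F = 2 ^ (2 * m)) :
    Nat.card {x : F // (x + 1) ^ (2 ^ m - 1) + x ^ (2 ^ m - 1) = 0} = 2 ^ m - 2 := by
  classical
  haveI := Fact.mk Nat.prime_two
  have h2c : (2:F) = 0 := CharTwo.two_eq_zero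
  set q := 2 ^ m with hqdef
  have hq : 2 ≤ q := by
    calc 2 = 2 ^ 1 := (pow_one 2).symm
    _ ≤ 2 ^ m := Nat.pow_le_pow_right (by norm_num) (by omega)
  have hqne : q - 1 ≠ 0 := by omega
  have Hfrob : ∀ x y : F, (x+y)^q = x^q + y^q := fun x y => by
    rw [hqdef]; exact add_pow_char_pow x y 2 m
  have hcard : Fintype.card F = q ^ 2 := by
    rw [hF, hqdef, show 2 * m = m * 2 from mul_comm 2 m, pow_mul]
  set K : Set F := {x : F | x ^ q = x} with hK
  -- upper bound on K
  have hKfin : K.Finite := Set.toFinite K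
  have hKcard_le : K.ncard ≤ q := by
    set p : Polynomial F := Polynomial.X ^ q - Polynomial.X with hp
    have hdeg : p.natDegree = q := by
      rw [hp]
      rw [Polynomial.natDegree_sub_eq_left_of_natDegree_lt] <;>
        simp [Polynomial.natDegree_X_pow, Polynomial.natDegree_X] <;> omega
    have hp0 : p ≠ 0 := by
      intro h
      rw [h] at hdeg
      simp at hdeg
      omega
    have hsub : K ⊆ ↑p.roots.toFinset := by
      intro x hx
      simp only [Finset.coe_sort_coe, Multiset.mem_toFinset, Finset.mem_coe]
      rw [Polynomial.mem_roots hp0]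
      simp only [Polynomial.IsRoot.def, hp, Polynomial.eval_sub, Polynomial.eval_pow,
        Polynomial.eval_X]
      rw [sub_eq_zero]
      exact hx
    calc K.ncard ≤ (↑p.roots.toFinset : Set F).ncard := Set.ncard_le_ncard hsub (Set.toFinite _)
    _ = p.roots.toFinset.card := Set.ncard_coe_finset _
    _ ≤ Multiset.card p.roots := Multiset.toFinset_card_le _
    _ ≤ p.natDegree := Polynomial.card_roots' p
    _ = q := hdeg
  -- lower bound on K via the additive hom x ↦ x^q + x
  have hKcard_ge : q ≤ K.ncard := by
    set g : F →+ F :=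
      { toFun := fun x => x ^ q + x
        map_zero' := by simp [zero_pow (by omega : q ≠ 0)]
        map_add' := by
          intro x y
          show (x + y) ^ q + (x + y) = (x ^ q + x) + (y ^ q + y)
          rw [Hfrob]
          ring } with hg
    have hrange_le_ker : g.range ≤ g.ker := by
      rintro _ ⟨x, rfl⟩
      rw [AddMonoidHom.mem_ker]
      have hx2 : x ^ (q ^ 2) = x := by rw [← hcard]; exact FiniteField.pow_card x
      show (x ^ q + x) ^ q + (x ^ q + x) = 0
      rw [Hfrob, ← pow_mul, ← pow_two]
      linear_combination hx2 + (x ^ q + x) * h2c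
    have hker_eq : Nat.card g.ker = K.ncard := by
      rw [← Nat.card_coe_set_eq]
      refine Nat.card_congr (Equiv.subtypeEquivRight ?_)
      intro x
      rw [AddMonoidHom.mem_ker]
      show x ^ q + x = 0 ↔ x ∈ K
      rw [hK, Set.mem_setOf_eq]
      exact add2_eq_zero_iff
    have h1 : Nat.card F = Nat.card (F ⧸ g.ker) * Nat.card g.ker :=
      AddSubgroup.card_eq_card_quotient_mul_card_addSubgroup g.ker
    have h2 : Nat.card (F ⧸ g.ker) = Nat.card g.range :=
      Nat.card_congr (QuotientAddGroup.quotientKerEquivRange g).toEquiv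
    have h3 : Nat.card g.range ≤ Nat.card g.ker :=
      Nat.card_le_card_of_injective _ (AddSubgroup.inclusion_injective hrange_le_ker)
    have h4 : Nat.card F = Fintype.card F := Nat.card_eq_fintype_card
    have h5 : q ^ 2 ≤ Nat.card g.ker * Nat.card g.ker := by
      calc q ^ 2 = Nat.card F := by rw [h4, hcard]
      _ = Nat.card (F ⧸ g.ker) * Nat.card g.ker := h1
      _ = Nat.card g.range * Nat.card g.ker := by rw [h2]
      _ ≤ Nat.card g.ker * Nat.card g.ker := Nat.mul_le_mul_right _ h3
    rw [hker_eq] at h5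
    by_contra hlt
    push_neg at hlt
    have : K.ncard * K.ncard < q * q := by
      exact Nat.mul_lt_mul_of_lt_of_le hlt (le_of_lt hlt) (by omega)
    rw [pow_two] at h5
    omega
  have hKcard : K.ncard = q := le_antisymm hKcard_le hKcard_ge
  -- the solution set is K \ {0, 1}
  have hset : {x : F | (x + 1) ^ (q-1) + x ^ (q-1) = 0} = K \ {0, 1} := by
    ext x
    simp only [Set.mem_setOf_eq, Set.mem_diff, Set.mem_insert_iff, Set.mem_singleton_iff, hK,
      not_or]
    constructor
    · intro h
      by_cases hx0 : x = 0
      · exfalso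
        rw [hx0, zero_add, one_pow, zero_pow hqne, add_zero] at h
        exact one_ne_zero h
      by_cases hx1 : x = 1
      · exfalso
        rw [hx1, one_pow] at h
        have : ((1:F) + 1) = 0 := CharTwo.add_self_eq_zero 1
        rw [this, zero_pow hqne, zero_add] at h
        exact one_ne_zero h
      · have hE : x ^ (q-1) = (x + 1) ^ (q-1) := (add2_eq_zero_iff.mp h).symm
        have hα : x ^ (q-1) = 1 := by
          have := E' q hq Hfrob (one_ne_zero : (1:F) ≠ 0) hE
          rwa [one_pow] at this
        have : x ^ q = x := by
          rw [← pow_qsub1_mul q hq x, hα, one_mul]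
        exact ⟨this, hx0, hx1⟩
    · rintro ⟨hxK, hx0, hx1⟩
      have hxq : x ^ (q-1) = 1 := K_pow q hq hxK hx0
      have hx1K : (x + 1) ^ q = x + 1 := by rw [Hfrob, one_pow, hxK]
      have hx10 : x + 1 ≠ 0 := fun h => hx1 (add2_eq_zero_iff.mp h)
      have hx1q : (x + 1) ^ (q-1) = 1 := K_pow q hq hx1K hx10
      rw [hxq, hx1q]
      exact CharTwo.add_self_eq_zero 1
  have h01 : ({0, 1} : Set F) ⊆ K := by
    rintro x (rfl | rfl)
    · show (0:F) ^ q = 0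
      exact zero_pow (by omega : q ≠ 0)
    · show (1:F) ^ q = 1
      exact one_pow q
  have hfinal : (K \ {0, 1}).ncard = q - 2 := by
    rw [Set.ncard_diff h01 (Set.toFinite _), hKcard, Set.ncard_pair (zero_ne_one (α := F))]
  calc Nat.card {x : F // (x + 1) ^ (q-1) + x ^ (q-1) = 0}
      = ({x : F | (x + 1) ^ (q-1) + x ^ (q-1) = 0} : Set F).ncard :=
        Nat.card_coe_set_eq _
    _ = (K \ {0, 1}).ncard := by rw [hset]
    _ = q - 2 := hfinal

end Count
end DuGtBu


theorem du_gt_bu (m : ℕ) (hm : 3 ≤ m) (F : Type*) [Field F] [Fintype F] [CharP F 2]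
    (hF : Fintype.card F = 2 ^ (2 * m)) :
    sSup {k : ℕ | ∃ a b : F, a ≠ 0 ∧ b ≠ 0 ∧
      k = Nat.card {p : F × F // p.1 ^ (2 ^ m - 1) + p.2 ^ (2 ^ m - 1) = b ∧
        (p.1 + a) ^ (2 ^ m - 1) + (p.2 + a) ^ (2 ^ m - 1) = b}} <
    sSup {k : ℕ | ∃ a b : F, a ≠ 0 ∧
      k = Nat.card {x : F // (x + a) ^ (2 ^ m - 1) + x ^ (2 ^ m - 1) = b}} := by
  
  have hq8 : 8 ≤ 2 ^ m := by
    calc 8 = 2 ^ 3 := by norm_num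
    _ ≤ 2 ^ m := Nat.pow_le_pow_right (by norm_num) hm
  have hBU : sSup {k : ℕ | ∃ a b : F, a ≠ 0 ∧ b ≠ 0 ∧
      k = Nat.card {p : F × F // p.1 ^ (2 ^ m - 1) + p.2 ^ (2 ^ m - 1) = b ∧
        (p.1 + a) ^ (2 ^ m - 1) + (p.2 + a) ^ (2 ^ m - 1) = b}} ≤ 4 := by
    refine csSup_le' ?_
    rintro k ⟨a, b, ha, hb, rfl⟩
    exact DuGtBu.BU_le_four hm hF ha hb
  have hmem : (2 ^ m - 2) ∈ {k : ℕ | ∃ a b : F, a ≠ 0 ∧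
      k = Nat.card {x : F // (x + a) ^ (2 ^ m - 1) + x ^ (2 ^ m - 1) = b}} :=
    ⟨1, 0, one_ne_zero, (DuGtBu.DU_count hm hF).symm⟩
  have hBdd : BddAbove {k : ℕ | ∃ a b : F, a ≠ 0 ∧
      k = Nat.card {x : F // (x + a) ^ (2 ^ m - 1) + x ^ (2 ^ m - 1) = b}} := by
    refine ⟨Nat.card F, ?_⟩
    rintro k ⟨a, b, ha, rfl⟩
    exact Nat.card_le_card_of_injective _ Subtype.val_injective
  have hDU : 2 ^ m - 2 ≤ sSup {k : ℕ | ∃ a b : F, a ≠ 0 ∧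
      k = Nat.card {x : F // (x + a) ^ (2 ^ m - 1) + x ^ (2 ^ m - 1) = b}} :=
    le_csSup hBdd hmem
  omega
end

section
/- Let F be the finite field with 256 elements and let f : F → F be the (non-permutation) power map f(x) = x^15. Then the differential uniformity of f equals 14 and the boomerang uniformity of f equals 2. -/
namespace X15F256

lemma card_le_two_of {α : Type*} (P : α → Prop) (a b : α) (h : ∀ x, P x → x = a ∨ x = b) :
    Nat.card {x // P x} ≤ 2 := by
  have h1 : Nat.card {x // P x} = ({x | P x} : Set α).ncard := Nat.card_coe_set_eq _
  have hsub : {x | P x} ⊆ ({a, b} : Set α) := by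
    intro x hx; rcases h x hx with rfl | rfl <;> simp
  rw [h1]
  refine le_trans (Set.ncard_le_ncard hsub (Set.toFinite _)) ?_
  exact le_trans (Set.ncard_insert_le _ _) (by simp)

lemma card_eq_two_of {α : Type*} (P : α → Prop) (a b : α) (hab : a ≠ b)
    (h : ∀ x, P x ↔ (x = a ∨ x = b)) : Nat.card {x // P x} = 2 := by
  have h1 : Nat.card {x // P x} = ({x | P x} : Set α).ncard := Nat.card_coe_set_eq _
  have h2 : {x | P x} = ({a, b} : Set α) := by ext x; simp [h x]
  rw [h1, h2, Set.ncard_pair hab]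

lemma quad_roots {K : Type*} [Field K] {A B C : K} (hA : A ≠ 0) :
    ∃ r1 r2 : K, ∀ s : K, A * s ^ 2 + B * s + C = 0 → s = r1 ∨ s = r2 := by
  by_cases hex : ∃ s : K, A * s ^ 2 + B * s + C = 0
  · obtain ⟨s0, hs0⟩ := hex
    refine ⟨s0, -(B / A) - s0, fun s hs => ?_⟩
    have hfac : (s - s0) * (A * (s + s0) + B) = 0 := by linear_combination hs - hs0
    rcases mul_eq_zero.1 hfac with h | h
    · left; exact sub_eq_zero.1 h
    · right
      field_simp
      linear_combination h
  · exact ⟨0, 0, fun s hs => absurd ⟨s, hs⟩ hex⟩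

section Main
variable {F : Type*} [Field F] [Fintype F] [CharP F 2]

omit [Fintype F] in
lemma two0 : (2 : F) = 0 := by
  have h := CharP.cast_eq_zero F 2
  push_cast at h
  exact h

omit [Fintype F] in
lemma frob (x y : F) : (x + y) ^ 16 = x ^ 16 + y ^ 16 := by
  have h := add_pow_char_pow (R := F) (p := 2) (n := 4) (x := x) (y := y)
  norm_num at h
  exact h

omit [CharP F 2] in
lemma pow255 (hF : Fintype.card F = 256) (x : F) (hx : x ≠ 0) : x ^ 255 = 1 := by
  have h := FiniteField.pow_card_sub_one_eq_one x hx
  rw [hF] at h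
  norm_num at h
  exact h

omit [CharP F 2] in
lemma mu14 (hF : Fintype.card F = 256) {x : F} (h : x ^ 14 = 1) : x = 1 := by
  have hx0 : x ≠ 0 := by
    rintro rfl
    rw [zero_pow (by norm_num)] at h
    exact one_ne_zero h.symm
  have h255 := pow255 hF x hx0
  have e1 : x ^ 1275 = 1 := by
    calc x ^ 1275 = (x ^ 255) ^ 5 := by ring
    _ = 1 := by rw [h255, one_pow]
  have e2 : x ^ 1275 = x := by
    calc x ^ 1275 = (x ^ 14) ^ 91 * x := by ring
    _ = x := by rw [h, one_pow, one_mul]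
  rw [e2] at e1
  exact e1

omit [Fintype F] in
lemma mu3U {s : F} (h17 : s ^ 17 = 1) (h2 : s ^ 2 + s + 1 = 0) : False := by
  have t0 : (2 : F) = 0 := two0
  have hs2 : s ^ 2 = s + 1 := by linear_combination h2 + (-(s + 1)) * t0
  have hs3 : s ^ 3 = 1 := by linear_combination (s + 1) * h2 + (-(s ^ 2 + s + 1)) * t0
  have e : s ^ 17 = s ^ 2 := by
    calc s ^ 17 = (s ^ 3) ^ 5 * s ^ 2 := by ring
    _ = s ^ 2 := by rw [hs3, one_pow, one_mul]
  have e2 : s + 1 = 1 := by rw [← hs2, ← e, h17]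
  have hs0 : s = 0 := by linear_combination e2
  rw [hs0] at h2
  norm_num at h2

omit [Fintype F] in
/-- the quadratic satisfied by `s` when `s, t ∈ μ₁₇` and `s + t = c`. -/
lemma quad_of_mu17 {s t c : F} (hs17 : s ^ 17 = 1) (ht17 : t ^ 17 = 1) (h1 : s + t = c) :
    c ^ 16 * s ^ 2 + c ^ 17 * s + c = 0 := by
  have t0 : (2 : F) = 0 := two0
  have ht : t = s + c := by linear_combination h1 + (-s) * t0
  have ha : (s ^ 16 + c ^ 16) * t = 1 := by
    have e : t ^ 16 * t = 1 := by rw [← pow_succ]; exact ht17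
    rw [ht, frob] at e
    rw [ht]
    linear_combination e
  linear_combination s * ha + (s * (s ^ 16 + c ^ 16)) * ht + (-(s + c)) * hs17 +
    (s * c ^ 17 - s * t * c ^ 16 + s ^ 2 * c ^ 16 + s ^ 17 * c - s ^ 17 * t + s ^ 18) * t0

lemma ddt_generic (hF : Fintype.card F = 256) {c y : F} (hc : c ≠ 0) (hy0 : y ≠ 0)
    (hy1 : y ≠ 1) (h : (y + 1) ^ 15 + y ^ 15 = c) :
    c ^ 16 * (y ^ 15) ^ 2 + c ^ 17 * y ^ 15 + c = 0 ∧ c * y = 1 + y ^ 15 + c := by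
  have t0 : (2 : F) = 0 := two0
  set s := y ^ 15 with hs
  set t := (y + 1) ^ 15 with ht
  have h1 : s + t = c := by linear_combination h
  have hy16 : y ^ 16 = s * y := by rw [hs]; ring
  have hs17 : s ^ 17 = 1 := by
    rw [hs, ← pow_mul]; norm_num; exact pow255 hF y hy0
  have hy1' : y + 1 ≠ 0 := by
    intro hh; exact hy1 (by linear_combination hh + (-1) * t0)
  have ht17 : t ^ 17 = 1 := by
    rw [ht, ← pow_mul]; norm_num; exact pow255 hF (y + 1) hy1'
  have hA : t * (y + 1) = s * y + 1 := by
    have e : (y + 1) ^ 16 = s * y + 1 := by rw [frob y 1, one_pow, hy16]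
    calc t * (y + 1) = (y + 1) ^ 15 * (y + 1) := by rw [ht]
    _ = (y + 1) ^ 16 := by ring
    _ = s * y + 1 := e
  have conc : c * y = 1 + s + c := by
    linear_combination hA + (1 - y) * h1 + (-t - s + s * y) * t0
  exact ⟨quad_of_mu17 hs17 ht17 h1, conc⟩

lemma boom_generic (hF : Fintype.card F = 256) {c u v : F} (hc : c ≠ 0)
    (hu0 : u ≠ 0) (hu1 : u ≠ 1) (hv0 : v ≠ 0) (hv1 : v ≠ 1)
    (h1 : u ^ 15 + v ^ 15 = c) (h2 : (u + 1) ^ 15 + (v + 1) ^ 15 = c) :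
    c ^ 16 * (u ^ 15) ^ 2 + c ^ 17 * u ^ 15 + c = 0 ∧
      c * u = 1 + u ^ 15 + c ∧ c * v = 1 + u ^ 15 := by
  have t0 : (2 : F) = 0 := two0
  set s := u ^ 15 with hs
  set t := v ^ 15 with ht
  have hs17 : s ^ 17 = 1 := by
    rw [hs, ← pow_mul]; norm_num; exact pow255 hF u hu0
  have ht17 : t ^ 17 = 1 := by
    rw [ht, ← pow_mul]; norm_num; exact pow255 hF v hv0
  have hu16 : u ^ 16 = s * u := by rw [hs]; ring
  have hv16 : v ^ 16 = t * v := by rw [ht]; ring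
  have hA : (u + 1) ^ 15 * (u + 1) = s * u + 1 := by
    have e : (u + 1) ^ 16 = s * u + 1 := by rw [frob u 1, one_pow, hu16]
    calc (u + 1) ^ 15 * (u + 1) = (u + 1) ^ 16 := by ring
    _ = s * u + 1 := e
  have hB : (v + 1) ^ 15 * (v + 1) = t * v + 1 := by
    have e : (v + 1) ^ 16 = t * v + 1 := by rw [frob v 1, one_pow, hv16]
    calc (v + 1) ^ 15 * (v + 1) = (v + 1) ^ 16 := by ring
    _ = t * v + 1 := e
  have star : u * (1 + t) + v * (1 + s) = c := by
    linear_combination (u + 1) * (v + 1) * h2 + (-(v + 1)) * hA + (-(u + 1)) * hB +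
      (-(v + u + u * v)) * h1 + (-1 + v * s + u * t) * t0
  have star16 : s * u * (1 + t ^ 16) + t * v * (1 + s ^ 16) = c ^ 16 := by
    have e : (u * (1 + t) + v * (1 + s)) ^ 16 = c ^ 16 := by rw [star]
    simp only [frob, mul_pow, one_pow, hu16, hv16] at e
    linear_combination e
  have hc16 : c ^ 16 = s ^ 16 + t ^ 16 := by rw [← h1, frob]
  have hstc : s * t * c ^ 16 = c := by
    linear_combination (s * t) * hc16 + t * hs17 + s * ht17 + h1
  have starstar : s ^ 2 * u * (1 + t) + t ^ 2 * v * (1 + s) = c := by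
    linear_combination (s * t) * star16 + hstc + (-(s ^ 2 * u)) * ht17 + (-(t ^ 2 * v)) * hs17
  have hs1' : s ≠ 1 := by
    intro hs1
    have hfac : (1 + t) * (u - 1) = 0 := by
      linear_combination star + (-1) * h1 + (1 - v) * hs1 + (-v) * t0
    rcases mul_eq_zero.1 hfac with hh | hh
    · apply hc; rw [← h1, hs1]; linear_combination hh
    · exact hu1 (by linear_combination hh)
  have ht1' : t ≠ 1 := by
    intro ht1
    have hfac : (1 + s) * (v - 1) = 0 := by
      linear_combination star + (-1) * h1 + (1 - u) * ht1 + (-u) * t0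
    rcases mul_eq_zero.1 hfac with hh | hh
    · apply hc; rw [← h1, ht1]; linear_combination hh
    · exact hv1 (by linear_combination hh)
  have h1s : (1 : F) + s ≠ 0 := by
    intro hh; exact hs1' (by linear_combination (-1) * hh + s * t0)
  have h1t : (1 : F) + t ≠ 0 := by
    intro hh; exact ht1' (by linear_combination (-1) * hh + t * t0)
  have key_v : (1 + s) * (c * v - (1 + s)) * c = 0 := by
    linear_combination (s ^ 2) * star + starstar +
      (-(-2 * s + v * c + v * t + v * s + v * s * c + v * s * t + v * s ^ 2)) * h1 +
      (-(s * t) - s ^ 2 + v * s * t + v * s ^ 2 * t - u * s ^ 2 - u * s ^ 2 * t) * t0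
  have key_u : (1 + t) * (c * u - (1 + t)) * c = 0 := by
    linear_combination (t ^ 2) * star + starstar +
      (-(-2 * t + u * c + u * t + u * t * c + u * t ^ 2 + u * s + u * s * t)) * h1 +
      (-(t ^ 2) - s * t - v * t ^ 2 - v * s * t ^ 2 + u * s * t + u * s * t ^ 2) * t0
  have conc_v : c * v = 1 + s := by
    rcases mul_eq_zero.1 key_v with hh | hh
    · rcases mul_eq_zero.1 hh with hh' | hh'
      · exact absurd hh' h1s
      · exact sub_eq_zero.1 hh'
    · exact absurd hh hc
  have conc_u' : c * u = 1 + t := by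
    rcases mul_eq_zero.1 key_u with hh | hh
    · rcases mul_eq_zero.1 hh with hh' | hh'
      · exact absurd hh' h1t
      · exact sub_eq_zero.1 hh'
    · exact absurd hh hc
  have conc_u : c * u = 1 + s + c := by
    linear_combination conc_u' + h1 + (-s) * t0
  exact ⟨quad_of_mu17 hs17 ht17 h1, conc_u, conc_v⟩

lemma boom_u0 (hF : Fintype.card F = 256) {c v : F} (hc : c ≠ 0)
    (h1 : (0 : F) ^ 15 + v ^ 15 = c) (h2 : ((0 : F) + 1) ^ 15 + (v + 1) ^ 15 = c) :
    c = 1 ∧ v = 1 := by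
  have t0 : (2 : F) = 0 := two0
  have hv15 : v ^ 15 = c := by
    rw [zero_pow (by norm_num)] at h1; linear_combination h1
  rcases eq_or_ne v 1 with rfl | hv1
  · refine ⟨?_, rfl⟩; rw [← hv15]; norm_num
  · exfalso
    have hv0 : v ≠ 0 := by
      rintro rfl; apply hc; rw [← hv15]; norm_num
    have hB' : (v + 1) ^ 15 = c + 1 := by
      norm_num at h2; linear_combination h2 + (-1) * t0
    have hv16 : v ^ 16 = c * v := by
      calc v ^ 16 = v ^ 15 * v := by ring
      _ = c * v := by rw [hv15]
    have hB : (v + 1) ^ 15 * (v + 1) = c * v + 1 := by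
      have e : (v + 1) ^ 16 = c * v + 1 := by rw [frob v 1, one_pow, hv16]
      calc (v + 1) ^ 15 * (v + 1) = (v + 1) ^ 16 := by ring
      _ = c * v + 1 := e
    have hvc : v = c := by linear_combination (-1) * hB + (v + 1) * hB' + v * t0
    have hc15 : c ^ 15 = c := by rw [hvc] at hv15; exact hv15
    have hc14 : c ^ 14 = 1 := by
      refine mul_right_cancel₀ hc ?_
      rw [one_mul]
      calc c ^ 14 * c = c ^ 15 := by ring
      _ = c := hc15
    exact hv1 (hvc.trans (mu14 hF hc14))

lemma boom_u1 (hF : Fintype.card F = 256) {c v : F} (hc : c ≠ 0)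
    (h1 : (1 : F) ^ 15 + v ^ 15 = c) (h2 : ((1 : F) + 1) ^ 15 + (v + 1) ^ 15 = c) :
    c = 1 ∧ v = 0 := by
  have t0 : (2 : F) = 0 := two0
  have h11 : (1 : F) + 1 = 0 := by linear_combination t0
  have hv15 : v ^ 15 = c + 1 := by
    rw [one_pow] at h1; linear_combination h1 + (-1) * t0
  have hB0 : (v + 1) ^ 15 = c := by
    rw [h11, zero_pow (by norm_num), zero_add] at h2; exact h2
  rcases eq_or_ne v 0 with rfl | hv0
  · refine ⟨?_, rfl⟩
    rw [zero_pow (by norm_num)] at hv15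
    linear_combination (-1) * hv15 + (-1) * t0
  · exfalso
    have hv16 : v ^ 16 = (c + 1) * v := by
      calc v ^ 16 = v ^ 15 * v := by ring
      _ = (c + 1) * v := by rw [hv15]
    have hB : (v + 1) ^ 15 * (v + 1) = (c + 1) * v + 1 := by
      have e : (v + 1) ^ 16 = (c + 1) * v + 1 := by rw [frob v 1, one_pow, hv16]
      calc (v + 1) ^ 15 * (v + 1) = (v + 1) ^ 16 := by ring
      _ = (c + 1) * v + 1 := e
    have hvc : v = c + 1 := by linear_combination (-1) * hB + (v + 1) * hB0 + (-1) * t0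
    have hne : c + 1 ≠ 0 := by rw [hvc] at hv0; exact hv0
    have h15 : (c + 1) ^ 15 = c + 1 := by rw [hvc] at hv15; exact hv15
    have h14 : (c + 1) ^ 14 = 1 := by
      refine mul_right_cancel₀ hne ?_
      rw [one_mul]
      calc (c + 1) ^ 14 * (c + 1) = (c + 1) ^ 15 := by ring
      _ = c + 1 := h15
    have hc1 : c + 1 = 1 := mu14 hF h14
    exact hc (by linear_combination hc1)

omit [CharP F 2] in
lemma card_fixed16 (hF : Fintype.card F = 256) : ({y : F | y ^ 16 = y}).ncard = 16 := by
  have hcardu : Nat.card Fˣ = 255 := by rw [Nat.card_units, Nat.card_eq_fintype_card, hF]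
  obtain ⟨g, hg⟩ := IsCyclic.exists_generator (α := Fˣ)
  have hog : orderOf g = 255 := by rw [orderOf_eq_card_of_forall_mem_zpowers hg, hcardu]
  have h15 : orderOf (g ^ 17) = 15 := by rw [orderOf_pow, hog]; norm_num
  set H : Subgroup Fˣ := (powMonoidHom 15 : Fˣ →* Fˣ).ker with hH
  have hmem : ∀ x : Fˣ, x ∈ H ↔ x ^ 15 = 1 := fun x => MonoidHom.mem_ker
  have hcardH : Nat.card H = 15 := by
    have hdvd1 : Nat.card H ∣ 15 := by
      obtain ⟨x0, hx0⟩ := IsCyclic.exists_generator (α := H)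
      have hox : orderOf x0 = Nat.card H := orderOf_eq_card_of_forall_mem_zpowers hx0
      rw [← hox]
      refine orderOf_dvd_of_pow_eq_one ?_
      have h1 : ((x0 : Fˣ)) ^ 15 = 1 := (hmem _).1 x0.2
      exact Subtype.ext (by rw [SubmonoidClass.coe_pow]; exact h1)
    have hdvd2 : 15 ∣ Nat.card H := by
      have hmem17 : g ^ 17 ∈ H := by
        rw [hmem, ← pow_mul]
        exact orderOf_dvd_iff_pow_eq_one.1 (by rw [hog])
      have h1 : orderOf (⟨g ^ 17, hmem17⟩ : H) = 15 := by
        rw [← Subgroup.orderOf_coe]; exact h15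
      rw [← h1]
      exact orderOf_dvd_natCard _
    exact Nat.dvd_antisymm hdvd1 hdvd2
  have hset : {y : F | y ^ 16 = y} = insert (0 : F) (Units.val '' (H : Set Fˣ)) := by
    ext y
    simp only [Set.mem_setOf_eq, Set.mem_insert_iff, Set.mem_image, SetLike.mem_coe, hmem]
    constructor
    · intro hy
      rcases eq_or_ne y 0 with h0 | h0
      · exact Or.inl h0
      · refine Or.inr ⟨Units.mk0 y h0, ?_, rfl⟩
        have h3 : y ^ 15 * y = 1 * y := by rw [one_mul, ← pow_succ]; exact hy
        have h2 : y ^ 15 = 1 := mul_right_cancel₀ h0 h3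
        exact Units.ext (by rw [Units.val_pow_eq_pow_val, Units.val_mk0, Units.val_one]; exact h2)
    · rintro (rfl | ⟨x, hx, rfl⟩)
      · simp
      · have h2 : x ^ 16 = x := by rw [pow_succ, hx, one_mul]
        calc (x : F) ^ 16 = ((x ^ 16 : Fˣ) : F) := by rw [Units.val_pow_eq_pow_val]
        _ = x := by rw [h2]
  rw [hset, Set.ncard_insert_of_notMem (by rintro ⟨x, -, hx⟩; exact x.ne_zero hx) (Set.toFinite _),
    Set.ncard_image_of_injective _ (fun _ _ h => Units.ext h)]
  have h4 : ((H : Set Fˣ)).ncard = Nat.card H := (Nat.card_coe_set_eq _).symm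
  rw [h4, hcardH]

lemma phi0 (hF : Fintype.card F = 256) :
    Nat.card {y : F // (y + 1) ^ 15 + y ^ 15 = 0} = 14 := by
  have t0 : (2 : F) = 0 := two0
  have hset : {y : F | (y + 1) ^ 15 + y ^ 15 = 0} = {y : F | y ^ 16 = y} \ {0, 1} := by
    ext y
    simp only [Set.mem_setOf_eq, Set.mem_diff, Set.mem_insert_iff, Set.mem_singleton_iff]
    constructor
    · intro hy
      have hy0 : y ≠ 0 := by rintro rfl; norm_num at hy
      have hy1 : y ≠ 1 := by
        rintro rfl
        rw [show (1 : F) + 1 = 0 by linear_combination t0] at hy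
        norm_num at hy
      have heq : (y + 1) ^ 15 = y ^ 15 := by linear_combination hy + (-(y ^ 15)) * t0
      have hA : y ^ 15 * (y + 1) = y ^ 16 + 1 := by
        rw [← heq]
        calc (y + 1) ^ 15 * (y + 1) = (y + 1) ^ 16 := by ring
        _ = y ^ 16 + 1 := by rw [frob y 1, one_pow]
      have h15 : y ^ 15 = 1 := by linear_combination hA
      refine ⟨?_, fun h => h.elim hy0 hy1⟩
      calc y ^ 16 = y ^ 15 * y := by ring
      _ = y := by rw [h15, one_mul]
    · rintro ⟨h16, hno⟩
      have hy0 : y ≠ 0 := fun h => hno (Or.inl h)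
      have hy1 : y ≠ 1 := fun h => hno (Or.inr h)
      have h15 : y ^ 15 = 1 := by
        refine mul_right_cancel₀ hy0 ?_
        rw [one_mul]
        calc y ^ 15 * y = y ^ 16 := by ring
        _ = y := h16
      have hy1' : y + 1 ≠ 0 := fun hh => hy1 (by linear_combination hh + (-1) * t0)
      have h15' : (y + 1) ^ 15 = 1 := by
        refine mul_right_cancel₀ hy1' ?_
        rw [one_mul]
        calc (y + 1) ^ 15 * (y + 1) = (y + 1) ^ 16 := by ring
        _ = y ^ 16 + 1 := by rw [frob y 1, one_pow]
        _ = y + 1 := by rw [h16]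
      rw [h15, h15']
      linear_combination t0
  have h1 : Nat.card {y : F // (y + 1) ^ 15 + y ^ 15 = 0} =
      ({y : F | (y + 1) ^ 15 + y ^ 15 = 0}).ncard := Nat.card_coe_set_eq _
  have hsub : ({0, 1} : Set F) ⊆ {y : F | y ^ 16 = y} := by
    rintro z (rfl | rfl) <;> simp
  rw [h1, hset, Set.ncard_diff hsub (Set.toFinite _), card_fixed16 hF,
    Set.ncard_pair (zero_ne_one : (0 : F) ≠ 1)]

lemma phi1 (hF : Fintype.card F = 256) :
    Nat.card {y : F // (y + 1) ^ 15 + y ^ 15 = 1} = 2 := by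
  have t0 : (2 : F) = 0 := two0
  refine card_eq_two_of _ 0 1 zero_ne_one fun y => ?_
  constructor
  · intro hy
    rcases eq_or_ne y 0 with rfl | hy0
    · exact Or.inl rfl
    rcases eq_or_ne y 1 with rfl | hy1
    · exact Or.inr rfl
    exfalso
    obtain ⟨hq, -⟩ := ddt_generic hF one_ne_zero hy0 hy1 hy
    have hs17 : (y ^ 15) ^ 17 = 1 := by
      rw [← pow_mul]; norm_num; exact pow255 hF y hy0
    exact mu3U hs17 (by linear_combination hq)
  · intro hy
    rcases hy with rfl | rfl
    · norm_num
    · rw [show (1 : F) + 1 = 0 by linear_combination t0]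
      norm_num

lemma phi_le (hF : Fintype.card F = 256) {c : F} (hc0 : c ≠ 0) (hc1 : c ≠ 1) :
    Nat.card {y : F // (y + 1) ^ 15 + y ^ 15 = c} ≤ 2 := by
  obtain ⟨r1, r2, hr⟩ := quad_roots (K := F) (B := c ^ 17) (C := c) (pow_ne_zero 16 hc0)
  refine card_le_two_of _ ((1 + r1 + c) / c) ((1 + r2 + c) / c) fun y hy => ?_
  have hy0 : y ≠ 0 := by
    rintro rfl; apply hc1; norm_num at hy; exact hy.symm
  have hy1 : y ≠ 1 := by
    rintro rfl
    apply hc1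
    rw [show (1 : F) + 1 = 0 by linear_combination (two0 : (2:F) = 0)] at hy
    norm_num at hy
    exact hy.symm
  obtain ⟨hq, hcy⟩ := ddt_generic hF hc0 hy0 hy1 hy
  rcases hr _ hq with h | h
  · left; rw [eq_div_iff hc0, ← h]; linear_combination hcy
  · right; rw [eq_div_iff hc0, ← h]; linear_combination hcy

lemma boom_c1 (hF : Fintype.card F = 256) :
    Nat.card {p : F × F // p.1 ^ 15 + p.2 ^ 15 = 1 ∧
      (p.1 + 1) ^ 15 + (p.2 + 1) ^ 15 = 1} = 2 := by
  have t0 : (2 : F) = 0 := two0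
  have h11 : (1 : F) + 1 = 0 := by linear_combination t0
  refine card_eq_two_of _ ((0 : F), (1 : F)) ((1 : F), (0 : F))
    (by simp [Prod.ext_iff]) fun p => ⟨fun hp => ?_, fun hp => ?_⟩
  · obtain ⟨h1, h2⟩ := hp
    obtain ⟨u, v⟩ := p
    simp only at h1 h2 ⊢
    rcases eq_or_ne u 0 with rfl | hu0
    · left
      obtain ⟨-, hv⟩ := boom_u0 hF one_ne_zero h1 h2
      rw [hv]
    rcases eq_or_ne u 1 with rfl | hu1
    · right
      obtain ⟨-, hv⟩ := boom_u1 hF one_ne_zero h1 h2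
      rw [hv]
    have h1' : v ^ 15 + u ^ 15 = 1 := by linear_combination h1
    have h2' : (v + 1) ^ 15 + (u + 1) ^ 15 = 1 := by linear_combination h2
    rcases eq_or_ne v 0 with rfl | hv0
    · exact absurd (boom_u0 hF one_ne_zero h1' h2').2 hu1
    rcases eq_or_ne v 1 with rfl | hv1
    · exact absurd (boom_u1 hF one_ne_zero h1' h2').2 hu0
    exfalso
    obtain ⟨hq, -, -⟩ := boom_generic hF one_ne_zero hu0 hu1 hv0 hv1 h1 h2
    have hs17 : (u ^ 15) ^ 17 = 1 := by
      rw [← pow_mul]; norm_num; exact pow255 hF u hu0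
    exact mu3U hs17 (by linear_combination hq)
  · rcases hp with rfl | rfl
    · constructor
      · norm_num
      · rw [h11]; norm_num
    · constructor
      · norm_num
      · rw [h11]; norm_num

lemma boom_le (hF : Fintype.card F = 256) {c : F} (hc0 : c ≠ 0) :
    Nat.card {p : F × F // p.1 ^ 15 + p.2 ^ 15 = c ∧
      (p.1 + 1) ^ 15 + (p.2 + 1) ^ 15 = c} ≤ 2 := by
  by_cases hc1 : c = 1
  · subst hc1; exact le_of_eq (boom_c1 hF)
  obtain ⟨r1, r2, hr⟩ := quad_roots (K := F) (B := c ^ 17) (C := c) (pow_ne_zero 16 hc0)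
  refine card_le_two_of _ ((1 + r1 + c) / c, (1 + r1) / c) ((1 + r2 + c) / c, (1 + r2) / c)
    fun p hp => ?_
  obtain ⟨h1, h2⟩ := hp
  obtain ⟨u, v⟩ := p
  simp only at h1 h2 ⊢
  have hu0 : u ≠ 0 := by rintro rfl; exact hc1 (boom_u0 hF hc0 h1 h2).1
  have hu1 : u ≠ 1 := by rintro rfl; exact hc1 (boom_u1 hF hc0 h1 h2).1
  have h1' : v ^ 15 + u ^ 15 = c := by linear_combination h1
  have h2' : (v + 1) ^ 15 + (u + 1) ^ 15 = c := by linear_combination h2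
  have hv0 : v ≠ 0 := by rintro rfl; exact hc1 (boom_u0 hF hc0 h1' h2').1
  have hv1 : v ≠ 1 := by rintro rfl; exact hc1 (boom_u1 hF hc0 h1' h2').1
  obtain ⟨hq, hcu, hcv⟩ := boom_generic hF hc0 hu0 hu1 hv0 hv1 h1 h2
  rcases hr _ hq with h | h
  · left
    have e1 : u = (1 + r1 + c) / c := by rw [eq_div_iff hc0, ← h]; linear_combination hcu
    have e2 : v = (1 + r1) / c := by rw [eq_div_iff hc0, ← h]; linear_combination hcv
    rw [e1, e2]
  · right
    have e1 : u = (1 + r2 + c) / c := by rw [eq_div_iff hc0, ← h]; linear_combination hcu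
    have e2 : v = (1 + r2) / c := by rw [eq_div_iff hc0, ← h]; linear_combination hcv
    rw [e1, e2]

omit [CharP F 2] in
lemma ddt_norm {a b : F} (ha : a ≠ 0) :
    Nat.card {x : F // (x + a) ^ 15 + x ^ 15 = b} =
      Nat.card {y : F // (y + 1) ^ 15 + y ^ 15 = b / a ^ 15} := by
  have ha15 : a ^ 15 ≠ 0 := pow_ne_zero _ ha
  refine Nat.card_congr (Equiv.subtypeEquiv (Equiv.mulLeft₀ a ha) fun y => ?_).symm
  show ((y + 1) ^ 15 + y ^ 15 = b / a ^ 15) ↔ ((a * y + a) ^ 15 + (a * y) ^ 15 = b)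
  rw [eq_div_iff ha15]
  constructor <;> intro h <;> linear_combination h

omit [CharP F 2] in
lemma boom_norm {a b : F} (ha : a ≠ 0) :
    Nat.card {p : F × F // p.1 ^ 15 + p.2 ^ 15 = b ∧
        (p.1 + a) ^ 15 + (p.2 + a) ^ 15 = b} =
      Nat.card {p : F × F // p.1 ^ 15 + p.2 ^ 15 = b / a ^ 15 ∧
        (p.1 + 1) ^ 15 + (p.2 + 1) ^ 15 = b / a ^ 15} := by
  have ha15 : a ^ 15 ≠ 0 := pow_ne_zero _ ha
  refine Nat.card_congr (Equiv.subtypeEquiv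
    ((Equiv.mulLeft₀ a ha).prodCongr (Equiv.mulLeft₀ a ha)) fun p => ?_).symm
  show (p.1 ^ 15 + p.2 ^ 15 = b / a ^ 15 ∧ (p.1 + 1) ^ 15 + (p.2 + 1) ^ 15 = b / a ^ 15) ↔
    ((a * p.1) ^ 15 + (a * p.2) ^ 15 = b ∧ (a * p.1 + a) ^ 15 + (a * p.2 + a) ^ 15 = b)
  rw [eq_div_iff ha15, eq_div_iff ha15]
  exact and_congr ⟨fun h => by linear_combination h, fun h => by linear_combination h⟩
    ⟨fun h => by linear_combination h, fun h => by linear_combination h⟩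

end Main
end X15F256

theorem x15_on_F256 (F : Type*) [Field F] [Fintype F] [CharP F 2]
    (hF : Fintype.card F = 256) :
    sSup {k : ℕ | ∃ a b : F, a ≠ 0 ∧
      k = Nat.card {x : F // (x + a) ^ 15 + x ^ 15 = b}} = 14 ∧
    sSup {k : ℕ | ∃ a b : F, a ≠ 0 ∧ b ≠ 0 ∧
      k = Nat.card {p : F × F // p.1 ^ 15 + p.2 ^ 15 = b ∧
        (p.1 + a) ^ 15 + (p.2 + a) ^ 15 = b}} = 2 := by
  constructor
  · have hbound : ∀ k ∈ {k : ℕ | ∃ a b : F, a ≠ 0 ∧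
        k = Nat.card {x : F // (x + a) ^ 15 + x ^ 15 = b}}, k ≤ 14 := by
      rintro k ⟨a, b, ha, rfl⟩
      rw [X15F256.ddt_norm ha]
      rcases eq_or_ne (b / a ^ 15) 0 with h | h0
      · rw [h, X15F256.phi0 hF]
      rcases eq_or_ne (b / a ^ 15) 1 with h | h1
      · rw [h, X15F256.phi1 hF]; norm_num
      · exact le_trans (X15F256.phi_le hF h0 h1) (by norm_num)
    have hmem : (14 : ℕ) ∈ {k : ℕ | ∃ a b : F, a ≠ 0 ∧
        k = Nat.card {x : F // (x + a) ^ 15 + x ^ 15 = b}} :=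
      ⟨1, 0, one_ne_zero, (X15F256.phi0 hF).symm⟩
    exact le_antisymm (csSup_le ⟨14, hmem⟩ hbound) (le_csSup ⟨14, hbound⟩ hmem)
  · have hbound : ∀ k ∈ {k : ℕ | ∃ a b : F, a ≠ 0 ∧ b ≠ 0 ∧
        k = Nat.card {p : F × F // p.1 ^ 15 + p.2 ^ 15 = b ∧
          (p.1 + a) ^ 15 + (p.2 + a) ^ 15 = b}}, k ≤ 2 := by
      rintro k ⟨a, b, ha, hb, rfl⟩
      rw [X15F256.boom_norm ha]
      exact X15F256.boom_le hF (div_ne_zero hb (pow_ne_zero _ ha))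
    have hmem : (2 : ℕ) ∈ {k : ℕ | ∃ a b : F, a ≠ 0 ∧ b ≠ 0 ∧
        k = Nat.card {p : F × F // p.1 ^ 15 + p.2 ^ 15 = b ∧
          (p.1 + a) ^ 15 + (p.2 + a) ^ 15 = b}} :=
      ⟨1, 1, one_ne_zero, one_ne_zero, (X15F256.boom_c1 hF).symm⟩
    exact le_antisymm (csSup_le ⟨2, hmem⟩ hbound) (le_csSup ⟨2, hbound⟩ hmem)
end
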